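/- arXiv:2605.10677 — 9 statements merged into one kernel-verified Lean document; each statement's English description precedes it below -/
import Mathlib

section
/- For any prime p and integer j with 0 ≤ j ≤ p−1, the congruential Euler numbers E_{pn}^{(p,j)} are p-adic integers for every n ≥ 0 (i.e., rational numbers whose denominators are not divisible by p). -/
open scoped BigOperators

/-- If the `p`-adic norm of a rational is at most one, then `p` does not
divide its denominator. -/
lemma aux_norm_le_one_not_dvd_den (p : ℕ) [Fact p.Prime] (q : ℚ)
    (h : ‖(q : ℚ_[p])‖ ≤ 1) : ¬ p ∣ q.den := by
  intro hdvd
  rcases eq_or_ne q 0 with rfl | hq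
  · simp at hdvd
    exact (Fact.out : p.Prime).one_lt.ne' hdvd
  have hcast : (q : ℚ_[p]) ≠ 0 := by exact_mod_cast hq
  rw [Padic.norm_le_one_iff_val_nonneg, Padic.valuation_ratCast] at h
  have hval : padicValRat p q = padicValInt p q.num - padicValNat p q.den :=
    rfl
  have hnum : padicValInt p q.num = 0 := by
    apply padicValInt.eq_zero_of_not_dvd
    intro hd
    have hcop := q.reduced
    have hd' : (p : ℤ).natAbs ∣ q.num.natAbs := Int.natAbs_dvd_natAbs.mpr hd
    simp only [Int.natAbs_natCast] at hd'
    have : p ∣ Nat.gcd q.num.natAbs q.den := Nat.dvd_gcd hd' hdvd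
    rw [Nat.Coprime] at hcop
    rw [hcop] at this
    exact (Fact.out : p.Prime).one_lt.ne' (Nat.eq_one_of_dvd_one this)
  have hden : 1 ≤ padicValNat p q.den :=
    one_le_padicValNat_of_dvd q.pos.ne' hdvd
  rw [hval, hnum] at h
  omega

/-- `p` does not divide `(p*n + j).choose j` when `j < p`, by Lucas. -/
lemma aux_not_dvd_choose (p : ℕ) [Fact p.Prime] (n j : ℕ) (hj : j < p) :
    ¬ p ∣ (p * n + j).choose j := by
  have hL := Choose.choose_modEq_choose_mod_mul_choose_div_nat
    (p := p) (n := p * n + j) (k := j)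
  have h1 : (p * n + j) % p = j := by
    rw [Nat.mul_add_mod]
    exact Nat.mod_eq_of_lt hj
  have h2 : (p * n + j) / p = n := by
    rw [Nat.mul_add_div (Fact.out : p.Prime).pos, Nat.div_eq_of_lt hj]; omega
  rw [h1, h2, Nat.mod_eq_of_lt hj, Nat.div_eq_of_lt hj] at hL
  simp only [Nat.choose_self, Nat.choose_zero_right, one_mul] at hL
  intro hdvd
  have hz : (p * n + j).choose j ≡ 0 [MOD p] := (Nat.modEq_zero_iff_dvd).mpr hdvd
  have : (1 : ℕ) ≡ 0 [MOD p] := hL.symm.trans hz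
  have : p ∣ 1 := (Nat.modEq_zero_iff_dvd).mp this
  exact (Fact.out : p.Prime).one_lt.ne' (Nat.eq_one_of_dvd_one this)

theorem stmt_4 (p : ℕ) (hp : p.Prime) (j : ℕ) (hj : j ≤ p - 1) (E : ℕ → ℚ)
    (hE0 : E 0 = j.factorial)
    (hErec : ∀ n : ℕ, 0 < n →
      ((p * n + j).choose j : ℚ) * E (p * n) =
        -∑ m ∈ Finset.range n, ((p * n + j).choose (p * m) : ℚ) * E (p * m)) :
    ∀ n : ℕ, ¬ (p ∣ (E (p * n)).den) := by
  haveI : Fact p.Prime := ⟨hp⟩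
  have hjp : j < p := by have := hp.pos; omega
  have key : ∀ n : ℕ, ‖((E (p * n) : ℚ) : ℚ_[p])‖ ≤ 1 := by
    intro n
    induction n using Nat.strong_induction_on with
    | _ n ih =>
      rcases Nat.eq_zero_or_pos n with rfl | hn
      · simp only [Nat.mul_zero, hE0]
        exact_mod_cast Padic.norm_int_le_one (j.factorial : ℤ)
      · have hc : ¬ p ∣ (p * n + j).choose j := aux_not_dvd_choose p n j hjp
        have hcpos : (0:ℚ) < ((p * n + j).choose j : ℚ) := by
          exact_mod_cast Nat.choose_pos (by omega : j ≤ p * n + j)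
        have hrec := hErec n hn
        have hE : E (p * n) =
            (-∑ m ∈ Finset.range n, ((p * n + j).choose (p * m) : ℚ) * E (p * m)) /
              ((p * n + j).choose j : ℚ) := by
          field_simp [ne_of_gt hcpos] at hrec ⊢
          linarith [hrec]
        have hnormc : ‖(((p * n + j).choose j : ℚ) : ℚ_[p])‖ = 1 := by
          have hle : ‖((((p * n + j).choose j : ℤ)) : ℚ_[p])‖ ≤ 1 :=
            Padic.norm_int_le_one _
          have hlt : ¬ ‖((((p * n + j).choose j : ℤ)) : ℚ_[p])‖ < 1 := by
            rw [Padic.norm_intCast_lt_one_iff]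
            exact_mod_cast hc
          push_cast at hle hlt ⊢
          linarith [lt_or_eq_of_le hle]
        have hsum : ‖((∑ m ∈ Finset.range n,
            ((p * n + j).choose (p * m) : ℚ) * E (p * m) : ℚ) : ℚ_[p])‖ ≤ 1 := by
          push_cast
          apply IsUltrametricDist.norm_sum_le_of_forall_le_of_nonneg zero_le_one
          intro m hm
          rw [norm_mul]
          have h1 : ‖(((p * n + j).choose (p * m) : ℚ) : ℚ_[p])‖ ≤ 1 := by
            exact_mod_cast Padic.norm_int_le_one (((p * n + j).choose (p * m) : ℤ))
          have h2 := ih m (Finset.mem_range.mp hm)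
          calc ‖(((p * n + j).choose (p * m) : ℚ) : ℚ_[p])‖ * ‖((E (p * m) : ℚ) : ℚ_[p])‖
              ≤ 1 * 1 := by
                exact mul_le_mul h1 h2 (norm_nonneg _) zero_le_one
            _ = 1 := one_mul 1
        rw [hE]
        push_cast
        rw [norm_div, norm_neg]
        rw [show ((((p * n + j).choose j : ℕ) : ℚ_[p])) =
          (((((p * n + j).choose j : ℕ) : ℚ)) : ℚ_[p]) by push_cast; ring] at *
        rw [hnormc, div_one]
        convert hsum using 2
        · rfl
        push_cast
        ring
  intro n
  exact aux_norm_le_one_not_dvd_den p (E (p * n)) (key n)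
end

section
/- For any odd prime p, positive integer r, integer j with 0 ≤ j ≤ p−1, and nonnegative integer n, one has E_{pn}^{(p,j)} + E_{pn + p^r}^{(p,j)} ≡ 0 mod p^{r+δ(j)}, where δ(0) = 1 and δ(j) = 0 for 0 < j < p. -/
open scoped BigOperators
open Finset

namespace Stmt5

def G (p c : ℕ) (x : ℚ) : Prop := padicNorm p x ≤ (p : ℚ) ^ (-(c : ℤ))

lemma ppow_pos {p : ℕ} (hp : p.Prime) (z : ℤ) : (0:ℚ) < (p:ℚ) ^ z :=
  zpow_pos (by exact_mod_cast hp.pos) z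

lemma G_zero {p : ℕ} (hp : p.Prime) (c : ℕ) : G p c 0 := by
  unfold G; rw [padicNorm.zero]; exact le_of_lt (ppow_pos hp _)

lemma G_mono {p : ℕ} (hp : p.Prime) {a b : ℕ} {x : ℚ} (h : b ≤ a) (hx : G p a x) : G p b x := by
  unfold G at *
  refine hx.trans ?_
  apply zpow_le_zpow_right₀ (by exact_mod_cast hp.one_lt.le)
  omega

lemma G_add {p : ℕ} (hp : p.Prime) {c : ℕ} {x y : ℚ} (hx : G p c x) (hy : G p c y) :
    G p c (x + y) := by
  haveI := Fact.mk hp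
  exact le_trans padicNorm.nonarchimedean (max_le hx hy)

lemma G_neg {p : ℕ} {c : ℕ} {x : ℚ} (hx : G p c x) : G p c (-x) := by
  unfold G at *; rwa [padicNorm.neg]

lemma G_sub {p : ℕ} (hp : p.Prime) {c : ℕ} {x y : ℚ} (hx : G p c x) (hy : G p c y) :
    G p c (x - y) := by
  rw [sub_eq_add_neg]; exact G_add hp hx (G_neg hy)

lemma G_sum {p : ℕ} (hp : p.Prime) {c : ℕ} {α : Type*} {s : Finset α} {f : α → ℚ}
    (h : ∀ i ∈ s, G p c (f i)) : G p c (∑ i ∈ s, f i) := by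
  haveI := Fact.mk hp
  exact padicNorm.sum_le' h (le_of_lt (ppow_pos hp _))

lemma G_mul {p : ℕ} (hp : p.Prime) {a b : ℕ} {x y : ℚ} (hx : G p a x) (hy : G p b y) :
    G p (a + b) (x * y) := by
  haveI := Fact.mk hp
  unfold G at *
  rw [padicNorm.mul]
  have := mul_le_mul hx hy (padicNorm.nonneg _) (le_of_lt (ppow_pos hp _))
  refine this.trans (le_of_eq ?_)
  rw [← zpow_add₀ (by exact_mod_cast hp.ne_zero : (p:ℚ) ≠ 0)]
  congr 1
  push_cast
  ring

lemma G_int {p : ℕ} (hp : p.Prime) {c : ℕ} {z : ℤ} (h : (p:ℤ)^c ∣ z) : G p c ((z : ℚ)) := by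
  haveI := Fact.mk hp
  unfold G
  exact padicNorm.dvd_iff_norm_le.mp (by exact_mod_cast h)

lemma G_nat {p : ℕ} (hp : p.Prime) {c : ℕ} {n : ℕ} (h : p^c ∣ n) : G p c ((n : ℚ)) := by
  have := G_int hp (c := c) (z := (n:ℤ)) (by exact_mod_cast h)
  exact_mod_cast this

lemma G_nat0 {p : ℕ} (hp : p.Prime) (n : ℕ) : G p 0 ((n : ℚ)) :=
  G_nat hp (by simp)

lemma G_unit_cancel {p : ℕ} (hp : p.Prime) {m : ℕ} (hm : ¬ p ∣ m) {c : ℕ} {x : ℚ}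
    (h : G p c ((m:ℚ) * x)) : G p c x := by
  haveI := Fact.mk hp
  unfold G at *
  rwa [padicNorm.mul, (padicNorm.nat_eq_one_iff m).2 hm, one_mul] at h

lemma choose_dvd {p : ℕ} (hp : p.Prime) {n i : ℕ} (h1 : 0 < i) (h2 : i ≤ n) :
    p ^ (n.factorization p - i.factorization p) ∣ n.choose i := by
  have hn0 : 0 < n := lt_of_lt_of_le h1 h2
  have key : n.choose i * i = n * ((n-1).choose (i-1)) := by
    have h := Nat.add_one_mul_choose_eq (n-1) (i-1)
    have en : n-1+1 = n := Nat.succ_pred_eq_of_pos hn0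
    have ei : i-1+1 = i := Nat.succ_pred_eq_of_pos h1
    rw [en, ei] at h
    exact h.symm
  have hC : n.choose i ≠ 0 := (Nat.choose_pos h2).ne'
  have hC2 : (n-1).choose (i-1) ≠ 0 := (Nat.choose_pos (by omega)).ne'
  have e : (n.choose i * i).factorization = (n * ((n-1).choose (i-1))).factorization := by
    rw [key]
  rw [Nat.factorization_mul hC h1.ne', Nat.factorization_mul hn0.ne' hC2] at e
  have e2 := congrArg (fun f => f p) e
  simp only [Finsupp.add_apply] at e2
  exact (Nat.Prime.pow_dvd_iff_le_factorization hp hC).2 (by omega)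

lemma choose_mod_one {p j : ℕ} (hp : p.Prime) (hj : j < p) (k : ℕ) :
    (p*k+j).choose (p*k) % p = 1 % p := by
  haveI := Fact.mk hp
  have h := Choose.choose_modEq_choose_mod_mul_choose_div_nat (p := p) (n := p*k+j) (k := p*k)
  have e1 : (p*k+j) % p = j := by rw [Nat.mul_add_mod]; exact Nat.mod_eq_of_lt hj
  have e2 : (p*k+j)/p = k := by
    rw [Nat.mul_add_div hp.pos, Nat.div_eq_of_lt hj]
    omega
  have e3 : (p*k) % p = 0 := Nat.mul_mod_right p k
  have e4 : (p*k)/p = k := Nat.mul_div_cancel_left k hp.pos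
  rw [e1, e2, e3, e4] at h
  simp at h; exact h

lemma unit_choose {p j : ℕ} (hp : p.Prime) (hj : j < p) (k : ℕ) :
    ¬ p ∣ (p*k+j).choose (p*k) := by
  intro hd
  have h1 := choose_mod_one hp hj k
  have h2 : (p*k+j).choose (p*k) % p = 0 := Nat.mod_eq_zero_of_dvd hd
  have h3 : 1 % p = 1 := Nat.mod_eq_of_lt hp.one_lt
  omega


def S (p : ℕ) (E : ℕ → ℚ) (N i M : ℕ) : ℚ :=
  ∑ m ∈ Finset.range M, (if i ≤ p * m then ((N.choose (p*m - i)) : ℚ) else 0) * E (p * m)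

section MainDev

variable {p j : ℕ} {E : ℕ → ℚ}

lemma hrec' (hp : p.Prime) (hj : j < p)
    (hErec : ∀ k, 0 < k → ∑ m ∈ Finset.range (k+1), ((p*k+j).choose (p*m) : ℚ) * E (p*m) = 0)
    (k M : ℕ) (hk : 0 < k) (hM : k + 1 ≤ M) :
    ∑ m ∈ Finset.range M, ((p*k+j).choose (p*m) : ℚ) * E (p*m) = 0 := by
  rw [← hErec k hk]
  symm
  apply Finset.sum_subset (Finset.range_subset_range.2 hM)
  intro x _ hx
  rw [Finset.mem_range, not_lt] at hx
  have h1 : p*(k+1) ≤ p*x := Nat.mul_le_mul_left p hx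
  have h2 : p*k + p ≤ p*x := by rw [Nat.mul_add, Nat.mul_one] at h1; omega
  have h3 : (p*k+j).choose (p*x) = 0 := Nat.choose_eq_zero_of_lt (by omega)
  rw [h3]
  simp

lemma u_int (hp : p.Prime) (hj : j < p)
    (hE0 : E 0 = j.factorial)
    (hErec : ∀ k, 0 < k → ∑ m ∈ Finset.range (k+1), ((p*k+j).choose (p*m) : ℚ) * E (p*m) = 0) :
    ∀ m, G p 0 (E (p*m)) := by
  intro m
  induction m using Nat.strong_induction_on with
  | _ m IH =>
    rcases Nat.eq_zero_or_pos m with rfl | hm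
    · rw [Nat.mul_zero, hE0]; exact G_nat0 hp _
    · have h := hErec m hm
      rw [Finset.sum_range_succ] at h
      have h2 : ((p*m+j).choose (p*m) : ℚ) * E (p*m)
          = -∑ x ∈ Finset.range m, ((p*m+j).choose (p*x) : ℚ) * E (p*x) := by linarith
      apply G_unit_cancel hp (unit_choose hp hj m)
      rw [h2]
      refine G_neg (G_sum hp (fun i hi => ?_))
      have := G_mul hp (G_nat0 hp ((p*m+j).choose (p*i))) (IH i (Finset.mem_range.1 hi))
      simpa using this

lemma vand (hp : p.Prime) (hj : j < p)
    (hErec : ∀ k, 0 < k → ∑ m ∈ Finset.range (k+1), ((p*k+j).choose (p*m) : ℚ) * E (p*m) = 0)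
    (k a M : ℕ) (ha : 0 < a) (hM : k + a + 1 ≤ M) :
    ∑ i ∈ Finset.range (p*a+1), ((p*a).choose i : ℚ) * S p E (p*k+j) i M = 0 := by
  have key : ∀ m : ℕ, ∑ i ∈ Finset.range (p*a+1),
      ((p*a).choose i : ℚ) * (if i ≤ p*m then ((p*k+j).choose (p*m - i) : ℚ) else 0)
      = ((p*(k+a)+j).choose (p*m) : ℚ) := by
    intro m
    have hv : (p*a + (p*k+j)).choose (p*m)
        = ∑ i ∈ Finset.range (p*m+1), (p*a).choose i * (p*k+j).choose (p*m - i) := by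
      rw [Nat.add_choose_eq, Finset.Nat.sum_antidiagonal_eq_sum_range_succ_mk]
    have harith : p*(k+a)+j = p*a + (p*k+j) := by ring
    have e1 : ∑ i ∈ Finset.range (p*a+1),
        ((p*a).choose i : ℚ) * (if i ≤ p*m then ((p*k+j).choose (p*m - i) : ℚ) else 0)
        = ∑ i ∈ Finset.range (p*a + p*m + 2),
          ((p*a).choose i : ℚ) * (if i ≤ p*m then ((p*k+j).choose (p*m - i) : ℚ) else 0) := by
      apply Finset.sum_subset (Finset.range_subset_range.2 (by omega))
      intro x _ hx
      rw [Finset.mem_range, not_lt] at hx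
      rw [Nat.choose_eq_zero_of_lt (show p*a < x by omega)]
      simp
    have e2 : ∑ i ∈ Finset.range (p*m+1),
        (((p*a).choose i : ℚ) * ((p*k+j).choose (p*m - i) : ℚ))
        = ∑ i ∈ Finset.range (p*a + p*m + 2),
          ((p*a).choose i : ℚ) * (if i ≤ p*m then ((p*k+j).choose (p*m - i) : ℚ) else 0) := by
      have e2a : ∑ i ∈ Finset.range (p*m+1),
          (((p*a).choose i : ℚ) * ((p*k+j).choose (p*m - i) : ℚ))
          = ∑ i ∈ Finset.range (p*m+1),
            ((p*a).choose i : ℚ) * (if i ≤ p*m then ((p*k+j).choose (p*m - i) : ℚ) else 0) := by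
        apply Finset.sum_congr rfl
        intro i hi
        rw [Finset.mem_range] at hi
        rw [if_pos (by omega : i ≤ p*m)]
      rw [e2a]
      apply Finset.sum_subset (Finset.range_subset_range.2 (by omega))
      intro x _ hx
      rw [Finset.mem_range, not_lt] at hx
      rw [if_neg (by omega : ¬ x ≤ p*m)]
      simp
    rw [e1, ← e2, harith, hv]
    push_cast
    rfl
  unfold S
  calc ∑ i ∈ Finset.range (p*a+1), ((p*a).choose i : ℚ) *
        ∑ m ∈ Finset.range M, (if i ≤ p*m then ((p*k+j).choose (p*m - i) : ℚ) else 0) * E (p*m)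
      = ∑ i ∈ Finset.range (p*a+1), ∑ m ∈ Finset.range M,
          ((p*a).choose i : ℚ) * (if i ≤ p*m then ((p*k+j).choose (p*m - i) : ℚ) else 0) * E (p*m) := by
        apply Finset.sum_congr rfl
        intro i _
        rw [Finset.mul_sum]
        apply Finset.sum_congr rfl
        intro m _
        ring
    _ = ∑ m ∈ Finset.range M, ∑ i ∈ Finset.range (p*a+1),
          ((p*a).choose i : ℚ) * (if i ≤ p*m then ((p*k+j).choose (p*m - i) : ℚ) else 0) * E (p*m) :=
        Finset.sum_comm
    _ = ∑ m ∈ Finset.range M, ((p*(k+a)+j).choose (p*m) : ℚ) * E (p*m) := by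
        apply Finset.sum_congr rfl
        intro m _
        rw [← Finset.sum_mul, key m]
    _ = 0 := hrec' hp hj hErec (k+a) M (by omega) (by omega)

lemma claimB (hp : p.Prime) (hj : j < p)
    (hE0 : E 0 = j.factorial)
    (hErec : ∀ k, 0 < k → ∑ m ∈ Finset.range (k+1), ((p*k+j).choose (p*m) : ℚ) * E (p*m) = 0) :
    ∀ i, 0 < i → ∀ k, 0 < k → ∀ M, k + i + 1 ≤ M →
    G p (i.factorization p + (if j = 0 then 1 else 0)) (S p E (p*k+j) i M) := by
  intro i
  induction i using Nat.strong_induction_on with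
  | _ i IH =>
    intro hi k hk M hM
    by_cases hdvd : p ∣ i
    · obtain ⟨a, rfl⟩ := hdvd
      have ha : 0 < a := by
        rcases Nat.eq_zero_or_pos a with rfl | ha
        · simp at hi
        · exact ha
      have hale : a ≤ p * a := Nat.le_mul_of_pos_left a hp.pos
      have hv := vand hp hj hErec k a M ha (by omega)
      rw [Finset.sum_range_succ] at hv
      have hO : ((p*a).choose (p*a) : ℚ) = 1 := by simp
      rw [hO, one_mul] at hv
      have hfinal : S p E (p*k+j) (p*a) M
          = -∑ i' ∈ Finset.range (p*a), ((p*a).choose i' : ℚ) * S p E (p*k+j) i' M := by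
        linarith
      rw [hfinal]
      refine G_neg (G_sum hp (fun i' hi' => ?_))
      rw [Finset.mem_range] at hi'
      rcases Nat.eq_zero_or_pos i' with rfl | hi'pos
      · have hS0 : S p E (p*k+j) 0 M = 0 := by
          unfold S
          rw [← hrec' hp hj hErec k M hk (by omega)]
          apply Finset.sum_congr rfl
          intro m _
          rw [if_pos (Nat.zero_le _), Nat.sub_zero]
        rw [hS0, mul_zero]
        exact G_zero hp _
      · refine G_mono hp (show (p*a).factorization p + (if j = 0 then 1 else 0)
            ≤ ((p*a).factorization p - i'.factorization p)
              + (i'.factorization p + (if j = 0 then 1 else 0)) by omega) ?_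
        exact G_mul hp (G_nat hp (choose_dvd hp hi'pos hi'.le))
          (IH i' hi' hi'pos k hk M (by omega))
    · have hf : i.factorization p = 0 := Nat.factorization_eq_zero_of_not_dvd hdvd
      rw [hf, Nat.zero_add]
      unfold S
      refine G_sum hp (fun m _ => ?_)
      by_cases hg : i ≤ p*m
      · rw [if_pos hg]
        by_cases hj0 : j = 0
        · subst hj0
          simp only [if_pos rfl]
          have hne : i ≠ p*m := by rintro rfl; exact hdvd ⟨m, rfl⟩
          have hb1 : 0 < p*m - i := by omega
          by_cases hble : p*m - i ≤ p*k + 0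
          · have hfb : (p*m - i).factorization p = 0 := by
              apply Nat.factorization_eq_zero_of_not_dvd
              intro hd
              apply hdvd
              have h6 : p ∣ p*m := ⟨m, rfl⟩
              have h7 := Nat.dvd_sub h6 hd
              rwa [Nat.sub_sub_self hg] at h7
            have h8 : 1 ≤ (p*k+0).factorization p := by
              have : p ^ 1 ∣ p*k+0 := by
                rw [pow_one, Nat.add_zero]; exact ⟨k, rfl⟩
              exact (Nat.Prime.pow_dvd_iff_le_factorization hp (by omega)).1 this
            have hdc := choose_dvd hp hb1 hble
            have h9 : p ^ 1 ∣ (p*k+0).choose (p*m - i) := by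
              rw [hfb] at hdc
              exact dvd_trans (pow_dvd_pow p (by omega)) hdc
            have := G_mul hp (G_nat hp h9) (u_int hp hj hE0 hErec m)
            simpa using this
          · rw [Nat.choose_eq_zero_of_lt (by omega), Nat.cast_zero, zero_mul]
            exact G_zero hp _
        · simp only [if_neg hj0]
          have := G_mul hp (G_nat0 hp ((p*k+j).choose (p*m - i))) (u_int hp hj hE0 hErec m)
          simpa using this
      · rw [if_neg hg, zero_mul]
        exact G_zero hp _


lemma main (hp : p.Prime) (hodd : Odd p) (hj : j < p)
    (hE0 : E 0 = j.factorial)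
    (hErec : ∀ k, 0 < k → ∑ m ∈ Finset.range (k+1), ((p*k+j).choose (p*m) : ℚ) * E (p*m) = 0) :
    ∀ r, 0 < r → ∀ n, G p (r + (if j = 0 then 1 else 0)) (E (p*n) + E (p*(n + p^(r-1)))) := by
  intro r
  induction r using Nat.strong_induction_on with
  | _ r IHr =>
    intro hr n
    induction n using Nat.strong_induction_on with
    | _ n IHn =>
      rcases Nat.eq_zero_or_pos n with rfl | hn
      · -- base cases n = 0
        rcases Nat.lt_or_ge r 2 with hr1 | hr2
        · -- r = 1
          have hre : r = 1 := by omega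
          subst hre
          have h := hErec 1 Nat.one_pos
          rw [Finset.sum_range_succ, Finset.sum_range_one] at h
          -- h : C(p*1+j, p*0) * E (p*0) + C(p*1+j, p*1) * E (p*1) = 0
          have hc0 : ((p*1+j).choose (p*0) : ℚ) = 1 := by
            rw [Nat.mul_zero, Nat.choose_zero_right, Nat.cast_one]
          rw [hc0, one_mul] at h
          have heq : E (p*0) + E (p*(0 + p^(1-1)))
              = (1 - (((p*1+j).choose (p*1) : ℕ) : ℚ)) * E (p*1) := by
            have e1 : (0 + p^(1-1)) = 1 := by norm_num
            rw [e1]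
            linarith
          rw [heq]
          by_cases hj0 : j = 0
          · subst hj0
            have hc1 : (p*1+0).choose (p*1) = 1 := by
              rw [Nat.add_zero]; exact Nat.choose_self _
            rw [hc1]
            norm_num
            exact G_zero hp _
          · have hd : (p:ℤ) ∣ (1 - ((p*1+j).choose (p*1) : ℤ)) := by
              have hmod : (p*1+j).choose (p*1) ≡ 1 [MOD p] := choose_mod_one hp hj 1
              have := (Nat.modEq_iff_dvd (n := p) (a := (p*1+j).choose (p*1)) (b := 1)).1 hmod
              exact this
            have h1 : G p 1 ((1 : ℚ) - (((p*1+j).choose (p*1) : ℕ) : ℚ)) := by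
              have := G_int hp (c := 1) (z := 1 - ((p*1+j).choose (p*1) : ℤ)) (by rwa [pow_one])
              push_cast at this ⊢
              exact this
            have := G_mul hp h1 (u_int hp hj hE0 hErec 1)
            simp only [if_neg hj0]
            simpa using this
        · -- r ≥ 2 : pairing case
          have hq1 : 1 ≤ p^(r-1) := Nat.one_le_pow _ _ hp.pos
          have hpq : p * p^(r-1) = p^r := by
            rw [← pow_succ']
            congr 1
            omega
          set q := p^(r-1) with hqdef
          have hoddq : Odd q := hodd.pow
          have hq2 : 2 ≤ q := by
            have h1 : p^1 ≤ p^(r-1) := Nat.pow_le_pow_right hp.pos (by omega)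
            rw [pow_one] at h1
            have := hp.two_le
            omega
          have hvand := vand hp hj hErec 0 q (q+1) (by omega) (by omega)
          have hSb : ∀ b, b ≤ q → S p E (p*0+j) (p*b) (q+1) = E (p*b) := by
            intro b hb
            unfold S
            rw [Finset.sum_eq_single_of_mem b (Finset.mem_range.2 (by omega))
              (fun c _ hcb => ?_)]
            · rw [if_pos le_rfl, Nat.sub_self, Nat.choose_zero_right, Nat.cast_one, one_mul]
            · by_cases hcge : p*b ≤ p*c
              · have hbc : b ≤ c := Nat.le_of_mul_le_mul_left hcge hp.pos
                have hbc2 : b < c := by omega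
                rw [if_pos hcge]
                have h1 : p*(b+1) ≤ p*c := Nat.mul_le_mul_left p hbc2
                rw [Nat.mul_add, Nat.mul_one] at h1
                rw [Nat.choose_eq_zero_of_lt (by omega : p*0+j < p*c - p*b), Nat.cast_zero,
                  zero_mul]
              · rw [if_neg hcge, zero_mul]
          obtain ⟨Q, hQ⟩ : ∃ Q, q = Q + 1 := ⟨q - 1, by omega⟩
          classical
          have himg : (Finset.range (p*q+1)).filter (fun i => p ∣ i)
              = (Finset.range (q+1)).image (fun b => p*b) := by
            ext i
            simp only [Finset.mem_filter, Finset.mem_range, Finset.mem_image]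
            constructor
            · rintro ⟨hlt, b, rfl⟩
              refine ⟨b, ?_, rfl⟩
              have : b ≤ q := Nat.le_of_mul_le_mul_left (by omega) hp.pos
              omega
            · rintro ⟨b, hb, rfl⟩
              have hble : b ≤ q := by omega
              exact ⟨by have := Nat.mul_le_mul_left p hble; omega, ⟨b, rfl⟩⟩
          have hsplit := Finset.sum_filter_add_sum_filter_not (Finset.range (p*q+1))
            (fun i => p ∣ i) (fun i => ((p*q).choose i : ℚ) * S p E (p*0+j) i (q+1))
          have hinj : ∀ x ∈ Finset.range (q+1), ∀ y ∈ Finset.range (q+1), p*x = p*y → x = y :=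
            fun x _ y _ h => Nat.eq_of_mul_eq_mul_left hp.pos h
          have hA : ∑ i ∈ (Finset.range (p*q+1)).filter (fun i => p ∣ i),
                ((p*q).choose i : ℚ) * S p E (p*0+j) i (q+1)
              = ∑ b ∈ Finset.range (q+1), ((p*q).choose (p*b) : ℚ) * E (p*b) := by
            rw [himg, Finset.sum_image hinj]
            exact Finset.sum_congr rfl (fun b hb => by
              rw [hSb b (by have := Finset.mem_range.1 hb; omega)])
          have hApeel : ∑ b ∈ Finset.range (q+1), ((p*q).choose (p*b) : ℚ) * E (p*b)
              = E (p*0) + E (p*q)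
                + ∑ b ∈ Finset.range Q, ((p*q).choose (p*(b+1)) : ℚ) * E (p*(b+1)) := by
            rw [hQ, Finset.sum_range_succ, Finset.sum_range_succ']
            rw [Nat.choose_self, Nat.mul_zero, Nat.choose_zero_right]
            push_cast
            ring
          have hpair : ∀ c, 0 < c → c ≤ Q →
              G p (c.factorization p + 1 + (if j = 0 then 1 else 0))
                (E (p*c) + E (p*(q - c))) := by
            intro c hc0 hcQ
            set s := c.factorization p with hsdef
            have hps : p^s ∣ c := Nat.ordProj_dvd c p
            have hs2 : s ≤ r - 2 := by
              have h1 : p^s ≤ c := Nat.le_of_dvd hc0 hps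
              have h2 : p^s < p^(r-1) := by
                rw [← hqdef]
                omega
              have h3 := (Nat.pow_lt_pow_iff_right hp.one_lt).1 h2
              omega
            have H : ∀ x, G p (s + 1 + (if j = 0 then 1 else 0))
                (E (p*x) + E (p*(x + p^s))) := by
              intro x
              have h := IHr (s+1) (by omega) (by omega) x
              have e : (s+1) - 1 = s := by omega
              rw [e] at h
              exact h
            have TL : ∀ l x, G p (s + 1 + (if j = 0 then 1 else 0))
                (E (p*x) + E (p*(x + p^s * (2*l+1)))) := by
              intro l
              induction l with
              | zero =>
                intro x
                have e : p^s * (2*0+1) = p^s := by ring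
                rw [e]
                exact H x
              | succ l IH2 =>
                intro x
                have e1 : x + p^s*(2*(l+1)+1) = ((x + p^s*(2*l+1)) + p^s) + p^s := by ring
                have key : E (p*x) + E (p*(x + p^s*(2*(l+1)+1)))
                    = (E (p*x) + E (p*(x + p^s*(2*l+1))))
                      - (E (p*(x + p^s*(2*l+1))) + E (p*((x + p^s*(2*l+1)) + p^s)))
                      + (E (p*((x + p^s*(2*l+1)) + p^s))
                        + E (p*(((x + p^s*(2*l+1)) + p^s) + p^s))) := by
                  rw [e1]
                  ring
                rw [key]
                exact G_add hp (G_sub hp (IH2 x) (H _)) (H _)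
            have hc2 : 2*c ≠ q := by
              obtain ⟨w, hw⟩ := hoddq
              omega
            have hdq : p^s ∣ q := by rw [hqdef]; exact pow_dvd_pow p (by omega)
            rcases Nat.lt_or_ge (2*c) q with hlt | hge
            · have hdvd : p^s ∣ (q - 2*c) := Nat.dvd_sub hdq (Dvd.dvd.mul_left hps 2)
              obtain ⟨t, ht⟩ := hdvd
              have hoddt : Odd t := by
                rcases Nat.even_or_odd t with he | ho
                · exfalso
                  obtain ⟨w, hw⟩ := he
                  have he2 : p^s * t = 2*(p^s*w) := by rw [hw]; ring
                  obtain ⟨z, hz⟩ := hoddq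
                  omega
                · exact ho
              obtain ⟨l, hl⟩ := hoddt
              have he4 : p^s * t = p^s*(2*l+1) := by rw [hl]
              have he3 : q - c = c + p^s*(2*l+1) := by omega
              rw [he3]
              exact TL l c
            · have hgt : q < 2*c := by omega
              have hdvd : p^s ∣ (2*c - q) := Nat.dvd_sub (Dvd.dvd.mul_left hps 2) hdq
              obtain ⟨t, ht⟩ := hdvd
              have hoddt : Odd t := by
                rcases Nat.even_or_odd t with he | ho
                · exfalso
                  obtain ⟨w, hw⟩ := he
                  have he2 : p^s * t = 2*(p^s*w) := by rw [hw]; ring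
                  obtain ⟨z, hz⟩ := hoddq
                  omega
                · exact ho
              obtain ⟨l, hl⟩ := hoddt
              have he4 : p^s * t = p^s*(2*l+1) := by rw [hl]
              have he3 : (q - c) + p^s*(2*l+1) = c := by omega
              have h := TL l (q - c)
              rw [he3] at h
              rw [add_comm (E (p*(q - c))) (E (p*c))] at h
              exact h
          have hfq : (p*q).factorization p = r := by
            rw [hqdef, hpq, hp.factorization_pow]
            simp
          have hPbound : G p (r + (if j = 0 then 1 else 0))
              ((2:ℚ) * ∑ b ∈ Finset.range Q, ((p*q).choose (p*(b+1)) : ℚ) * E (p*(b+1))) := by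
            have hrefl : ∑ b ∈ Finset.range Q, ((p*q).choose (p*(b+1)) : ℚ) * E (p*(b+1))
                = ∑ b ∈ Finset.range Q,
                    ((p*q).choose (p*(Q-1-b+1)) : ℚ) * E (p*(Q-1-b+1)) :=
              (Finset.sum_range_reflect
                (fun b => ((p*q).choose (p*(b+1)) : ℚ) * E (p*(b+1))) Q).symm
            have h2P : (2:ℚ) * ∑ b ∈ Finset.range Q, ((p*q).choose (p*(b+1)) : ℚ) * E (p*(b+1))
                = ∑ b ∈ Finset.range Q,
                    (((p*q).choose (p*(b+1)) : ℚ) * E (p*(b+1))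
                      + ((p*q).choose (p*(Q-1-b+1)) : ℚ) * E (p*(Q-1-b+1))) := by
              rw [Finset.sum_add_distrib, ← hrefl]
              ring
            rw [h2P]
            refine G_sum hp (fun b hb => ?_)
            rw [Finset.mem_range] at hb
            have e1 : Q-1-b+1 = q - (b+1) := by omega
            have e2 : p*(q - (b+1)) = p*q - p*(b+1) := Nat.mul_sub p q (b+1)
            have hble : p*(b+1) ≤ p*q := Nat.mul_le_mul_left p (by omega)
            have hsymm : (p*q).choose (p*(Q-1-b+1)) = (p*q).choose (p*(b+1)) := by
              rw [e1, e2]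
              exact Nat.choose_symm hble
            rw [hsymm, e1]
            have hterm : ((p*q).choose (p*(b+1)) : ℚ) * E (p*(b+1))
                + ((p*q).choose (p*(b+1)) : ℚ) * E (p*(q - (b+1)))
                = ((p*q).choose (p*(b+1)) : ℚ) * (E (p*(b+1)) + E (p*(q - (b+1)))) := by ring
            rw [hterm]
            have hfc : (p*(b+1)).factorization p = 1 + (b+1).factorization p := by
              rw [Nat.factorization_mul hp.pos.ne' (by omega : b+1 ≠ 0)]
              simp [hp.factorization]
            have hC : G p (r - (1 + (b+1).factorization p)) (((p*q).choose (p*(b+1)) : ℕ) : ℚ) := by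
              apply G_nat hp
              have h := choose_dvd hp (show 0 < p*(b+1) by have := hp.pos; positivity) hble
              rwa [hfq, hfc] at h
            have hW := hpair (b+1) (by omega) (by omega)
            refine G_mono hp (by omega) (G_mul hp hC hW)
          have hBpart : G p (r + (if j = 0 then 1 else 0))
              (∑ i ∈ (Finset.range (p*q+1)).filter (fun i => ¬ p ∣ i),
                ((p*q).choose i : ℚ) * S p E (p*0+j) i (q+1)) := by
            refine G_sum hp (fun i hi => ?_)
            rw [Finset.mem_filter, Finset.mem_range] at hi
            obtain ⟨hilt, hindvd⟩ := hi
            have hi0 : 0 < i := by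
              rcases Nat.eq_zero_or_pos i with rfl | h
              · exact absurd (dvd_zero p) hindvd
              · exact h
            by_cases hj0 : j = 0
            · have hS0 : S p E (p*0+j) i (q+1) = 0 := by
                subst hj0
                unfold S
                apply Finset.sum_eq_zero
                intro m _
                by_cases hg : i ≤ p*m
                · rw [if_pos hg]
                  have hne : i ≠ p*m := by rintro rfl; exact hindvd ⟨m, rfl⟩
                  rw [Nat.choose_eq_zero_of_lt (by omega : p*0+0 < p*m - i), Nat.cast_zero,
                    zero_mul]
                · rw [if_neg hg, zero_mul]
              rw [hS0, mul_zero]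
              exact G_zero hp _
            · have hfi : i.factorization p = 0 := Nat.factorization_eq_zero_of_not_dvd hindvd
              have hC : G p r (((p*q).choose i : ℕ) : ℚ) := by
                apply G_nat hp
                have h := choose_dvd hp hi0 (by omega : i ≤ p*q)
                rwa [hfq, hfi, Nat.sub_zero] at h
              have hS : G p 0 (S p E (p*0+j) i (q+1)) := by
                unfold S
                refine G_sum hp (fun m _ => ?_)
                by_cases hg : i ≤ p*m
                · rw [if_pos hg]
                  have h := G_mul hp (G_nat0 hp ((p*0+j).choose (p*m - i)))
                    (u_int hp hj hE0 hErec m)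
                  simpa using h
                · rw [if_neg hg, zero_mul]
                  exact G_zero hp _
              have h := G_mul hp hC hS
              simp only [if_neg hj0]
              exact h
          have hPgood : G p (r + (if j = 0 then 1 else 0))
              (∑ b ∈ Finset.range Q, ((p*q).choose (p*(b+1)) : ℚ) * E (p*(b+1))) := by
            have hp2ne : ¬ p ∣ 2 := by
              intro hd
              have := (Nat.prime_dvd_prime_iff_eq hp Nat.prime_two).1 hd
              obtain ⟨w, hw⟩ := hodd
              omega
            apply G_unit_cancel hp hp2ne
            have : (((2:ℕ):ℚ)) * ∑ b ∈ Finset.range Q, ((p*q).choose (p*(b+1)) : ℚ) * E (p*(b+1))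
                = (2:ℚ) * ∑ b ∈ Finset.range Q, ((p*q).choose (p*(b+1)) : ℚ) * E (p*(b+1)) := by
              norm_num
            rw [this]
            exact hPbound
          have hfin : E (p*0) + E (p*q)
              = -((∑ b ∈ Finset.range Q, ((p*q).choose (p*(b+1)) : ℚ) * E (p*(b+1)))
                + ∑ i ∈ (Finset.range (p*q+1)).filter (fun i => ¬ p ∣ i),
                    ((p*q).choose i : ℚ) * S p E (p*0+j) i (q+1)) := by
            rw [hA, hApeel] at hsplit
            rw [hvand] at hsplit
            linarith
          have e0q : (0:ℕ) + q = q := Nat.zero_add q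
          rw [e0q, hfin]
          exact G_neg (G_add hp hPgood hBpart)
      · -- n ≥ 1
        have hq1 : 1 ≤ p^(r-1) := Nat.one_le_pow _ _ hp.pos
        have hpq : p * p^(r-1) = p^r := by
          rw [← pow_succ']
          congr 1
          omega
        set q := p^(r-1) with hqdef
        set M := n + p^r + 1 with hMdef
        have hqpr : q ≤ p^r := by rw [← hpq]; exact Nat.le_mul_of_pos_left _ hp.pos
        have hSval : S p E (p*n+j) (p^r) M
            = ∑ m ∈ Finset.range (n+1), ((p*n+j).choose (p*m) : ℚ) * E (p*(m + q)) := by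
          unfold S
          have g1 : ∀ m, (if p^r ≤ p*m then (((p*n+j).choose (p*m - p^r)) : ℚ) else 0) * E (p*m)
              = (if q ≤ m then (((p*n+j).choose (p*m - p^r)) : ℚ) * E (p*m) else 0) := by
            intro m
            by_cases h : q ≤ m
            · rw [if_pos h, if_pos (by rw [← hpq]; exact Nat.mul_le_mul_left p h)]
            · rw [if_neg h, if_neg, zero_mul]
              rw [← hpq]
              intro hc
              exact h (Nat.le_of_mul_le_mul_left hc hp.pos)
          rw [Finset.sum_congr rfl (fun m _ => g1 m)]
          have hsub : Finset.Ico q M ⊆ Finset.range M := by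
            rw [Finset.range_eq_Ico]
            exact Finset.Ico_subset_Ico (Nat.zero_le _) le_rfl
          rw [← Finset.sum_subset hsub (fun x hx1 hx2 => by
            rw [Finset.mem_range] at hx1
            rw [if_neg]
            intro hc
            exact hx2 (Finset.mem_Ico.2 ⟨hc, hx1⟩))]
          rw [Finset.sum_Ico_eq_sum_range]
          have g2 : ∀ i, (if q ≤ q + i then (((p*n+j).choose (p*(q+i) - p^r)) : ℚ) * E (p*(q+i)) else 0)
              = ((p*n+j).choose (p*i) : ℚ) * E (p*(i + q)) := by
            intro i
            rw [if_pos (Nat.le_add_right _ _)]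
            have e1 : p*(q+i) - p^r = p*i := by
              rw [← hpq, Nat.mul_add]
              omega
            rw [e1, Nat.add_comm q i]
          rw [Finset.sum_congr rfl (fun i _ => g2 i)]
          symm
          apply Finset.sum_subset (Finset.range_subset_range.2 (by omega))
          intro x _ hx
          rw [Finset.mem_range, not_lt] at hx
          have h1 : p*(n+1) ≤ p*x := Nat.mul_le_mul_left p hx
          rw [Nat.mul_add, Nat.mul_one] at h1
          rw [Nat.choose_eq_zero_of_lt (by omega : p*n+j < p*x), Nat.cast_zero, zero_mul]
        have hkey : ∑ m ∈ Finset.range (n+1),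
            ((p*n+j).choose (p*m) : ℚ) * (E (p*m) + E (p*(m + q)))
            = S p E (p*n+j) (p^r) M := by
          rw [hSval]
          rw [Finset.sum_congr rfl (fun m _ => mul_add (((p*n+j).choose (p*m) : ℚ)) _ _)]
          rw [Finset.sum_add_distrib, hErec n hn, zero_add]
        have hSb : G p (r + (if j = 0 then 1 else 0)) (S p E (p*n+j) (p^r) M) := by
          have h := claimB hp hj hE0 hErec (p^r) (Nat.pow_pos (n := r) hp.pos) n hn M (by omega)
          have hfac : (p^r).factorization p = r := by
            rw [hp.factorization_pow]
            simp
          rwa [hfac] at h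
        rw [Finset.sum_range_succ] at hkey
        have hpeel : ((p*n+j).choose (p*n) : ℚ) * (E (p*n) + E (p*(n + q)))
            = S p E (p*n+j) (p^r) M
              - ∑ m ∈ Finset.range n, ((p*n+j).choose (p*m) : ℚ) * (E (p*m) + E (p*(m + q))) := by
          linarith
        apply G_unit_cancel hp (unit_choose hp hj n)
        rw [hpeel]
        refine G_sub hp hSb (G_sum hp (fun m hm => ?_))
        have := G_mul hp (G_nat0 hp ((p*n+j).choose (p*m))) (IHn m (Finset.mem_range.1 hm))
        simpa using this


end MainDev
end Stmt5

theorem stmt_5 (p : ℕ) (hp : p.Prime) (hodd : Odd p) (r : ℕ) (hr : 0 < r)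
    (j : ℕ) (hj : j ≤ p - 1) (n : ℕ) (E : ℕ → ℚ)
    (hE0 : E 0 = j.factorial)
    (hErec : ∀ k : ℕ, 0 < k →
      ∑ m ∈ Finset.range (k + 1), ((p * k + j).choose (p * m) : ℚ) * E (p * m) = 0) :
    padicNorm p (E (p * n) + E (p * n + p ^ r)) ≤
      (p : ℚ) ^ (-((r : ℤ) + if j = 0 then 1 else 0)) := by
  have hjp : j < p := by have := hp.two_le; omega
  have h := Stmt5.main hp hodd hjp hE0 hErec r hr n
  have hidx : p * n + p ^ r = p * (n + p ^ (r-1)) := by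
    rw [Nat.mul_add]
    congr 1
    rw [← pow_succ']
    congr 1
    omega
  rw [hidx]
  have hexp : (-(((r + if j = 0 then 1 else 0 : ℕ)) : ℤ)) = -((r : ℤ) + if j = 0 then 1 else 0) := by
    split_ifs <;> push_cast <;> ring
  unfold Stmt5.G at h
  rw [← hexp]
  exact h
end

section
/- Let W_n denote the Lehmer numbers. For any nonnegative integers n, m and positive integer k, if 3n ≡ 3m mod 2·3^k, then W_{3n} ≡ W_{3m} mod 3^{k+1}. -/
open scoped BigOperators

open Polynomial Finset

noncomputable section Stmt6Aux

namespace Stmt6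

/-- projection of a polynomial onto the monomials of degree divisible by 3 -/
def pr (p : ℤ[X]) : ℤ[X] :=
  ∑ d ∈ p.support, if 3 ∣ d then (monomial d (p.coeff d) : ℤ[X]) else 0

lemma pr_coeff (p : ℤ[X]) (e : ℕ) :
    (pr p).coeff e = if 3 ∣ e then p.coeff e else 0 := by
  unfold pr
  rw [finset_sum_coeff]
  by_cases he : e ∈ p.support
  · rw [Finset.sum_eq_single e]
    · by_cases h3 : 3 ∣ e
      · rw [if_pos h3, if_pos h3, coeff_monomial, if_pos rfl]
      · rw [if_neg h3, if_neg h3, coeff_zero]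
    · intro d _ hde
      by_cases h3 : 3 ∣ d
      · rw [if_pos h3, coeff_monomial, if_neg hde]
      · rw [if_neg h3, coeff_zero]
    · intro h; exact absurd he h
  · have hpe : p.coeff e = 0 := Polynomial.notMem_support_iff.mp he
    rw [Finset.sum_eq_zero, hpe, ite_self]
    intro d hd
    by_cases h3 : 3 ∣ d
    · rw [if_pos h3, coeff_monomial, if_neg]
      intro hde; subst hde; exact he hd
    · rw [if_neg h3, coeff_zero]

lemma pr_add (p q : ℤ[X]) : pr (p + q) = pr p + pr q := by
  ext e
  simp only [pr_coeff, coeff_add]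
  split <;> simp

lemma pr_Cmul (a : ℤ) (p : ℤ[X]) : pr (C a * p) = C a * pr p := by
  ext e
  simp only [pr_coeff, coeff_C_mul]
  split <;> simp

lemma pr_X3mul (c : ℕ) (p : ℤ[X]) : pr (X ^ (3 * c) * p) = X ^ (3 * c) * pr p := by
  ext e
  rw [pr_coeff, coeff_X_pow_mul', coeff_X_pow_mul']
  by_cases hle : 3 * c ≤ e
  · rw [if_pos hle, if_pos hle, pr_coeff]
    have : 3 ∣ e ↔ 3 ∣ e - 3 * c := by
      constructor
      · intro h; exact (Nat.dvd_sub h ⟨c, rfl⟩)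
      · intro h
        have := Nat.dvd_add h (⟨c, rfl⟩ : 3 ∣ 3 * c)
        rwa [Nat.sub_add_cancel hle] at this
    by_cases h3 : 3 ∣ e
    · rw [if_pos h3, if_pos (this.mp h3)]
    · rw [if_neg h3, if_neg (fun hh => h3 (this.mpr hh))]
  · rw [if_neg hle, if_neg hle, ite_self]

end Stmt6

section Lam

variable (V : ℕ → ℤ)

/-- the linear functional reading off coefficients at powers `X^(3j)` against `V j` -/
def Lam (p : ℤ[X]) : ℤ := p.sum fun N a => if 3 ∣ N then a * V (N / 3) else 0

lemma Lam_eq_range (p : ℤ[X]) (D : ℕ) (hD : p.natDegree < D) :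
    Lam V p = ∑ d ∈ Finset.range D, p.coeff d * (if 3 ∣ d then V (d / 3) else 0) := by
  unfold Lam
  rw [Polynomial.sum_over_range' _ (fun N => by simp) D hD]
  exact Finset.sum_congr rfl fun d _ => by split <;> simp

lemma Lam_add (p q : ℤ[X]) : Lam V (p + q) = Lam V p + Lam V q := by
  unfold Lam
  apply Polynomial.sum_add_index <;> intros <;> split <;> ring

lemma Lam_zero : Lam V 0 = 0 := by simp [Lam]

lemma Lam_sum {α : Type*} (s : Finset α) (f : α → ℤ[X]) :
    Lam V (∑ i ∈ s, f i) = ∑ i ∈ s, Lam V (f i) := by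
  classical
  induction s using Finset.induction_on with
  | empty => simp [Lam_zero]
  | insert _ _ hx ih => rename_i a s'
                        rw [Finset.sum_insert hx, Finset.sum_insert hx, Lam_add, ih]

lemma Lam_Cmul (a : ℤ) (p : ℤ[X]) : Lam V (C a * p) = a * Lam V p := by
  rw [Lam_eq_range V (C a * p) (p.natDegree + 1)
      (lt_of_le_of_lt (natDegree_C_mul_le a p) (Nat.lt_succ_self _)),
    Lam_eq_range V p (p.natDegree + 1) (Nat.lt_succ_self _), Finset.mul_sum]
  exact Finset.sum_congr rfl fun d _ => by rw [coeff_C_mul]; ring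

lemma Lam_pr (p : ℤ[X]) : Lam V (Stmt6.pr p) = Lam V p := by
  have hd : (Stmt6.pr p).natDegree < p.natDegree + 1 := by
    have : ∀ e, p.natDegree < e → (Stmt6.pr p).coeff e = 0 := by
      intro e he
      rw [Stmt6.pr_coeff, Polynomial.coeff_eq_zero_of_natDegree_lt he, ite_self]
    exact Nat.lt_succ_of_le (Polynomial.natDegree_le_iff_coeff_eq_zero.mpr
      (fun e he => this e he))
  rw [Lam_eq_range V _ _ hd, Lam_eq_range V p (p.natDegree + 1) (Nat.lt_succ_self _)]
  refine Finset.sum_congr rfl fun d _ => ?_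
  rw [Stmt6.pr_coeff]
  by_cases h3 : 3 ∣ d
  · rw [if_pos h3]
  · rw [if_neg h3, if_neg h3, zero_mul, mul_zero]

lemma Lam_one : Lam V 1 = V 0 := by
  have : (1 : ℤ[X]) = C 1 := by simp
  rw [this, Lam]
  rw [Polynomial.sum_C_index] <;> simp

end Lam


section Reindex

lemma sum_filter_three (f : ℕ → ℤ) (N : ℕ) :
    ∑ d ∈ Finset.range (3 * N + 1), (if 3 ∣ d then f d else 0)
      = ∑ j ∈ Finset.range (N + 1), f (3 * j) := by
  induction N with
  | zero => simp
  | succ N ih =>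
    have h1 : 3 * (N + 1) + 1 = (3 * N + 1) + 1 + 1 + 1 := by ring
    rw [h1, Finset.sum_range_succ, Finset.sum_range_succ, Finset.sum_range_succ, ih,
      Finset.sum_range_succ]
    have e1 : ¬ (3 ∣ 3 * N + 1) := by omega
    have e2 : ¬ (3 ∣ 3 * N + 1 + 1) := by omega
    have e3 : (3 ∣ 3 * N + 1 + 1 + 1) := by omega
    rw [if_neg e1, if_neg e2, if_pos e3]
    have : 3 * N + 1 + 1 + 1 = 3 * (N + 1) := by ring
    rw [this, Finset.sum_range_succ, Finset.sum_range_succ]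
    ring

variable (V : ℕ → ℤ)

lemma Lam_one_add_X_pow (n : ℕ) :
    Lam V ((1 + X) ^ (3 * n)) = ∑ j ∈ Finset.range (n + 1), ((3 * n).choose (3 * j) : ℤ) * V j := by
  rw [Lam_eq_range V _ (3 * n + 1)
      (by
        have : ((1 + X : ℤ[X]) ^ (3 * n)).natDegree ≤ 3 * n := by
          refine le_trans (natDegree_pow_le) ?_
          have : (1 + X : ℤ[X]).natDegree ≤ 1 := by
            refine le_trans (natDegree_add_le 1 X) ?_
            simp
          calc (3 * n) * (1 + X : ℤ[X]).natDegree ≤ 3 * n * 1 := by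
                exact Nat.mul_le_mul_left _ this
            _ = 3 * n := by ring
        omega)]
  have : ∀ d ∈ Finset.range (3 * n + 1),
      ((1 + X : ℤ[X]) ^ (3 * n)).coeff d * (if 3 ∣ d then V (d / 3) else 0)
        = (if 3 ∣ d then ((3 * n).choose d : ℤ) * V (d / 3) else 0) := by
    intro d _
    rw [coeff_one_add_X_pow]
    split <;> ring
  rw [Finset.sum_congr rfl this, sum_filter_three (fun d => ((3 * n).choose d : ℤ) * V (d / 3)) n]
  refine Finset.sum_congr rfl fun j _ => ?_
  congr 2
  omega

end Reindex


namespace Stmt6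

lemma pr_quad (a b c d : ℤ) (p : ℤ[X]) :
    pr ((C a + C b * X ^ 3 + C c * X ^ 6 + C d * X ^ 9) * p)
      = (C a + C b * X ^ 3 + C c * X ^ 6 + C d * X ^ 9) * pr p := by
  have h3 : (X ^ 3 : ℤ[X]) = X ^ (3 * 1) := by norm_num
  have h6 : (X ^ 6 : ℤ[X]) = X ^ (3 * 2) := by norm_num
  have h9 : (X ^ 9 : ℤ[X]) = X ^ (3 * 3) := by norm_num
  have expand : (C a + C b * X ^ 3 + C c * X ^ 6 + C d * X ^ 9) * p
      = C a * p + C b * (X ^ (3 * 1) * p) + C c * (X ^ (3 * 2) * p) + C d * (X ^ (3 * 3) * p) := by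
    rw [← h3, ← h6, ← h9]; ring
  rw [expand, pr_add, pr_add, pr_add, pr_Cmul, pr_Cmul, pr_Cmul, pr_Cmul,
      pr_X3mul, pr_X3mul, pr_X3mul, ← h3, ← h6, ← h9]
  ring

/-- multisection of (1+X)^(3n) -/
def E (n : ℕ) : ℤ[X] := pr ((1 + X) ^ (3 * n))

lemma E_rec (n : ℕ) :
    E (n + 3) = (3 + 3 * X ^ 3) * E (n + 2)
      - (3 - 21 * X ^ 3 + 3 * X ^ 6) * E (n + 1)
      + (1 + 3 * X ^ 3 + 3 * X ^ 6 + X ^ 9) * E n := by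
  have cnum3 : (C (3:ℤ) : ℤ[X]) = 3 := by norm_num
  have cnum21 : (C (-21:ℤ) : ℤ[X]) = -21 := by rw [map_neg]; norm_num
  have cnum1 : (C (1:ℤ) : ℤ[X]) = 1 := by norm_num
  have cnum0 : (C (0:ℤ) : ℤ[X]) = 0 := by norm_num
  have q1 : ((3:ℤ[X]) + 3 * X ^ 3) = (C 3 + C 3 * X ^ 3 + C 0 * X ^ 6 + C 0 * X ^ 9) := by
    rw [cnum3, cnum0]; ring
  have q2 : ((3:ℤ[X]) - 21 * X ^ 3 + 3 * X ^ 6)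
      = (C 3 + C (-21) * X ^ 3 + C 3 * X ^ 6 + C 0 * X ^ 9) := by
    rw [cnum3, cnum21, cnum0]; ring
  have q3 : ((1:ℤ[X]) + 3 * X ^ 3 + 3 * X ^ 6 + X ^ 9)
      = (C 1 + C 3 * X ^ 3 + C 3 * X ^ 6 + C 1 * X ^ 9) := by
    rw [cnum3, cnum1]; ring
  have mulId : ((1:ℤ[X]) + X) ^ (3 * (n + 3))
      = (3 + 3 * X ^ 3) * ((1 + X) ^ (3 * (n + 2)))
        - (3 - 21 * X ^ 3 + 3 * X ^ 6) * ((1 + X) ^ (3 * (n + 1)))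
        + (1 + 3 * X ^ 3 + 3 * X ^ 6 + X ^ 9) * ((1 + X) ^ (3 * n)) := by
    have e9 : ((1:ℤ[X]) + X) ^ (3 * (n + 3)) = (1 + X) ^ (3 * n) * ((1 + X) ^ 9) := by
      rw [← pow_add]; ring_nf
    have e6 : ((1:ℤ[X]) + X) ^ (3 * (n + 2)) = (1 + X) ^ (3 * n) * ((1 + X) ^ 6) := by
      rw [← pow_add]; ring_nf
    have e3 : ((1:ℤ[X]) + X) ^ (3 * (n + 1)) = (1 + X) ^ (3 * n) * ((1 + X) ^ 3) := by
      rw [← pow_add]; ring_nf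
    rw [e9, e6, e3]; ring
  unfold E
  rw [mulId, q1, q2, q3]
  rw [sub_eq_add_neg, ← neg_mul]
  have qneg : -(C (3:ℤ) + C (-21) * X ^ 3 + C 3 * X ^ 6 + C 0 * X ^ 9)
      = (C (-3) + C 21 * X ^ 3 + C (-3) * X ^ 6 + C 0 * X ^ 9) := by
    simp only [map_neg, map_zero]
    ring
  rw [qneg, pr_add, pr_add, pr_quad, pr_quad, pr_quad, ← qneg]
  ring

end Stmt6


namespace Stmt6

lemma pr_CXpow (a : ℤ) (i : ℕ) :
    pr (C a * X ^ i) = if 3 ∣ i then C a * X ^ i else 0 := by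
  ext e
  rw [pr_coeff]
  by_cases h3 : 3 ∣ i
  · rw [if_pos h3]
    by_cases he : e = i
    · subst he; rw [if_pos h3]
    · by_cases h3e : 3 ∣ e
      · rw [if_pos h3e]
      · rw [if_neg h3e, coeff_C_mul, coeff_X_pow, if_neg (fun hh => he hh)]
        simp
  · rw [if_neg h3, coeff_zero]
    by_cases h3e : 3 ∣ e
    · rw [if_pos h3e, coeff_C_mul, coeff_X_pow, if_neg, mul_zero]
      intro hh; subst hh; exact h3 h3e
    · rw [if_neg h3e]

/-- the auxiliary polynomials whose coefficients are `3`-adically small -/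
def hP : ℕ → ℤ[X]
  | 0 => 1
  | 1 => X
  | 2 => X ^ 2 + C 18 * X - C 18
  | (n + 3) => hP (n + 2) * X ^ 1 * C 3
      - (hP (n + 1) * X ^ 2 * C 3 - hP (n + 1) * X ^ 1 * C 27 + hP (n + 1) * C 27)
      + hP n * X ^ 3

lemma hP_coeff_rec (n i : ℕ) : (hP (n + 3)).coeff i
    = (if 1 ≤ i then 3 * (hP (n + 2)).coeff (i - 1) else 0)
      - (if 2 ≤ i then 3 * (hP (n + 1)).coeff (i - 2) else 0)
      + (if 1 ≤ i then 27 * (hP (n + 1)).coeff (i - 1) else 0)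
      - 27 * (hP (n + 1)).coeff i
      + (if 3 ≤ i then (hP n).coeff (i - 3) else 0) := by
  rw [hP]
  simp only [coeff_add, coeff_sub, coeff_mul_C, coeff_mul_X_pow']
  split_ifs <;> ring

lemma pow3_dvd_mul {e s e' : ℕ} (c : ℤ) (h : (3:ℤ) ^ e' ∣ c) (he : e ≤ s + e') :
    (3:ℤ) ^ e ∣ 3 ^ s * c := by
  obtain ⟨t, rfl⟩ := h
  have h2 : (3:ℤ) ^ s * (3 ^ e' * t) = 3 ^ (s + e') * t := by rw [pow_add]; ring
  rw [h2]
  exact Dvd.dvd.mul_right (pow_dvd_pow 3 he) t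

lemma hP_coeff_dvd : ∀ n, ∀ i, (3:ℤ) ^ (n - i) ∣ (hP n).coeff i := by
  intro n
  induction n using Stmt6.hP.induct with
  | case1 =>
    intro i
    rw [hP]
    rcases i with _ | j
    · simp
    · simp
  | case2 =>
    intro i
    rw [hP]
    rcases i with _ | _ | j <;> simp [coeff_X]
  | case3 =>
    intro i
    rw [hP]
    rcases i with _ | _ | _ | j
    · norm_num
    · norm_num [coeff_C]
    · norm_num [coeff_C, coeff_X]
    · norm_num [coeff_C, coeff_X, coeff_X_pow]
  | case4 n ih2 ih1 ih0 =>
    intro i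
    rw [hP_coeff_rec]
    refine dvd_add (dvd_sub (dvd_add (dvd_sub ?_ ?_) ?_) ?_) ?_
    · by_cases h1 : 1 ≤ i
      · rw [if_pos h1]
        exact pow3_dvd_mul (s := 1) _ (ih2 (i - 1)) (by omega)
      · rw [if_neg h1]; exact dvd_zero _
    · by_cases h2 : 2 ≤ i
      · rw [if_pos h2]
        exact pow3_dvd_mul (s := 1) _ (ih1 (i - 2)) (by omega)
      · rw [if_neg h2]; exact dvd_zero _
    · by_cases h1 : 1 ≤ i
      · rw [if_pos h1]
        have h27 : (27:ℤ) = 3 ^ 3 := by norm_num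
        rw [h27]
        exact pow3_dvd_mul (s := 3) _ (ih1 (i - 1)) (by omega)
      · rw [if_neg h1]; exact dvd_zero _
    · have h27 : (27:ℤ) = 3 ^ 3 := by norm_num
      rw [h27]
      exact pow3_dvd_mul (s := 3) _ (ih1 i) (by omega)
    · by_cases h3 : 3 ≤ i
      · rw [if_pos h3]
        have := pow3_dvd_mul (s := 0) _ (ih0 (i - 3)) (e := n + 3 - i) (by omega)
        simpa using this
      · rw [if_neg h3]; exact dvd_zero _

end Stmt6


namespace Stmt6

lemma hP_coeff_top : ∀ n, ((∀ i, n < i → (hP n).coeff i = 0) ∧ (hP n).coeff n = 1) := by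
  intro n
  induction n using Stmt6.hP.induct with
  | case1 =>
    constructor
    · intro i hi
      rw [hP, coeff_one, if_neg (by omega)]
    · rw [hP, coeff_one, if_pos rfl]
  | case2 =>
    constructor
    · intro i hi
      rw [hP, coeff_X, if_neg (by omega)]
    · rw [hP, coeff_X, if_pos rfl]
  | case3 =>
    constructor
    · intro i hi
      rw [hP]
      rcases i with _ | _ | _ | j
      · omega
      · omega
      · omega
      · norm_num [coeff_C, coeff_X, coeff_X_pow]
        omega
    · rw [hP]
      norm_num [coeff_C, coeff_X, coeff_X_pow]
  | case4 n ih2 ih1 ih0 =>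
    constructor
    · intro i hi
      rw [hP_coeff_rec]
      rw [ih2.1 (i - 1) (by omega), ih1.1 (i - 2) (by omega), ih1.1 (i - 1) (by omega),
        ih1.1 i (by omega), ih0.1 (i - 3) (by omega)]
      split_ifs <;> ring
    · rw [hP_coeff_rec]
      have t1 : 1 ≤ n + 3 := by omega
      have t2 : 2 ≤ n + 3 := by omega
      have t3 : 3 ≤ n + 3 := by omega
      rw [if_pos t1, if_pos t2, if_pos t1, if_pos t3]
      have e1 : n + 3 - 1 = n + 2 := by omega
      have e2 : n + 3 - 2 = n + 1 := by omega
      have e3 : n + 3 - 3 = n := by omega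
      rw [e1, e2, e3, ih2.2, ih1.2, ih0.2, ih1.1 (n + 2) (by omega), ih1.1 (n + 3) (by omega)]
      ring

lemma hP_natDegree_le (n : ℕ) : (hP n).natDegree ≤ n :=
  Polynomial.natDegree_le_iff_coeff_eq_zero.mpr (fun N hN => (hP_coeff_top n).1 N hN)

lemma aeval_hP : ∀ n, aeval ((1:ℤ[X]) + X ^ 3) (hP n) = E n := by
  intro n
  have cnum3 : (C (3:ℤ) : ℤ[X]) = 3 := by norm_num
  have cnum1 : (C (1:ℤ) : ℤ[X]) = 1 := by norm_num
  induction n using Stmt6.hP.induct with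
  | case1 =>
    rw [hP, map_one]
    have hpr1 : pr (1:ℤ[X]) = 1 := by
      have h0 : (1:ℤ[X]) = C 1 * X ^ 0 := by norm_num
      rw [h0, pr_CXpow, if_pos ⟨0, rfl⟩]
    unfold E
    norm_num [hpr1]
  | case2 =>
    rw [hP, aeval_X]
    have hE : ((1:ℤ[X]) + X) ^ (3 * 1) = C 1 * X ^ 0 + C 3 * X ^ 1 + C 3 * X ^ 2 + C 1 * X ^ 3 := by
      rw [cnum3, cnum1]; ring
    unfold E
    rw [hE, pr_add, pr_add, pr_add, pr_CXpow, pr_CXpow, pr_CXpow, pr_CXpow]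
    rw [if_pos (by norm_num), if_neg (by norm_num), if_neg (by norm_num), if_pos (by norm_num)]
    rw [cnum1]
    ring
  | case3 =>
    rw [hP]
    have hE : ((1:ℤ[X]) + X) ^ (3 * 2) = C 1 * X ^ 0 + C 6 * X ^ 1 + C 15 * X ^ 2 + C 20 * X ^ 3
        + C 15 * X ^ 4 + C 6 * X ^ 5 + C 1 * X ^ 6 := by
      rw [cnum1, show (C (6:ℤ) : ℤ[X]) = 6 from by norm_num,
        show (C (15:ℤ) : ℤ[X]) = 15 from by norm_num,
        show (C (20:ℤ) : ℤ[X]) = 20 from by norm_num]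
      ring
    unfold E
    rw [hE, pr_add, pr_add, pr_add, pr_add, pr_add, pr_add,
      pr_CXpow, pr_CXpow, pr_CXpow, pr_CXpow, pr_CXpow, pr_CXpow, pr_CXpow]
    rw [if_pos (by norm_num), if_neg (by norm_num), if_neg (by norm_num), if_pos (by norm_num),
      if_neg (by norm_num), if_neg (by norm_num), if_pos (by norm_num)]
    simp only [map_add, map_sub, map_mul, map_pow, aeval_X, aeval_C]
    rw [cnum1, show (C (20:ℤ) : ℤ[X]) = 20 from by norm_num]
    have : (algebraMap ℤ ℤ[X]) 18 = (18 : ℤ[X]) := by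
      simp [algebraMap_int_eq]
    rw [this]
    ring
  | case4 n ih2 ih1 ih0 =>
    rw [hP]
    simp only [map_add, map_sub, map_mul, map_pow, aeval_X, aeval_C]
    rw [ih2, ih1, ih0, E_rec]
    have h3 : (algebraMap ℤ ℤ[X]) 3 = (3 : ℤ[X]) := by simp [algebraMap_int_eq]
    have h27 : (algebraMap ℤ ℤ[X]) 27 = (27 : ℤ[X]) := by simp [algebraMap_int_eq]
    rw [h3, h27]
    ring

end Stmt6


namespace Stmt6

variable (V : ℕ → ℤ)

/-- the binomial-transformed sequence -/
def cseq (i : ℕ) : ℤ := Lam V ((1 + X ^ 3 : ℤ[X]) ^ i)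

lemma Lam_smul (a : ℤ) (p : ℤ[X]) : Lam V (a • p) = a * Lam V p := by
  have : a • p = C a * p := by rw [Polynomial.smul_eq_C_mul]
  rw [this, Lam_Cmul]

lemma Lam_aeval_hP (n : ℕ) :
    Lam V (aeval ((1:ℤ[X]) + X ^ 3) (hP n))
      = ∑ i ∈ Finset.range (n + 1), (hP n).coeff i * cseq V i := by
  rw [aeval_eq_sum_range' (lt_of_le_of_lt (hP_natDegree_le n) (Nat.lt_succ_self n)), Lam_sum]
  exact Finset.sum_congr rfl fun i _ => by rw [Lam_smul]; rfl

lemma hP_relation (hyp : ∀ n : ℕ, 0 < n → Lam V ((1 + X) ^ (3 * n)) = 0)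
    (n : ℕ) (hn : 0 < n) :
    ∑ i ∈ Finset.range (n + 1), (hP n).coeff i * cseq V i = 0 := by
  rw [← Lam_aeval_hP, aeval_hP]
  unfold E
  rw [Lam_pr]
  exact hyp n hn

lemma cseq_dvd (hyp : ∀ n : ℕ, 0 < n → Lam V ((1 + X) ^ (3 * n)) = 0) :
    ∀ i, (3:ℤ) ^ i ∣ cseq V i := by
  intro i
  induction i using Nat.strong_induction_on with
  | _ i ih =>
    rcases Nat.eq_zero_or_pos i with h0 | hpos
    · subst h0; rw [pow_zero]; exact one_dvd _
    · have hrel := hP_relation V hyp i hpos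
      rw [Finset.sum_range_succ, (hP_coeff_top i).2, one_mul] at hrel
      have hc : cseq V i = -∑ j ∈ Finset.range i, (hP i).coeff j * cseq V j := by
        linarith
      rw [hc]
      refine dvd_neg.mpr (Finset.dvd_sum fun j hj => ?_)
      have hj' : j < i := Finset.mem_range.mp hj
      have h1 : (3:ℤ) ^ (i - j) ∣ (hP i).coeff j := hP_coeff_dvd i j
      have h2 : (3:ℤ) ^ j ∣ cseq V j := ih j hj'
      have : (3:ℤ) ^ i = 3 ^ (i - j) * 3 ^ j := by
        rw [← pow_add]
        congr 1
        omega
      rw [this]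
      exact mul_dvd_mul h1 h2

lemma Lam_CXpow (a : ℤ) (i : ℕ) :
    Lam V (C a * X ^ i) = if 3 ∣ i then a * V (i / 3) else 0 := by
  rw [Lam_eq_range V _ (i + 1)
      (by
        have h1 : (C a * X ^ i : ℤ[X]).natDegree ≤ 0 + i := natDegree_mul_le.trans
          (by simp [natDegree_C, natDegree_X_pow])
        omega)]
  rw [Finset.sum_eq_single i]
  · rw [coeff_C_mul, coeff_X_pow, if_pos rfl, mul_one]
    split <;> ring
  · intro d _ hd
    rw [coeff_C_mul, coeff_X_pow, if_neg (fun hh => hd hh), mul_zero, zero_mul]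
  · intro hmem
    exact absurd (Finset.mem_range.mpr (Nat.lt_succ_self i)) hmem

lemma Lam_X3pow (r : ℕ) : Lam V (X ^ (3 * r)) = V r := by
  have h : (X ^ (3 * r) : ℤ[X]) = C 1 * X ^ (3 * r) := by rw [map_one, one_mul]
  rw [h, Lam_CXpow, if_pos ⟨r, rfl⟩, one_mul]
  congr 1
  omega

lemma cseq_inversion (r : ℕ) :
    V r = ∑ i ∈ Finset.range (r + 1),
      (-1:ℤ) ^ (i + r) * (r.choose i : ℤ) * cseq V i := by
  have hsub : (X ^ (3 * r) : ℤ[X]) = ((1 + X ^ 3) - 1) ^ r := by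
    rw [add_sub_cancel_left, ← pow_mul]
  have hexp := sub_pow ((1:ℤ[X]) + X ^ 3) 1 r
  have hterm : ∀ i, ((-1:ℤ[X]) ^ (i + r) * (1 + X ^ 3) ^ i * 1 ^ (r - i) * ((r.choose i : ℕ) : ℤ[X]))
      = C ((-1) ^ (i + r) * (r.choose i : ℤ)) * (1 + X ^ 3) ^ i := by
    intro i
    rw [one_pow, mul_one, map_mul, map_pow, map_neg, map_one]
    rw [show (C ((r.choose i : ℤ)) : ℤ[X]) = ((r.choose i : ℕ) : ℤ[X]) by push_cast; simp]
    ring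
  rw [← Lam_X3pow V r, hsub, hexp, Finset.sum_congr rfl (fun i _ => hterm i), Lam_sum]
  exact Finset.sum_congr rfl fun i _ => by rw [Lam_Cmul]; rfl

lemma v3_factorial_le {i : ℕ} (hi : 2 ≤ i) : (Nat.factorial i).factorization 3 ≤ i - 2 := by
  haveI : Fact (Nat.Prime 3) := ⟨by norm_num⟩
  rw [Nat.factorization_def _ (by norm_num)]
  rcases Nat.lt_or_ge i 4 with h4 | h4
  · interval_cases i
    · have h2 : Nat.factorial 2 = 2 := by norm_num [Nat.factorial]
      rw [h2, padicValNat.eq_zero_of_not_dvd (by norm_num)]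
    · have h6 : Nat.factorial 3 = 3 * 2 := by norm_num [Nat.factorial]
      rw [h6, padicValNat.mul (by norm_num) (by norm_num),
        padicValNat.self (by norm_num), padicValNat.eq_zero_of_not_dvd (by norm_num)]
  · have hleg := sub_one_mul_padicValNat_factorial (p := 3) i
    have h2v : 2 * padicValNat 3 (Nat.factorial i) ≤ i := by omega
    omega

lemma choose_diff_dvd {n m i k : ℕ} (hi2 : 2 ≤ i) (hik : i ≤ k)
    (hdvd : (3:ℤ) ^ (k - 1) ∣ (n:ℤ) - m) :
    (3:ℤ) ^ (k + 1 - i) ∣ (n.choose i : ℤ) - (m.choose i : ℤ) := by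
  have key : ((n:ℤ) - m) ∣ (((Nat.factorial i : ℕ) : ℤ) * ((n.choose i : ℤ) - (m.choose i : ℤ))) := by
    have h1 := Polynomial.sub_dvd_eval_sub (n:ℤ) (m:ℤ) (descPochhammer ℤ i)
    rw [descPochhammer_eval_eq_descFactorial, descPochhammer_eval_eq_descFactorial] at h1
    have e1 : (n.descFactorial i : ℤ) = ((Nat.factorial i : ℕ) : ℤ) * (n.choose i : ℤ) := by
      rw [← Nat.cast_mul, Nat.descFactorial_eq_factorial_mul_choose]
    have e2 : (m.descFactorial i : ℤ) = ((Nat.factorial i : ℕ) : ℤ) * (m.choose i : ℤ) := by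
      rw [← Nat.cast_mul, Nat.descFactorial_eq_factorial_mul_choose]
    rw [e1, e2] at h1
    have : ((Nat.factorial i : ℕ) : ℤ) * (n.choose i : ℤ) - ((Nat.factorial i : ℕ) : ℤ) * (m.choose i : ℤ)
        = ((Nat.factorial i : ℕ) : ℤ) * ((n.choose i : ℤ) - (m.choose i : ℤ)) := by ring
    rwa [this] at h1
  set w := (Nat.factorial i).factorization 3 with hw
  have hwle : w ≤ i - 2 := v3_factorial_le hi2
  have hfact : Nat.factorial i = 3 ^ w * (Nat.factorial i / 3 ^ w) := (Nat.ordProj_mul_ordCompl_eq_self (Nat.factorial i) 3).symm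
  have hu3 : ¬ (3 ∣ (Nat.factorial i / 3 ^ w)) := Nat.not_dvd_ordCompl (by norm_num) (Nat.factorial_ne_zero i)
  have hd1 : (3:ℤ) ^ (k - 1) ∣ ((Nat.factorial i : ℕ) : ℤ) * ((n.choose i : ℤ) - (m.choose i : ℤ)) :=
    dvd_trans hdvd key
  set u : ℤ := ((Nat.factorial i / 3 ^ w : ℕ) : ℤ) with hudef
  set Δ : ℤ := (n.choose i : ℤ) - (m.choose i : ℤ) with hD
  have hiu : ((Nat.factorial i : ℕ) : ℤ) = 3 ^ w * u := by
    rw [hudef]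
    exact_mod_cast congrArg (Nat.cast : ℕ → ℤ) hfact
  rw [hiu] at hd1
  have hsplit : (3:ℤ) ^ (k - 1) = 3 ^ w * 3 ^ (k - 1 - w) := by
    rw [← pow_add]
    congr 1
    omega
  rw [hsplit] at hd1
  have hw3 : (3:ℤ) ^ w ≠ 0 := pow_ne_zero _ (by norm_num)
  have hd2 : (3:ℤ) ^ (k - 1 - w) ∣ u * Δ := by
    have : (3:ℤ) ^ w * (3 ^ (k - 1 - w)) ∣ 3 ^ w * (u * Δ) := by
      have hre : (3:ℤ) ^ w * u * Δ = 3 ^ w * (u * Δ) := by ring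
      rwa [hre] at hd1
    exact (mul_dvd_mul_iff_left hw3).mp this
  have hcop : IsCoprime ((3:ℤ) ^ (k - 1 - w)) u := by
    refine IsCoprime.pow_left ?_
    rw [Int.isCoprime_iff_gcd_eq_one, hudef]
    rw [show ((3:ℤ)) = ((3:ℕ):ℤ) by norm_num, Int.gcd_natCast_natCast]
    exact (Nat.Prime.coprime_iff_not_dvd (by norm_num)).mpr hu3
  have hd3 : (3:ℤ) ^ (k - 1 - w) ∣ Δ := hcop.dvd_of_dvd_mul_left hd2
  exact dvd_trans (pow_dvd_pow 3 (by omega)) hd3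

end Stmt6

end Stmt6Aux

theorem stmt_6 (W : ℕ → ℤ) (hW0 : W 0 = 1)
    (hWrec : ∀ n : ℕ, 0 < n →
      ∑ m ∈ Finset.range (n + 1), ((3 * n).choose (3 * m) : ℤ) * W (3 * m) = 0)
    (n m k : ℕ) (hk : 0 < k) (h : 3 * n ≡ 3 * m [MOD 2 * 3 ^ k]) :
    W (3 * n) ≡ W (3 * m) [ZMOD 3 ^ (k + 1)] := by
  classical
  set V : ℕ → ℤ := fun j => W (3 * j) with hV
  have hyp : ∀ N : ℕ, 0 < N → Lam V ((1 + X) ^ (3 * N)) = 0 := by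
    intro N hN
    rw [Lam_one_add_X_pow]
    simpa [hV] using hWrec N hN
  have hc := Stmt6.cseq_dvd V hyp
  have hc1 : Stmt6.cseq V 1 = 0 := by
    have h1 := Stmt6.hP_relation V hyp 1 one_pos
    rw [Finset.sum_range_succ, Finset.sum_range_one] at h1
    simpa [Stmt6.hP, coeff_X] using h1
  -- divisibility facts from the hypothesis
  have hdvdNM : ((2 * 3 ^ k : ℕ) : ℤ) ∣ ((3 * m : ℕ) : ℤ) - ((3 * n : ℕ) : ℤ) := h.dvd
  have hdvdNM' : (2 * 3 ^ k : ℤ) ∣ 3 * ((m : ℤ) - n) := by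
    have e : ((3 * m : ℕ) : ℤ) - ((3 * n : ℕ) : ℤ) = 3 * ((m : ℤ) - n) := by push_cast; ring
    have e2 : ((2 * 3 ^ k : ℕ) : ℤ) = 2 * 3 ^ k := by push_cast; ring
    rw [e, e2] at hdvdNM
    exact hdvdNM
  have h3dvd : (3:ℤ) ^ (k - 1) ∣ (m : ℤ) - n := by
    have ha : (3:ℤ) ^ k ∣ 3 * ((m : ℤ) - n) :=
      dvd_trans ⟨2, by ring⟩ hdvdNM'
    have hb : (3:ℤ) * 3 ^ (k - 1) ∣ 3 * ((m : ℤ) - n) := by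
      have : (3:ℤ) ^ k = 3 * 3 ^ (k - 1) := by
        rw [← pow_succ']
        congr 1
        omega
      rwa [this] at ha
    exact (mul_dvd_mul_iff_left (by norm_num : (3:ℤ) ≠ 0)).mp hb
  have h2dvd : (2:ℤ) ∣ (m : ℤ) - n := by
    have ha : (2:ℤ) ∣ 3 * ((m : ℤ) - n) :=
      dvd_trans ⟨3 ^ k, by ring⟩ hdvdNM'
    have hcop : IsCoprime (2:ℤ) 3 := by
      rw [Int.isCoprime_iff_gcd_eq_one]
      decide
    exact hcop.dvd_of_dvd_mul_left ha
  have hpar : n % 2 = m % 2 := by omega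
  have hsign : ((-1:ℤ)) ^ n = (-1) ^ m := by
    rcases Nat.even_or_odd n with he | ho
    · have hm : Even m := by
        rw [Nat.even_iff] at he ⊢
        omega
      rw [he.neg_one_pow, hm.neg_one_pow]
    · have hm : Odd m := by
        rw [Nat.odd_iff] at ho ⊢
        omega
      rw [ho.neg_one_pow, hm.neg_one_pow]
  set R := max n m + 1 with hR
  have hinv : ∀ r : ℕ, r < R → V r = ∑ i ∈ Finset.range R,
      (-1:ℤ) ^ (i + r) * (r.choose i : ℤ) * Stmt6.cseq V i := by
    intro r hr
    rw [Stmt6.cseq_inversion V r]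
    refine Finset.sum_subset (Finset.range_subset_range.mpr (by omega)) (fun i hiR hir => ?_) 
    have : r < i := by
      simp only [Finset.mem_range] at hir
      omega
    rw [Nat.choose_eq_zero_of_lt this]
    push_cast
    ring
  have hdiff : V n - V m = ∑ i ∈ Finset.range R,
      ((-1:ℤ) ^ (i + n) * ((n.choose i : ℤ) - (m.choose i : ℤ))) * Stmt6.cseq V i := by
    rw [hinv n (by omega), hinv m (by omega), ← Finset.sum_sub_distrib]
    refine Finset.sum_congr rfl fun i _ => ?_
    rw [pow_add, pow_add, hsign]
    ring
  have hdvdall : (3:ℤ) ^ (k + 1) ∣ V n - V m := by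
    rw [hdiff]
    refine Finset.dvd_sum fun i _ => ?_
    rcases Nat.eq_zero_or_pos i with h0 | h1
    · subst h0
      simp
    · rcases Nat.lt_or_ge i 2 with hlt2 | hge2
      · have : i = 1 := by omega
        subst this
        rw [hc1, mul_zero]
        exact dvd_zero _
      · rcases le_or_gt i k with hik | hki
        · have h3dvd' : (3:ℤ) ^ (k - 1) ∣ (n : ℤ) - m := by
            have : (n:ℤ) - m = -((m:ℤ) - n) := by ring
            rw [this]
            exact dvd_neg.mpr h3dvd
          have hΔ := Stmt6.choose_diff_dvd (n := n) (m := m) hge2 hik h3dvd' 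
          have hci : (3:ℤ) ^ i ∣ Stmt6.cseq V i := hc i
          have hsplit : (3:ℤ) ^ (k + 1) = 3 ^ (k + 1 - i) * 3 ^ i := by
            rw [← pow_add]
            congr 1
            omega
          have hmul : (3:ℤ) ^ (k + 1) ∣
              ((n.choose i : ℤ) - (m.choose i : ℤ)) * Stmt6.cseq V i := by
            rw [hsplit]
            exact mul_dvd_mul hΔ hci
          have e : ((-1:ℤ) ^ (i + n) * ((n.choose i : ℤ) - (m.choose i : ℤ)))
              * Stmt6.cseq V i
              = (-1:ℤ) ^ (i + n) * (((n.choose i : ℤ) - (m.choose i : ℤ)) * Stmt6.cseq V i) := by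
            ring
          rw [e]
          exact Dvd.dvd.mul_left hmul _
        · have hci : (3:ℤ) ^ (k + 1) ∣ Stmt6.cseq V i :=
            dvd_trans (pow_dvd_pow 3 (by omega)) (hc i)
          exact Dvd.dvd.mul_left hci _
  have hfin : ((3:ℤ) ^ (k + 1)) ∣ W (3 * m) - W (3 * n) := by
    have : W (3 * m) - W (3 * n) = -(V n - V m) := by
      simp [hV]
    rw [this]
    exact dvd_neg.mpr hdvdall
  exact Int.ModEq.symm ((Int.modEq_iff_dvd).mpr (by exact_mod_cast hfin)).symm
end

section
/- For any positive integer r and any nonnegative integer n, E_{4n + 2^{r+1}}^{(4,0)} ≡ E_{4n}^{(4,0)} mod 2^r. -/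
open scoped BigOperators
open Finset

namespace Stmt7Aux


lemma sum_mul4 {M : Type*} [AddCommMonoid M] (m : ℕ) (f : ℕ → M) :
    ∑ s ∈ (Finset.range (4*m+1)).filter (fun s => 4 ∣ s), f s
      = ∑ j ∈ Finset.range (m+1), f (4*j) := by
  refine Finset.sum_nbij' (fun s => s / 4) (fun j => 4 * j) ?_ ?_ ?_ ?_ ?_
  · intro a ha; simp only [Finset.mem_filter, Finset.mem_range] at *; omega
  · intro a ha; simp only [Finset.mem_filter, Finset.mem_range] at *; omega
  · intro a ha; simp only [Finset.mem_filter, Finset.mem_range] at ha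
    omega
  · intro a ha; omega
  · intro a ha
    simp only [Finset.mem_filter, Finset.mem_range] at ha
    rw [Nat.mul_div_cancel' ha.2]

lemma pow_mod4 (x : ℂ) (hx : x^4 = 1) (s : ℕ) : x^s = x^(s % 4) := by
  conv_lhs => rw [← Nat.div_add_mod s 4]
  rw [pow_add, pow_mul, hx, one_pow, one_mul]

lemma I4 : (Complex.I)^4 = 1 := by
  have : (Complex.I)^4 = (Complex.I^2)^2 := by ring
  rw [this, Complex.I_sq]; norm_num

lemma quad_filter (s : ℕ) :
    Complex.I^s + (-Complex.I)^s + (1:ℂ)^s + (-1:ℂ)^s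
      = if 4 ∣ s then 4 else 0 := by
  have hnI : (-Complex.I)^4 = 1 := by
    rw [show (-Complex.I)^4 = (Complex.I)^4 by ring, I4]
  have hn1 : (-1:ℂ)^4 = 1 := by rw [show ((-1:ℂ))^4 = 1^4 by ring, one_pow]
  rw [pow_mod4 _ I4, pow_mod4 _ hnI, pow_mod4 _ hn1, one_pow]
  have h4 : s % 4 < 4 := Nat.mod_lt _ (by norm_num)
  have hdvd : 4 ∣ s ↔ s % 4 = 0 := Nat.dvd_iff_mod_eq_zero
  rcases (by omega : s % 4 = 0 ∨ s % 4 = 1 ∨ s % 4 = 2 ∨ s % 4 = 3) with h | h | h | h <;>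
    rw [h] <;> simp [hdvd, h, pow_succ, Complex.I_sq] <;> ring_nf <;>
    simp [Complex.I_sq] <;> ring

lemma U_val (r : ℕ) (hr : 2 ≤ r) :
    ∑ j ∈ Finset.range (2^(r-1)+1), Nat.choose (2^(r+1)) (4*j)
      = 2^(2^(r+1)-2) + 2^(2^r-1) := by
  set N := 2^(r+1) with hN
  have hNpos : 0 < N := by positivity
  have h4k : 4 * 2^(r-1) = N := by
    rw [hN, show r+1 = 2 + (r-1) by omega, pow_add]; norm_num
  have expand : ∀ x : ℂ, (x+1)^N = ∑ s ∈ Finset.range (N+1), (N.choose s : ℂ) * x^s := by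
    intro x; rw [add_pow]
    exact Finset.sum_congr rfl fun s _ => by ring
  have hA : ((Complex.I+1)^N + (-Complex.I+1)^N + ((1:ℂ)+1)^N + ((-1:ℂ)+1)^N
      = ∑ s ∈ Finset.range (N+1), (N.choose s : ℂ) *
          (Complex.I^s + (-Complex.I)^s + (1:ℂ)^s + (-1:ℂ)^s)) := by
    rw [expand, expand, expand, expand, ← Finset.sum_add_distrib,
      ← Finset.sum_add_distrib, ← Finset.sum_add_distrib]
    exact Finset.sum_congr rfl fun s _ => by ring
  have hfilter : ∑ s ∈ Finset.range (N+1), (N.choose s : ℂ) *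
          (Complex.I^s + (-Complex.I)^s + (1:ℂ)^s + (-1:ℂ)^s)
      = 4 * ∑ j ∈ Finset.range (2^(r-1)+1), (N.choose (4*j) : ℂ) := by
    rw [← Finset.sum_filter_add_sum_filter_not (Finset.range (N+1)) (fun s => 4 ∣ s)]
    have hz : ∑ s ∈ (Finset.range (N+1)).filter (fun s => ¬ 4 ∣ s),
        (N.choose s : ℂ) * (Complex.I^s + (-Complex.I)^s + (1:ℂ)^s + (-1:ℂ)^s) = 0 := by
      apply Finset.sum_eq_zero
      intro s hs
      rw [Finset.mem_filter] at hs
      rw [quad_filter, if_neg hs.2, mul_zero]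
    rw [hz, add_zero]
    have : ∀ s ∈ (Finset.range (N+1)).filter (fun s => 4 ∣ s),
        (N.choose s : ℂ) * (Complex.I^s + (-Complex.I)^s + (1:ℂ)^s + (-1:ℂ)^s)
          = (N.choose s : ℂ) * 4 := by
      intro s hs
      rw [Finset.mem_filter] at hs
      rw [quad_filter, if_pos hs.2]
    rw [Finset.sum_congr rfl this]
    have hrange : N + 1 = 4 * 2^(r-1) + 1 := by omega
    rw [hrange]
    rw [sum_mul4 (2^(r-1)) (fun s => (N.choose s : ℂ) * 4)]
    rw [Finset.mul_sum]
    exact Finset.sum_congr rfl fun j _ => by ring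
  -- compute LHS
  have hN2 : N = 2 * 2^r := by rw [hN, pow_succ]; ring
  have hIpow : Complex.I^(2^r) = 1 := by
    rw [show (2:ℕ)^r = 4 * 2^(r-2) by rw [show r = 2 + (r-2) by omega, pow_add]; norm_num]
    rw [pow_mul, I4, one_pow]
  have heven : Even ((2:ℕ)^r) := ⟨2^(r-1), by rw [← two_mul, ← pow_succ']; congr 1; omega⟩
  have h1 : (Complex.I+1)^N = 2^(2^r) := by
    rw [hN2, pow_mul, show (Complex.I+1)^2 = 2*Complex.I by
      linear_combination Complex.I_sq, mul_pow, hIpow, mul_one]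
  have h2 : (-Complex.I+1)^N = 2^(2^r) := by
    rw [hN2, pow_mul, show (-Complex.I+1)^2 = -(2*Complex.I) by
      linear_combination Complex.I_sq, Even.neg_pow heven, mul_pow, hIpow, mul_one]
  have h3 : ((1:ℂ)+1)^N = 2^N := by norm_num
  have h4 : ((-1:ℂ)+1)^N = 0 := by
    rw [neg_add_cancel]; exact zero_pow (by omega)
  have key : (4:ℂ) * ∑ j ∈ Finset.range (2^(r-1)+1), (N.choose (4*j) : ℂ)
      = 4 * (2^(N-2) + 2^(2^r-1)) := by
    rw [← hfilter, ← hA, h1, h2, h3, h4]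
    have e1 : (2:ℂ)^N = 2^(N-2) * 4 := by
      conv_lhs => rw [show N = (N-2)+2 by omega]
      rw [pow_add]; norm_num
    have e2 : (2:ℂ)^(2^r) = 2^(2^r-1) * 2 := by
      conv_lhs => rw [show (2:ℕ)^r = (2^r-1)+1 by have := Nat.one_le_two_pow (n := r); omega]
      rw [pow_add, pow_one]
    rw [e1, e2]; ring
  have key2 : (↑(∑ j ∈ Finset.range (2^(r-1)+1), N.choose (4*j)) : ℂ)
      = ((2^(N-2) + 2^(2^r-1) : ℕ) : ℂ) := by
    push_cast
    exact mul_left_cancel₀ (by norm_num : (4:ℂ) ≠ 0) key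
  exact_mod_cast key2



lemma choose_mul_dvd (r s : ℕ) (hs : 0 < s) :
    2 ^ (r+1) ∣ Nat.choose (2^(r+1)) s * s := by
  obtain ⟨n, hn⟩ : ∃ n, 2^(r+1) = n + 1 := ⟨2^(r+1) - 1, by
    have : 0 < 2^(r+1) := by positivity
    omega⟩
  obtain ⟨k, hk⟩ : ∃ k, s = k + 1 := ⟨s - 1, by omega⟩
  rw [hn, hk, ← Nat.add_one_mul_choose_eq]
  exact Dvd.intro _ rfl

lemma cancel_pow (m a u C : ℕ) (hu : ¬ 2 ∣ u) (ha : a ≤ m)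
    (h : 2^m ∣ C * (2^a * u)) : 2^(m-a) ∣ C := by
  have hco : Nat.Coprime (2^m) u :=
    Nat.Coprime.pow_left _ ((Nat.Prime.coprime_iff_not_dvd Nat.prime_two).mpr hu)
  have h2 : 2^m ∣ C * 2^a := by
    refine hco.dvd_of_dvd_mul_right ?_
    rwa [← mul_assoc] at h
  have hsplit : 2^m = 2^(m-a) * 2^a := by
    rw [← pow_add]; congr 1; omega
  rw [hsplit] at h2
  exact (Nat.mul_dvd_mul_iff_right (by positivity : 0 < 2^a)).mp h2

lemma dvd_choose_not4 (r s : ℕ) (hs : 0 < s) (h4 : ¬ 4 ∣ s) :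
    2^r ∣ Nat.choose (2^(r+1)) s := by
  have key := choose_mul_dvd r s hs
  by_cases h2 : 2 ∣ s
  · obtain ⟨u, rfl⟩ := h2
    have hu : ¬ 2 ∣ u := by omega
    have := cancel_pow (r+1) 1 u _ hu (by omega) (by simpa [pow_one] using key)
    simpa using this
  · have := cancel_pow (r+1) 0 s _ h2 (by omega) (by simpa using key)
    simp only [Nat.sub_zero] at this
    exact dvd_trans (pow_dvd_pow 2 (by omega)) this

lemma dvd_choose4 (r t u : ℕ) (hu : ¬ 2 ∣ u) :
    2^r ∣ Nat.choose (2^(r+1)) (4*(2^t*u)) * 2^(t+1) := by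
  by_cases hrt : r ≤ t+1
  · exact dvd_mul_of_dvd_right (pow_dvd_pow 2 hrt) _
  · push_neg at hrt
    have hupos : 0 < u := by omega
    have key := choose_mul_dvd r (4*(2^t*u)) (by positivity)
    have harg : 4*(2^t*u) = 2^(t+2) * u := by ring
    rw [harg] at key
    have hC := cancel_pow (r+1) (t+2) u _ hu (by omega) key
    have h2 : 2^r = 2^(r+1-(t+2)) * 2^(t+1) := by rw [← pow_add]; congr 1; omega
    rw [harg, h2]
    exact mul_dvd_mul_right hC _

lemma triangle {M : Type*} [AddCommMonoid M] (N : ℕ) (F : ℕ → ℕ → M) :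
    ∑ m ∈ range N, ∑ j ∈ range (m+1), F j m
      = ∑ j ∈ range N, ∑ i ∈ range (N - j), F j (j + i) := by
  have step1 : ∀ m ∈ range N, ∑ j ∈ range (m+1), F j m
      = ∑ j ∈ range N, if j ≤ m then F j m else 0 := by
    intro m hm
    rw [Finset.mem_range] at hm
    rw [← Finset.sum_subset (Finset.range_subset_range.mpr (by omega : m+1 ≤ N))]
    · exact Finset.sum_congr rfl fun j hj => by
        rw [Finset.mem_range] at hj; rw [if_pos (by omega)]
    · intro j hj hj2
      rw [Finset.mem_range] at hj
      rw [Finset.mem_range] at hj2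
      rw [if_neg (by omega)]
  rw [Finset.sum_congr rfl step1, Finset.sum_comm]
  refine Finset.sum_congr rfl fun j hj => ?_
  rw [Finset.mem_range] at hj
  rw [Finset.range_eq_Ico, ← Finset.sum_Ico_consecutive _ (Nat.zero_le j) (le_of_lt hj)]
  have hzero : ∑ m ∈ Finset.Ico 0 j, (if j ≤ m then F j m else 0) = 0 := by
    apply Finset.sum_eq_zero
    intro m hm
    rw [Finset.mem_Ico] at hm
    rw [if_neg (by omega)]
  rw [hzero, zero_add, Finset.sum_Ico_eq_sum_range]
  refine Finset.sum_congr rfl fun i hi => ?_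
  rw [Finset.mem_range] at hi
  rw [if_pos (by omega)]









lemma U_dvd (r : ℕ) (hr : 0 < r) :
    2^r ∣ ∑ j ∈ Finset.range (2^(r-1)+1), Nat.choose (2^(r+1)) (4*j) := by
  rcases eq_or_lt_of_le (show 1 ≤ r from hr) with h1 | h2
  · simp only [← h1]
    decide
  · rw [U_val r h2]
    have ha : r ≤ 2^(r+1) - 2 := by
      have : r+1 < 2^(r+1) := Nat.lt_two_pow_self; omega
    have hb : r ≤ 2^r - 1 := by
      have : r < 2^r := Nat.lt_two_pow_self; omega
    exact dvd_add (pow_dvd_pow 2 ha) (pow_dvd_pow 2 hb)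

lemma vandermonde_mod (r n m : ℕ) :
    (2^r : ℤ) ∣ ((2^(r+1) + 4*n).choose (4*m) : ℤ)
      - ∑ j ∈ Finset.range (m+1),
          ((2^(r+1)).choose (4*j) : ℤ) * ((4*n).choose (4*(m-j)) : ℤ) := by
  rw [Nat.add_choose_eq, Finset.Nat.sum_antidiagonal_eq_sum_range_succ_mk]
  have hsplit := Finset.sum_filter_add_sum_filter_not (Finset.range (4*m+1))
    (fun p => 4 ∣ p)
    (fun p => (((2^(r+1)).choose p : ℤ) * ((4*n).choose (4*m - p) : ℤ)))
  have h1 : ∑ p ∈ (Finset.range (4*m+1)).filter (fun p => 4 ∣ p),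
      (((2^(r+1)).choose p : ℤ) * ((4*n).choose (4*m - p) : ℤ))
      = ∑ j ∈ Finset.range (m+1),
          ((2^(r+1)).choose (4*j) : ℤ) * ((4*n).choose (4*(m-j)) : ℤ) := by
    refine (sum_mul4 m (fun p => (((2^(r+1)).choose p : ℤ) * ((4*n).choose (4*m - p) : ℤ)))).trans ?_
    exact Finset.sum_congr rfl fun j _ => by
      rw [show 4*m - 4*j = 4*(m-j) by omega]
  push_cast
  rw [← hsplit, h1, add_sub_cancel_left]
  apply Finset.dvd_sum
  intro p hp
  rw [Finset.mem_filter, Finset.mem_range] at hp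
  have hppos : 0 < p := by
    rcases Nat.eq_zero_or_pos p with h | h
    · exact absurd (h ▸ dvd_zero 4) hp.2
    · exact h
  refine dvd_mul_of_dvd_left ?_ _
  exact_mod_cast Int.natCast_dvd_natCast.mpr (dvd_choose_not4 r p hppos hp.2)











lemma key (E : ℕ → ℤ)
    (hrec : ∀ n : ℕ, 0 < n →
      ∑ m ∈ Finset.range (n + 1), ((4 * n).choose (4 * m) : ℤ) * E (4 * m) = 0) :
    ∀ r, 0 < r → ∀ n, (2^r : ℤ) ∣ E (4*(n + 2^(r-1))) - E (4*n) := by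
  intro r
  induction r using Nat.strong_induction_on with
  | _ r IHr =>
  intro hr
  have Hiter : ∀ s, 0 < s → s < r → ∀ q m, (2^s:ℤ) ∣ E (4*(m + 2^(s-1)*q)) - E (4*m) := by
    intro s hs hsr q
    induction q with
    | zero => intro m; simp
    | succ q ihq =>
      intro m
      have h1 := ihq m
      have h2 := IHr s hsr hs (m + 2^(s-1)*q)
      rw [show m + 2^(s-1)*(q+1) = (m + 2^(s-1)*q) + 2^(s-1) by ring]
      simpa using dvd_add h2 h1
  intro n
  induction n using Nat.strong_induction_on with
  | _ n IHn =>
  have hkpos : 0 < 2^(r-1) := by positivity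
  set k := 2^(r-1) with hk
  have hk4 : 4 * k = 2^(r+1) := by
    rw [hk, show r+1 = 2 + (r-1) by omega, pow_add]; norm_num
  -- the exact recurrence at n + k
  have L0 : ∑ m ∈ Finset.range (n+k+1), ((4*(n+k)).choose (4*m) : ℤ) * E (4*m) = 0 :=
    hrec (n+k) (by omega)
  -- abbreviations
  set c : ℕ → ℤ := fun j => ((2^(r+1)).choose (4*j) : ℤ) with hc
  set S : ℕ → ℤ := fun j => ∑ i ∈ Finset.range (n+1),
      ((4*n).choose (4*i) : ℤ) * E (4*(j+i)) with hS
  -- Step A: congruence to the double sum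
  have hA : (2^r : ℤ) ∣
      (∑ m ∈ Finset.range (n+k+1), ((4*(n+k)).choose (4*m) : ℤ) * E (4*m))
      - ∑ m ∈ Finset.range (n+k+1),
          (∑ j ∈ Finset.range (m+1), c j * ((4*n).choose (4*(m-j)) : ℤ)) * E (4*m) := by
    rw [← Finset.sum_sub_distrib]
    apply Finset.dvd_sum
    intro m hm
    rw [← sub_mul]
    apply Dvd.dvd.mul_right
    have := vandermonde_mod r n m
    rwa [show 2^(r+1) + 4*n = 4*(n+k) by omega] at this
  -- Step B : double sum equals ∑_{j ≤ k} c j * S j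
  have hB : ∑ m ∈ Finset.range (n+k+1),
        (∑ j ∈ Finset.range (m+1), c j * ((4*n).choose (4*(m-j)) : ℤ)) * E (4*m)
      = ∑ j ∈ Finset.range (k+1), c j * S j := by
    have b1 : ∀ m, (∑ j ∈ Finset.range (m+1), c j * ((4*n).choose (4*(m-j)) : ℤ)) * E (4*m)
        = ∑ j ∈ Finset.range (m+1), c j * ((4*n).choose (4*(m-j)) : ℤ) * E (4*m) :=
      fun m => Finset.sum_mul _ _ _
    calc ∑ m ∈ Finset.range (n+k+1),
        (∑ j ∈ Finset.range (m+1), c j * ((4*n).choose (4*(m-j)) : ℤ)) * E (4*m)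
        = ∑ m ∈ Finset.range (n+k+1), ∑ j ∈ Finset.range (m+1),
            c j * ((4*n).choose (4*(m-j)) : ℤ) * E (4*m) :=
          Finset.sum_congr rfl fun m _ => b1 m
      _ = ∑ j ∈ Finset.range (n+k+1), ∑ i ∈ Finset.range (n+k+1-j),
            c j * ((4*n).choose (4*((j+i)-j)) : ℤ) * E (4*(j+i)) :=
          triangle (n+k+1) (fun j m => c j * ((4*n).choose (4*(m-j)) : ℤ) * E (4*m))
      _ = ∑ j ∈ Finset.range (n+k+1), c j * ∑ i ∈ Finset.range (n+k+1-j),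
            ((4*n).choose (4*i) : ℤ) * E (4*(j+i)) := by
          refine Finset.sum_congr rfl fun j _ => ?_
          rw [Finset.mul_sum]
          refine Finset.sum_congr rfl fun i _ => ?_
          rw [show (j+i)-j = i by omega, mul_assoc]
      _ = ∑ j ∈ Finset.range (k+1), c j * ∑ i ∈ Finset.range (n+k+1-j),
            ((4*n).choose (4*i) : ℤ) * E (4*(j+i)) := by
          symm
          apply Finset.sum_subset (Finset.range_subset_range.mpr (by omega : k+1 ≤ n+k+1))
          intro j hj hj2
          rw [Finset.mem_range] at hj hj2
          have : (2^(r+1)).choose (4*j) = 0 := by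
            apply Nat.choose_eq_zero_of_lt
            omega
          rw [hc]
          simp [this]
      _ = ∑ j ∈ Finset.range (k+1), c j * S j := by
          refine Finset.sum_congr rfl fun j hj => ?_
          rw [Finset.mem_range] at hj
          congr 1
          rw [hS]
          symm
          apply Finset.sum_subset (Finset.range_subset_range.mpr (by omega : n+1 ≤ n+k+1-j))
          intro i hi hi2
          rw [Finset.mem_range] at hi hi2
          have : (4*n).choose (4*i) = 0 := Nat.choose_eq_zero_of_lt (by omega)
          simp [this]
  -- middle terms
  have hmid : ∀ j ∈ Finset.range k, (2^r : ℤ) ∣ c j * S j - c j * S 0 := by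
    intro j hj
    rw [Finset.mem_range] at hj
    rcases Nat.eq_zero_or_pos j with rfl | hjpos
    · simp
    · set t := (Nat.factorization j) 2 with ht
      have hj0 : j ≠ 0 := by omega
      have hord : 2^t * (j / 2^t) = j := Nat.ordProj_mul_ordCompl_eq_self j 2
      have hu : ¬ 2 ∣ (j / 2^t) := Nat.not_dvd_ordCompl Nat.prime_two hj0
      have h2tle : 2^t ≤ j := Nat.ordProj_le 2 hj0
      have htlt : t < r - 1 := by
        by_contra hcon
        push_neg at hcon
        have : 2^(r-1) ≤ 2^t := Nat.pow_le_pow_right (by norm_num) hcon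
        omega
      have hdiff : (2^(t+1) : ℤ) ∣ S j - S 0 := by
        rw [hS]
        simp only []
        rw [← Finset.sum_sub_distrib]
        apply Finset.dvd_sum
        intro i hi
        rw [← mul_sub]
        apply Dvd.dvd.mul_left
        have := Hiter (t+1) (by omega) (by omega) (j / 2^t) i
        simp only [Nat.add_sub_cancel] at this
        rw [hord, show i + j = j + i by omega] at this
        simpa using this
      obtain ⟨x, hx⟩ := hdiff
      rw [← mul_sub, hx, ← mul_assoc]
      apply Dvd.dvd.mul_right
      have hdc := dvd_choose4 r t (j / 2^t) hu
      rw [hord] at hdc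
      have : ((2^r : ℕ) : ℤ) ∣ (((2^(r+1)).choose (4*j) * 2^(t+1) : ℕ) : ℤ) :=
        Int.natCast_dvd_natCast.mpr hdc
      rw [hc]
      push_cast at this ⊢
      exact this
  -- last term
  have hW : (2^r:ℤ) ∣ ∑ i ∈ Finset.range n,
      (((4*n).choose (4*i):ℤ) * E (4*(k+i)) - ((4*n).choose (4*i):ℤ) * E (4*i)) := by
    apply Finset.dvd_sum
    intro i hi
    rw [Finset.mem_range] at hi
    rw [← mul_sub]
    apply Dvd.dvd.mul_left
    have := IHn i hi
    rwa [show i + k = k + i by omega] at this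
  have hlast : (2^r : ℤ) ∣ S k - S 0 - (E (4*(n+k)) - E (4*n)) := by
    rw [hS]
    simp only []
    rw [← Finset.sum_sub_distrib, Finset.sum_range_succ]
    simp only [Nat.zero_add, Nat.choose_self, Nat.cast_one, one_mul]
    rw [show k + n = n + k by omega, add_sub_cancel_right]
    exact hW
  -- sum of c over range (k+1)
  have hU : (2^r : ℤ) ∣ ∑ j ∈ Finset.range (k+1), c j := by
    have := U_dvd r hr
    rw [← hk] at this
    have h2 : ((2^r : ℕ) : ℤ) ∣ ((∑ j ∈ Finset.range (k+1), (2^(r+1)).choose (4*j) : ℕ) : ℤ) :=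
      Int.natCast_dvd_natCast.mpr this
    push_cast at h2
    exact h2
  -- assemble
  have hck : c k = 1 := by rw [hc]; simp only []; rw [hk4]; simp
  have hsum1 : (2^r : ℤ) ∣ ∑ j ∈ Finset.range k, (c j * S j - c j * S 0) :=
    Finset.dvd_sum hmid
  have hsplit : ∑ j ∈ Finset.range (k+1), c j * S j
      = ∑ j ∈ Finset.range k, c j * S j + S k := by
    rw [Finset.sum_range_succ, hck, one_mul]
  have hsplit2 : ∑ j ∈ Finset.range (k+1), c j
      = ∑ j ∈ Finset.range k, c j + 1 := by
    rw [Finset.sum_range_succ, hck]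
  have hU2 : (2^r : ℤ) ∣ (∑ j ∈ Finset.range k, c j + 1) * S 0 := by
    rw [← hsplit2]; exact Dvd.dvd.mul_right hU _
  have hfinal : (2^r : ℤ) ∣ E (4*(n+k)) - E (4*n) := by
    have e1 : E (4*(n+k)) - E (4*n)
        = -((∑ m ∈ Finset.range (n+k+1), ((4*(n+k)).choose (4*m) : ℤ) * E (4*m))
              - ∑ m ∈ Finset.range (n+k+1),
                  (∑ j ∈ Finset.range (m+1), c j * ((4*n).choose (4*(m-j)) : ℤ)) * E (4*m))
          - (∑ j ∈ Finset.range k, (c j * S j - c j * S 0))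
          - (S k - S 0 - (E (4*(n+k)) - E (4*n)))
          - (∑ j ∈ Finset.range k, c j + 1) * S 0
          + (∑ m ∈ Finset.range (n+k+1), ((4*(n+k)).choose (4*m) : ℤ) * E (4*m)) := by
      rw [hB, hsplit, Finset.sum_sub_distrib, ← Finset.sum_mul]
      ring
    rw [L0] at hA
    rw [e1, L0, add_zero]
    exact dvd_sub (dvd_sub (dvd_sub (dvd_neg.mpr hA) hsum1) hlast) hU2
  exact hfinal


end Stmt7Aux

theorem stmt_7 (E : ℕ → ℤ) (hE0 : E 0 = 1)
    (hErec : ∀ n : ℕ, 0 < n →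
      ∑ m ∈ Finset.range (n + 1), ((4 * n).choose (4 * m) : ℤ) * E (4 * m) = 0)
    (r : ℕ) (hr : 0 < r) (n : ℕ) :
    E (4 * n + 2 ^ (r + 1)) ≡ E (4 * n) [ZMOD 2 ^ r] := by
  have hk := Stmt7Aux.key E hErec r hr n
  have h4k : 4 * 2^(r-1) = 2^(r+1) := by
    rw [show r+1 = 2 + (r-1) by omega, pow_add]; norm_num
  rw [show 4*n + 2^(r+1) = 4*(n + 2^(r-1)) by omega]
  exact Int.ModEq.symm (Int.modEq_iff_dvd.mpr hk)
end

section
/- For any even positive integer m ≥ 4, the sum Σ_{l=1}^{m/2} C(2m, 4l) · 2^{v_2(2l)} is congruent to 0 modulo 2^{v_2(2m)}. -/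
open scoped BigOperators

open Finset

/-- Each term of the sum is `2 ^ (v₂ m)` times a number congruent mod 2 to
`(2m-1).choose (4l-1)`. -/
private lemma aux_term (m l : ℕ) (hm : 0 < m) (hl : 0 < l) :
    ∃ t, (2 * m).choose (4 * l) * 2 ^ (padicValNat 2 (2 * l)) = 2 ^ (padicValNat 2 m) * t ∧
      (t : ZMod 2) = ((2 * m - 1).choose (4 * l - 1) : ZMod 2) := by
  have hm0 : m ≠ 0 := hm.ne'
  have hl0 : l ≠ 0 := hl.ne'
  set a := padicValNat 2 m with ha
  set b := padicValNat 2 l with hb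
  set C := (2 * m).choose (4 * l) with hC
  set C' := (2 * m - 1).choose (4 * l - 1) with hC'
  -- v₂ (2 l) = 1 + b
  have hvl : padicValNat 2 (2 * l) = 1 + b := by
    rw [padicValNat.mul (p := 2) two_ne_zero hl0, padicValNat.self one_lt_two]
  -- odd parts
  set u := m / 2 ^ a with hu
  set w := l / 2 ^ b with hw
  have hmu : 2 ^ a * u = m := Nat.mul_div_cancel' pow_padicValNat_dvd
  have hlw : 2 ^ b * w = l := Nat.mul_div_cancel' pow_padicValNat_dvd
  have hou : Odd u := by
    have h := Nat.not_dvd_ordCompl Nat.prime_two hm0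
    rw [Nat.factorization_def m Nat.prime_two] at h
    exact Nat.not_even_iff_odd.mp fun he => h he.two_dvd
  have how : Odd w := by
    have h := Nat.not_dvd_ordCompl Nat.prime_two hl0
    rw [Nat.factorization_def l Nat.prime_two] at h
    exact Nat.not_even_iff_odd.mp fun he => h he.two_dvd
  have huz : (u : ZMod 2) = 1 := by
    rw [← ZMod.natCast_mod u 2, Nat.odd_iff.mp hou, Nat.cast_one]
  have hwz : (w : ZMod 2) = 1 := by
    rw [← ZMod.natCast_mod w 2, Nat.odd_iff.mp how, Nat.cast_one]
  -- the basic identity : 2 m * C' = C * (4 l)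
  have id1 : 2 * m * C' = C * (4 * l) := by
    have h1 : 2 * m - 1 + 1 = 2 * m := by omega
    have h2 : 4 * l - 1 + 1 = 4 * l := by omega
    have := Nat.add_one_mul_choose_eq (2 * m - 1) (4 * l - 1)
    rw [h1, h2] at this
    rw [hC, hC']
    exact this
  have eq2 : 2 ^ (a + 1) * (u * C') = 2 ^ (b + 2) * (w * C) := by
    have h1 : 2 ^ (a + 1) * (u * C') = 2 * (2 ^ a * u) * C' := by ring
    have h2 : 2 ^ (b + 2) * (w * C) = C * (4 * (2 ^ b * w)) := by ring
    rw [h1, h2, hmu, hlw, id1]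
  rcases le_or_gt a b with hab | hab
  · -- b ≥ a : everything is even
    refine ⟨C * 2 ^ (b + 1 - a), ?_, ?_⟩
    · rw [hvl]
      have : 2 ^ (1 + b) = 2 ^ a * 2 ^ (b + 1 - a) := by
        rw [← pow_add]; congr 1; omega
      rw [this]; ring
    · -- both sides are 0 mod 2
      have e1 : (C' : ZMod 2) = 0 := by
        have hpow : (2 : ℕ) ^ (b + 2) = 2 ^ (a + 1) * 2 ^ (b + 1 - a) := by
          rw [← pow_add]; congr 1; omega
        have hcancel : 2 ^ (a + 1) * (u * C') = 2 ^ (a + 1) * (2 ^ (b + 1 - a) * (w * C)) := by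
          rw [eq2, hpow]; ring
        have := Nat.eq_of_mul_eq_mul_left (pow_pos (by norm_num) _) hcancel
        have h2 : (↑(u * C') : ZMod 2) = ↑(2 ^ (b + 1 - a) * (w * C)) := by rw [this]
        push_cast at h2
        rw [huz, one_mul] at h2
        have hz : ((2 : ZMod 2)) ^ (b + 1 - a) = 0 := by
          rw [show (2 : ZMod 2) = 0 from by decide]
          exact zero_pow (by omega)
        rw [hz, zero_mul] at h2
        exact h2
      have e2 : ((C * 2 ^ (b + 1 - a) : ℕ) : ZMod 2) = 0 := by
        push_cast
        rw [show (2 : ZMod 2) = 0 from by decide, zero_pow (by omega : b + 1 - a ≠ 0), mul_zero]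
      rw [e2, e1]
  · -- b < a
    set d := a - 1 - b with hd
    have hda : a + 1 = (b + 2) + d := by omega
    have eq3 : 2 ^ d * (u * C') = w * C := by
      have hcancel : 2 ^ (b + 2) * (2 ^ d * (u * C')) = 2 ^ (b + 2) * (w * C) := by
        have hpow : (2 : ℕ) ^ (a + 1) = 2 ^ (b + 2) * 2 ^ d := by
          rw [← pow_add, hda]
        rw [← eq2, hpow, mul_assoc]
      exact Nat.eq_of_mul_eq_mul_left (pow_pos (by norm_num) _) hcancel
    have hdvdC : 2 ^ d ∣ C := by
      have h1 : 2 ^ d ∣ w * C := ⟨u * C', eq3.symm⟩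
      have h2 : Nat.Coprime (2 ^ d) w := (Nat.coprime_two_left.mpr how).pow_left _
      exact (Nat.Coprime.dvd_of_dvd_mul_left h2 h1)
    obtain ⟨q, hq⟩ := hdvdC
    refine ⟨q, ?_, ?_⟩
    · rw [hvl, hq]
      have : 2 ^ a = 2 ^ d * 2 ^ (1 + b) := by rw [← pow_add]; congr 1; omega
      rw [this]; ring
    · -- w q = u C' mod 2 gives q ≡ C'
      have eq4 : u * C' = w * q := by
        have : 2 ^ d * (u * C') = 2 ^ d * (w * q) := by
          rw [eq3, hq]; ring
        exact Nat.eq_of_mul_eq_mul_left (pow_pos (by norm_num) _) this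
      have h2 : (↑(u * C') : ZMod 2) = ↑(w * q) := by rw [eq4]
      push_cast at h2
      rw [huz, one_mul, hwz, one_mul] at h2
      exact h2.symm

theorem stmt_9 (m : ℕ) (hm : 4 ≤ m) (hme : Even m) :
    2 ^ (padicValNat 2 (2 * m)) ∣
      ∑ l ∈ Finset.Icc 1 (m / 2), (2 * m).choose (4 * l) * 2 ^ (padicValNat 2 (2 * l)) := by
  obtain ⟨s, hs⟩ := hme
  have hms : m = 2 * s := by omega
  have hs2 : 2 ≤ s := by omega
  have hm0 : m ≠ 0 := by omega
  set a := padicValNat 2 m with ha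
  have hv2m : padicValNat 2 (2 * m) = 1 + a := by
    rw [padicValNat.mul (p := 2) two_ne_zero hm0, padicValNat.self one_lt_two]
  -- pick the quotients t l
  set t : ℕ → ℕ := fun l => (2 * m).choose (4 * l) * 2 ^ (padicValNat 2 (2 * l)) / 2 ^ a with ht
  have key : ∀ l ∈ Finset.Icc 1 (m / 2),
      (2 * m).choose (4 * l) * 2 ^ (padicValNat 2 (2 * l)) = 2 ^ a * t l ∧
      ((t l : ZMod 2)) = ((2 * m - 1).choose (4 * l - 1) : ZMod 2) := by
    intro l hlmem
    have hl1 : 1 ≤ l := (Finset.mem_Icc.mp hlmem).1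
    obtain ⟨t', h1, h2⟩ := aux_term m l (by omega) hl1
    have htl : t l = t' := by
      rw [ht]; simp only
      rw [h1, Nat.mul_div_cancel_left _ (pow_pos (by norm_num) _)]
    exact ⟨by rw [htl]; exact h1, by rw [htl]; exact h2⟩
  have hsum : ∑ l ∈ Finset.Icc 1 (m / 2), (2 * m).choose (4 * l) * 2 ^ (padicValNat 2 (2 * l))
      = 2 ^ a * ∑ l ∈ Finset.Icc 1 (m / 2), t l := by
    rw [Finset.mul_sum]
    exact Finset.sum_congr rfl fun l hl => (key l hl).1
  rw [hsum, hv2m]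
  have hdvd2 : 2 ∣ ∑ l ∈ Finset.Icc 1 (m / 2), t l := by
    rw [← ZMod.natCast_eq_zero_iff]
    push_cast
    -- replace each t l by the binomial coefficient, then by Lucas
    have step1 : ∀ l ∈ Finset.Icc 1 (m / 2),
        ((t l : ZMod 2)) = ((s - 1).choose (l - 1) : ZMod 2) := by
      intro l hlmem
      have hl1 : 1 ≤ l := (Finset.mem_Icc.mp hlmem).1
      rw [(key l hlmem).2]
      -- Lucas twice
      have luc1 : (2 * m - 1).choose (4 * l - 1) ≡
          Nat.choose ((2 * m - 1) % 2) ((4 * l - 1) % 2) *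
            Nat.choose ((2 * m - 1) / 2) ((4 * l - 1) / 2) [MOD 2] :=
        Choose.choose_modEq_choose_mod_mul_choose_div_nat (p := 2)
      have luc2 : (m - 1).choose (2 * l - 1) ≡
          Nat.choose ((m - 1) % 2) ((2 * l - 1) % 2) *
            Nat.choose ((m - 1) / 2) ((2 * l - 1) / 2) [MOD 2] :=
        Choose.choose_modEq_choose_mod_mul_choose_div_nat (p := 2)
      have e1 : (2 * m - 1) % 2 = 1 := by omega
      have e2 : (4 * l - 1) % 2 = 1 := by omega
      have e3 : (2 * m - 1) / 2 = m - 1 := by omega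
      have e4 : (4 * l - 1) / 2 = 2 * l - 1 := by omega
      have e5 : (m - 1) % 2 = 1 := by omega
      have e6 : (2 * l - 1) % 2 = 1 := by omega
      have e7 : (m - 1) / 2 = s - 1 := by omega
      have e8 : (2 * l - 1) / 2 = l - 1 := by omega
      rw [e1, e2, e3, e4, Nat.choose_self, one_mul] at luc1
      rw [e5, e6, e7, e8, Nat.choose_self, one_mul] at luc2
      have := (luc1.trans luc2)
      exact (ZMod.natCast_eq_natCast_iff _ _ _).mpr this
    rw [Finset.sum_congr rfl step1]
    have hrange : m / 2 = s := by omega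
    rw [hrange]
    have : ∑ l ∈ Finset.Icc 1 s, ((s - 1).choose (l - 1) : ZMod 2)
        = ∑ i ∈ Finset.range s, ((s - 1).choose i : ZMod 2) := by
      rw [← Finset.Ico_add_one_right_eq_Icc, Finset.sum_Ico_eq_sum_range]
      simp
    rw [this, ← Nat.cast_sum]
    have : ∑ i ∈ Finset.range s, (s - 1).choose i = 2 ^ (s - 1) := by
      have := Nat.sum_range_choose (s - 1)
      rwa [show s - 1 + 1 = s by omega] at this
    rw [this]
    push_cast
    rw [show (2 : ZMod 2) = 0 from by decide]
    exact zero_pow (by omega)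
  obtain ⟨k, hk⟩ := hdvd2
  exact ⟨k, by rw [hk, pow_add, pow_one]; ring⟩
end

section
/- The exponential generating function H(z) = Σ_{n≥0} z^{6n}/(6n)! satisfies (H'''(z))² − H(z)² = −1 − Σ_{n≥1} (−1)^n · 2 · 3^{3n−1} · z^{6n}/(6n)!, i.e., the coefficient c_n of z^{6n}/(6n)! in (H''')² − H² equals −1 for n = 0 and −(−1)^n·2·3^{3n−1} for n ≥ 1. -/
open scoped BigOperators

private def Xm : Matrix (Fin 3) (Fin 3) ℤ := !![0,0,-1; 1,0,0; 0,1,0]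
private def Um : Matrix (Fin 3) (Fin 3) ℤ := !![2,1,-1; 1,2,1; -1,1,2]

private def pp (k : ℕ) : ℤ := if k % 6 = 0 then 1 else if k % 6 = 3 then -1 else 0

private lemma X6 : Xm ^ 6 = 1 := by
  rw [Matrix.one_fin_three]
  norm_num [Xm, pow_succ, Matrix.mul_fin_three]

private lemma hA6 : (1 + Xm) ^ 6 = (-9 : ℤ) • Um := by
  have h1 : (1 : Matrix (Fin 3) (Fin 3) ℤ) + Xm = !![1,0,-1; 1,1,0; 0,1,1] := by
    rw [Matrix.one_fin_three, Xm]; norm_num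
  have h2 : (-9 : ℤ) • Um = !![-18,-9,9; -9,-18,-9; 9,-9,-18] := by
    rw [Um]; norm_num [Matrix.smul_of]
  rw [h1, h2]
  norm_num [pow_succ, Matrix.mul_fin_three]

private lemma hUU : Um * Um = (3 : ℤ) • Um := by
  have h2 : (3 : ℤ) • Um = !![6,3,-3; 3,6,3; -3,3,6] := by
    rw [Um]; norm_num [Matrix.smul_of]
  rw [h2, Um]
  norm_num [Matrix.mul_fin_three]

private lemma key : ∀ n, 1 ≤ n →
    (1 + Xm) ^ (6 * n) = ((-1 : ℤ) ^ n * 3 ^ (3 * n - 1)) • Um := by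
  intro n hn
  induction n with
  | zero => omega
  | succ m ih =>
    rcases Nat.eq_zero_or_pos m with hm | hm
    · subst hm
      simpa using hA6
    · have h1 : 6 * (m + 1) = 6 * m + 6 := by ring
      rw [h1, pow_add, ih hm, hA6, smul_mul_smul_comm, hUU, smul_smul]
      congr 1
      have h2 : 3 * (m + 1) - 1 = (3 * m - 1) + 3 := by omega
      rw [h2, pow_add, pow_succ]
      ring

private lemma hXpow (k : ℕ) : (Xm ^ k) 0 0 = pp k := by
  have h1 : Xm ^ k = Xm ^ (k % 6) := by
    conv_lhs => rw [← Nat.div_add_mod k 6, pow_add, pow_mul, X6, one_pow, one_mul]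
  have hmm : k % 6 % 6 = k % 6 := Nat.mod_mod_of_dvd k dvd_rfl
  have h2 : pp k = pp (k % 6) := by simp [pp, hmm]
  rw [h1, h2]
  have h6 : k % 6 < 6 := Nat.mod_lt _ (by norm_num)
  set r := k % 6 with hr
  clear_value r
  interval_cases r <;>
    norm_num [Xm, pp, pow_succ, Matrix.mul_fin_three, Matrix.one_fin_three]

private lemma blocksum (N : ℕ) (f : ℕ → ℤ) :
    ∑ k ∈ Finset.range (6 * N), f k * pp k =
      ∑ m ∈ Finset.range N, (f (6 * m) - f (6 * m + 3)) := by
  induction N with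
  | zero => simp
  | succ m ih =>
    have h1 : 6 * (m + 1) = (6 * m) + 1 + 1 + 1 + 1 + 1 + 1 := by ring
    rw [h1, Finset.sum_range_succ, Finset.sum_range_succ, Finset.sum_range_succ,
      Finset.sum_range_succ, Finset.sum_range_succ, Finset.sum_range_succ,
      Finset.sum_range_succ, ih]
    have hp : ∀ r, pp (6 * m + r) = pp r := by
      intro r; simp [pp, Nat.mul_add_mod]
    simp only [show 6*m+1+1 = 6*m+2 by ring, show 6*m+1+1+1 = 6*m+3 by ring,
      show 6*m+1+1+1+1 = 6*m+4 by ring, show 6*m+1+1+1+1+1 = 6*m+5 by ring, hp]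
    norm_num [pp]
    ring

theorem stmt_11 (n : ℕ) (hn : 1 ≤ n) :
    (∑ m ∈ Finset.range n, ((6 * n).choose (6 * m + 3) : ℤ)) -
        (∑ m ∈ Finset.range (n + 1), ((6 * n).choose (6 * m) : ℤ)) =
      -(-1) ^ n * 2 * 3 ^ (3 * n - 1) := by
  have hcomm : Commute Xm (1 : Matrix (Fin 3) (Fin 3) ℤ) := Commute.one_right _
  have hbin := hcomm.add_pow (6 * n)
  have hXm1 : Xm + 1 = 1 + Xm := add_comm _ _
  have hterm : ∀ k : ℕ, ∀ c : ℕ,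
      (Xm ^ k * (1:Matrix (Fin 3) (Fin 3) ℤ) ^ (6*n - k) * (c : Matrix (Fin 3) (Fin 3) ℤ)) 0 0
        = (c : ℤ) * pp k := by
    intro k c
    rw [one_pow, mul_one, ← hXpow k]
    rw [Matrix.natCast_fin_three]
    simp [Matrix.mul_apply, Fin.sum_univ_succ, mul_comm]
  have hentry : ((1 + Xm) ^ (6 * n)) 0 0
      = ∑ k ∈ Finset.range (6 * n + 1), ((6 * n).choose k : ℤ) * pp k := by
    rw [← hXm1, hbin, Matrix.sum_apply]
    exact Finset.sum_congr rfl fun k _ => hterm k _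
  have hext : ∑ k ∈ Finset.range (6 * (n + 1)), ((6 * n).choose k : ℤ) * pp k
      = ∑ k ∈ Finset.range (6 * n + 1), ((6 * n).choose k : ℤ) * pp k := by
    symm
    apply Finset.sum_subset
    · intro x hx
      simp only [Finset.mem_range] at *
      omega
    · intro x _ hx
      simp only [Finset.mem_range, not_lt] at hx
      have : (6 * n).choose x = 0 := Nat.choose_eq_zero_of_lt (by omega)
      simp [this]
  have hblock := blocksum (n + 1) (fun k => ((6 * n).choose k : ℤ))
  have hval : ((1 + Xm) ^ (6 * n)) 0 0 = (-1 : ℤ) ^ n * 3 ^ (3 * n - 1) * 2 := by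
    rw [key n hn]
    simp [Um, Matrix.smul_apply]
  have hlast : ((6 * n).choose (6 * n + 3) : ℤ) = 0 := by
    norm_cast
    exact Nat.choose_eq_zero_of_lt (by omega)
  have h3 : ∑ m ∈ Finset.range (n + 1), ((6 * n).choose (6 * m + 3) : ℤ)
      = ∑ m ∈ Finset.range n, ((6 * n).choose (6 * m + 3) : ℤ) := by
    rw [Finset.sum_range_succ, hlast, add_zero]
  have hmain : ∑ m ∈ Finset.range (n + 1),
      (((6 * n).choose (6 * m) : ℤ) - ((6 * n).choose (6 * m + 3) : ℤ))
      = (-1 : ℤ) ^ n * 3 ^ (3 * n - 1) * 2 := by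
    rw [← hblock, hext, ← hentry, hval]
  rw [Finset.sum_sub_distrib, h3] at hmain
  linarith [hmain]
end

section
/- Let d_n be defined by the formal power series identity (Σ d_n z^{6n}/(6n)!) · (H(z)³ + 3H(z)(H'''(z))²) = 1, where H(z) = Σ z^{6n}/(6n)!. Then the 3-adic valuation of d_n is at least 2n for every n ≥ 0. -/
open scoped BigOperators

/-- `H(z) = ∑ z^{6n}/(6n)!` as a formal power series over `ℚ`. -/
noncomputable def Hser : PowerSeries ℚ :=
  PowerSeries.mk fun k => if 6 ∣ k then (1 : ℚ) / k.factorial else 0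

/-- `H'''(z) = ∑ z^{6n+3}/(6n+3)!` as a formal power series over `ℚ`. -/
noncomputable def Hser3 : PowerSeries ℚ :=
  PowerSeries.mk fun k => if k % 6 = 3 then (1 : ℚ) / k.factorial else 0

/-- The coefficient `c_n` of `z^{6n}/(6n)!` in `H³ + 3·H·(H''')²`. -/
noncomputable def cCoeff (n : ℕ) : ℚ :=
  ((6 * n).factorial : ℚ) *
    PowerSeries.coeff (6 * n) (Hser ^ 3 + 3 * Hser * Hser3 ^ 2)

namespace Stmt13Aux

open PowerSeries

/-- a primitive sixth root of unity in `ℂ` -/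
noncomputable def z6 : ℂ := ⟨1/2, Real.sqrt 3 / 2⟩

lemma z6_sq : z6^2 = z6 - 1 := by
  have h3 : Real.sqrt 3 * Real.sqrt 3 = 3 := Real.mul_self_sqrt (by norm_num)
  apply Complex.ext <;>
    simp [z6, pow_two, Complex.mul_re, Complex.mul_im] <;> nlinarith [h3]

lemma z6_im : z6.im ≠ 0 := by
  have : 0 < Real.sqrt 3 := Real.sqrt_pos.mpr (by norm_num)
  simp only [z6]
  positivity

lemma z6_cube : z6^3 = -1 := by linear_combination (z6 + 1) * z6_sq
lemma z6_pow4 : z6^4 = -z6 := by linear_combination z6 * z6_cube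
lemma z6_pow5 : z6^5 = 1 - z6 := by linear_combination z6^2 * z6_cube - z6_sq
lemma z6_pow6 : z6^6 = 1 := by linear_combination (z6^3 - 1) * z6_cube

lemma z6_pow_ne_one : ∀ m : ℕ, m < 6 → m ≠ 0 → z6^m ≠ 1 := by
  have him := z6_im
  intro m hm hm0 h
  interval_cases m
  · exact hm0 rfl
  · rw [pow_one] at h; exact him (by rw [h]; rfl)
  · rw [z6_sq] at h
    apply him
    simpa using congrArg Complex.im h
  · rw [z6_cube] at h
    exact absurd (by simpa using congrArg Complex.re h) (by norm_num)
  · rw [z6_pow4] at h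
    apply him
    simpa using congrArg Complex.im h
  · rw [z6_pow5] at h
    apply him
    simpa using congrArg Complex.im h

lemma z6_pow_mod (n : ℕ) : z6^n = z6^(n % 6) := by
  conv_lhs => rw [← Nat.div_add_mod n 6, pow_add, pow_mul, z6_pow6, one_pow, one_mul]

lemma z6_pow_eq_one_iff (n : ℕ) : z6^n = 1 ↔ 6 ∣ n := by
  constructor
  · intro h
    rw [z6_pow_mod] at h
    by_contra hd
    exact z6_pow_ne_one (n % 6) (Nat.mod_lt _ (by norm_num))
      (fun h0 => hd (Nat.dvd_of_mod_eq_zero h0)) h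
  · rintro ⟨k, rfl⟩
    rw [pow_mul, z6_pow6, one_pow]

lemma geom6 (n : ℕ) :
    (1:ℂ)^n + z6^n + (z6^2)^n + (z6^3)^n + (z6^4)^n + (z6^5)^n = if 6 ∣ n then 6 else 0 := by
  have hpows : ∀ j : ℕ, (z6^j)^n = (z6^n)^j := fun j => by rw [← pow_mul, mul_comm, pow_mul]
  have h6 : (z6^n)^6 = 1 := by
    rw [← pow_mul, mul_comm n 6, pow_mul, z6_pow6, one_pow]
  rw [one_pow, hpows, hpows, hpows, hpows]
  by_cases hd : 6 ∣ n
  · rw [if_pos hd, (z6_pow_eq_one_iff n).mpr hd]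
    norm_num
  · rw [if_neg hd]
    have h1 : z6^n ≠ 1 := fun h => hd ((z6_pow_eq_one_iff n).mp h)
    set t : ℂ := z6^n
    have hkey : (t - 1) * (1 + t + t^2 + t^3 + t^4 + t^5) = 0 := by linear_combination h6
    rcases mul_eq_zero.mp hkey with h | h
    · exact absurd (sub_eq_zero.mp h) h1
    · linear_combination h

lemma sumU' (n : ℕ) : (1:ℂ) + z6^(2*n) + z6^(4*n) = if 3 ∣ n then 3 else 0 := by
  have hs : z6^(4*n) = (z6^(2*n))^2 := by rw [← pow_mul]; ring_nf
  have hcube : (z6^(2*n))^3 = 1 := by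
    rw [← pow_mul, show 2*n*3 = 6*n by ring, pow_mul, z6_pow6, one_pow]
  by_cases h3 : 3 ∣ n
  · have h1 : z6^(2*n) = 1 := (z6_pow_eq_one_iff _).mpr (by omega)
    rw [if_pos h3, hs, h1]
    norm_num
  · have h1 : z6^(2*n) ≠ 1 := fun h => h3 (by have h6 := (z6_pow_eq_one_iff _).mp h; omega)
    rw [if_neg h3, hs]
    set s : ℂ := z6^(2*n)
    have key : (s - 1) * (1 + s + s^2) = 0 := by linear_combination hcube
    rcases mul_eq_zero.mp key with h | h
    · exact absurd (sub_eq_zero.mp h) h1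
    · linear_combination h

lemma sumU (n : ℕ) : (1:ℂ)^n + (z6-1)^n + (-z6)^n = if 3 ∣ n then 3 else 0 := by
  have e2 : ((z6:ℂ)-1) = z6^2 := z6_sq.symm
  have e4 : ((-z6:ℂ)) = z6^4 := by linear_combination (-(z6*(z6+1))) * z6_sq
  rw [one_pow, e2, e4, ← pow_mul, ← pow_mul]
  exact sumU' n

lemma sumV (n : ℕ) : (-1:ℂ)^n + (1-z6)^n + z6^n =
    if 6 ∣ n then 3 else if n % 6 = 3 then -3 else 0 := by
  have e3 : ((-1:ℂ)) = z6^3 := by linear_combination (-(z6+1)) * z6_sq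
  have e5 : ((1-z6:ℂ)) = z6^5 := by linear_combination (-(z6^3) - z6^2 + 1) * z6_sq
  rw [e3, e5, ← pow_mul, ← pow_mul]
  have factored : z6^(3*n) + z6^(5*n) + z6^n
      = z6^n * ((1:ℂ) + z6^(2*n) + z6^(4*n)) := by
    rw [show 3*n = n + 2*n by ring, show 5*n = n + 4*n by ring, pow_add, pow_add]
    ring
  rw [factored, sumU' n]
  by_cases h6 : 6 ∣ n
  · rw [if_pos (by omega : 3 ∣ n), if_pos h6, (z6_pow_eq_one_iff n).mpr h6, one_mul]
  · by_cases h3 : n % 6 = 3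
    · rw [if_pos (by omega : 3 ∣ n), if_neg h6, if_pos h3, z6_pow_mod, h3, z6_cube]
      ring
    · rw [if_neg (by omega : ¬ 3 ∣ n), if_neg h6, if_neg h3, mul_zero]

noncomputable def r (a : ℂ) : PowerSeries ℂ := rescale a (PowerSeries.exp ℂ)

lemma r_mul (a b : ℂ) : r a * r b = r (a+b) := PowerSeries.exp_mul_exp_eq_exp_add a b

lemma coeff_r (n : ℕ) (a : ℂ) :
    coeff n (r a) = a^n * (algebraMap ℚ ℂ (1 / n.factorial)) := by
  simp [r, coeff_rescale]

lemma cube_r (x y z : ℂ) : (r x + r y + r z)^3 =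
    r (x+x+x) + r (y+y+y) + r (z+z+z)
    + 3*(r (x+x+y) + r (x+x+z) + r (y+y+x) + r (y+y+z) + r (z+z+x) + r (z+z+y))
    + 6 * r (x+y+z) := by
  have h : (r x + r y + r z)^3
      = r x*r x*r x + r y*r y*r y + r z*r z*r z
        + 3*(r x*r x*r y + r x*r x*r z + r y*r y*r x + r y*r y*r z
          + r z*r z*r x + r z*r z*r y)
        + 6*(r x*r y*r z) := by ring
  rw [h]
  simp only [r_mul]

lemma mapU : (3 : PowerSeries ℂ) * PowerSeries.map (algebraMap ℚ ℂ) (Hser + Hser3)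
    = r 1 + r (z6-1) + r (-z6) := by
  ext n
  rw [show (3 : PowerSeries ℂ) = C (3:ℂ) from rfl, coeff_C_mul, coeff_map]
  simp only [map_add]
  rw [coeff_r, coeff_r, coeff_r]
  rw [show (1:ℂ)^n * (algebraMap ℚ ℂ (1 / n.factorial))
      + (z6-1)^n * (algebraMap ℚ ℂ (1 / n.factorial))
      + (-z6)^n * (algebraMap ℚ ℂ (1 / n.factorial))
      = ((1:ℂ)^n + (z6-1)^n + (-z6)^n) * (algebraMap ℚ ℂ (1 / n.factorial)) from by ring,
    sumU]
  rw [Hser, Hser3, coeff_mk, coeff_mk]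
  by_cases h6 : 6 ∣ n
  · rw [if_pos h6, if_neg (by omega), if_pos (by omega : 3 ∣ n), map_zero]
    ring
  · by_cases h3 : n % 6 = 3
    · rw [if_neg h6, if_pos h3, if_pos (by omega : 3 ∣ n), map_zero]
      ring
    · rw [if_neg h6, if_neg h3, if_neg (by omega : ¬ 3 ∣ n), map_zero]
      ring

lemma mapV : (3 : PowerSeries ℂ) * PowerSeries.map (algebraMap ℚ ℂ) (Hser - Hser3)
    = r (-1) + r (1-z6) + r z6 := by
  ext n
  rw [show (3 : PowerSeries ℂ) = C (3:ℂ) from rfl, coeff_C_mul, coeff_map]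
  simp only [map_sub, map_add]
  rw [coeff_r, coeff_r, coeff_r]
  rw [show (-1:ℂ)^n * (algebraMap ℚ ℂ (1 / n.factorial))
      + (1-z6)^n * (algebraMap ℚ ℂ (1 / n.factorial))
      + (z6)^n * (algebraMap ℚ ℂ (1 / n.factorial))
      = ((-1:ℂ)^n + (1-z6)^n + z6^n) * (algebraMap ℚ ℂ (1 / n.factorial)) from by ring,
    sumV]
  rw [Hser, Hser3, coeff_mk, coeff_mk]
  by_cases h6 : 6 ∣ n
  · rw [if_pos h6, if_neg (by omega), if_pos h6, map_zero]
    ring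
  · by_cases h3 : n % 6 = 3
    · rw [if_neg h6, if_pos h3, if_neg h6, if_pos h3, map_zero]
      ring
    · rw [if_neg h6, if_neg h3, if_neg h6, if_neg h3, map_zero]
      ring

/-- the closed form series -/
noncomputable def Tq : PowerSeries ℚ :=
  PowerSeries.mk fun k => if k = 0 then 1 else if 6 ∣ k then
    ((3:ℚ)^k / 9 + (2/3) * (-27:ℚ)^(k/6)) / k.factorial else 0

lemma w_sq : (2*z6-1)^2 = (-3 : ℂ) := by linear_combination 4*z6_sq

lemma sum3 (n : ℕ) : (3:ℂ)^n + (3*z6-3)^n + (-(3*z6))^n + (-3:ℂ)^n + (3-3*z6)^n + (3*z6)^n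
    = if 6 ∣ n then 6*(3:ℂ)^n else 0 := by
  rw [show (3*z6-3 : ℂ) = 3*z6^2 by linear_combination (-3)*z6_sq,
      show (-(3*z6) : ℂ) = 3*z6^4 by linear_combination (-3*z6-3*z6^2)*z6_sq,
      show (-3 : ℂ) = 3*z6^3 by linear_combination (-3-3*z6)*z6_sq,
      show (3-3*z6 : ℂ) = 3*z6^5 by linear_combination (3-3*z6^2-3*z6^3)*z6_sq,
      show (3*z6 : ℂ) = 3*z6^1 by rw [pow_one]]
  simp only [mul_pow]
  have hg := geom6 n
  by_cases h6 : 6 ∣ n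
  · rw [if_pos h6] at hg ⊢
    linear_combination (3:ℂ)^n * hg
  · rw [if_neg h6] at hg ⊢
    linear_combination (3:ℂ)^n * hg

lemma sumW (n : ℕ) : ((z6+1:ℂ))^n + (2-z6)^n + (2*z6-1)^n + (z6-2)^n + (1-2*z6)^n + (-z6-1)^n
    = if 6 ∣ n then 6 * (-27 : ℂ)^(n/6) else 0 := by
  rw [show (z6+1 : ℂ) = (2*z6-1)*z6^5 by linear_combination (1+2*z6+z6^2-z6^3-2*z6^4)*z6_sq,
      show (2-z6 : ℂ) = (2*z6-1)*z6^4 by linear_combination (2+z6-z6^2-2*z6^3)*z6_sq,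
      show (2*z6-1 : ℂ) = (2*z6-1)*z6^0 by rw [pow_zero, mul_one],
      show (z6-2 : ℂ) = (2*z6-1)*z6^1 by linear_combination (-2)*z6_sq,
      show (1-2*z6 : ℂ) = (2*z6-1)*z6^3 by linear_combination (1-z6-2*z6^2)*z6_sq,
      show (-z6-1 : ℂ) = (2*z6-1)*z6^2 by linear_combination (-1-2*z6)*z6_sq]
  simp only [mul_pow]
  have hg := geom6 n
  by_cases h6 : 6 ∣ n
  · rw [if_pos h6] at hg ⊢
    have hw : (2*z6-1 : ℂ)^n = (-27 : ℂ)^(n/6) := by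
      conv_lhs => rw [show n = 6*(n/6) by omega]
      rw [pow_mul, show ((2*z6-1 : ℂ))^6 = -27 by
        linear_combination ((2*z6-1)^4 - 3*(2*z6-1)^2 + 9) * w_sq]
    rw [hw]
    rw [show ((z6:ℂ)^0)^n = (1:ℂ)^n by rw [pow_zero]]
    linear_combination ((-27:ℂ))^(n/6) * hg
  · rw [if_neg h6] at hg ⊢
    rw [show ((z6:ℂ)^0)^n = (1:ℂ)^n by rw [pow_zero]]
    linear_combination ((2*z6-1:ℂ))^n * hg

lemma mapT : (54 : PowerSeries ℂ) * PowerSeries.map (algebraMap ℚ ℂ) Tq =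
    (r 3 + r (3*z6-3) + r (-(3*z6)) + r (-3) + r (3-3*z6) + r (3*z6))
    + 3*(r (z6+1) + r (2-z6) + r (2*z6-1) + r (z6-2) + r (1-2*z6) + r (-z6-1))
    + 3*(r (z6+1) + r (2-z6) + r (2*z6-1) + r (z6-2) + r (1-2*z6) + r (-z6-1))
    + (6 * r 0 + 6 * r 0) := by
  ext n
  rw [show (54 : PowerSeries ℂ) = C (54:ℂ) from rfl, coeff_C_mul, coeff_map, Tq, coeff_mk]
  rw [show (3 : PowerSeries ℂ) = C (3:ℂ) from rfl, show (6 : PowerSeries ℂ) = C (6:ℂ) from rfl]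
  simp only [map_add, coeff_C_mul, coeff_r]
  set E := algebraMap ℚ ℂ ((1:ℚ) / n.factorial) with hE
  have hsum := sum3 n
  have hsumW := sumW n
  rcases eq_or_ne n 0 with rfl | hn
  · norm_num [hE]
  · rw [if_neg hn]
    by_cases h6 : 6 ∣ n
    · rw [if_pos h6] at hsum hsumW ⊢
      rw [div_eq_mul_one_div ((3:ℚ)^n / 9 + (2/3) * (-27:ℚ)^(n/6)) (n.factorial : ℚ), map_mul,
        ← hE]
      rw [show (algebraMap ℚ ℂ) ((3:ℚ)^n / 9 + (2/3) * (-27:ℚ)^(n/6))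
            = ((3:ℂ)^n / 9 + (2/3) * (-27:ℂ)^(n/6)) by
        simp [map_add, map_div₀, map_mul, map_pow, map_ofNat, map_neg]]
      rw [zero_pow hn]
      linear_combination (-E) * hsum + (-6) * E * hsumW
    · rw [if_neg h6] at hsum hsumW ⊢
      rw [map_zero, zero_pow hn]
      linear_combination (-E) * hsum + (-6) * E * hsumW

lemma key : (Hser^3 + 3*Hser*Hser3^2 : PowerSeries ℚ) = Tq := by
  have h54 : (54 : PowerSeries ℂ) ≠ 0 := by
    intro h
    have h0 := congrArg (PowerSeries.constantCoeff) h
    rw [map_ofNat, map_zero] at h0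
    norm_num at h0
  have main : PowerSeries.map (algebraMap ℚ ℂ) (Hser^3 + 3*Hser*Hser3^2)
      = PowerSeries.map (algebraMap ℚ ℂ) Tq := by
    apply mul_left_cancel₀ h54
    calc (54 : PowerSeries ℂ) * PowerSeries.map (algebraMap ℚ ℂ) (Hser^3 + 3*Hser*Hser3^2)
        = ((3 : PowerSeries ℂ) * PowerSeries.map (algebraMap ℚ ℂ) (Hser + Hser3))^3
          + ((3 : PowerSeries ℂ) * PowerSeries.map (algebraMap ℚ ℂ) (Hser - Hser3))^3 := by
          simp only [map_add, map_sub, map_mul, map_pow, map_ofNat]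
          ring
      _ = (r 1 + r (z6-1) + r (-z6))^3 + (r (-1) + r (1-z6) + r z6)^3 := by rw [mapU, mapV]
      _ = (54 : PowerSeries ℂ) * PowerSeries.map (algebraMap ℚ ℂ) Tq := by
          rw [cube_r, cube_r, mapT]
          ring_nf
  ext n
  have hcn := congrArg (PowerSeries.coeff n) main
  rw [PowerSeries.coeff_map, PowerSeries.coeff_map] at hcn
  exact (algebraMap ℚ ℂ).injective hcn

lemma cCoeff_zero : cCoeff 0 = 1 := by
  rw [cCoeff, key]
  simp [Tq]

lemma cCoeff_eq (n : ℕ) (hn : n ≠ 0) :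
    cCoeff n = (3:ℚ)^(6*n)/9 + (2/3)*(-27:ℚ)^n := by
  rw [cCoeff, key, Tq, PowerSeries.coeff_mk, if_neg (by omega : ¬ 6*n = 0),
    if_pos ⟨n, rfl⟩, show (6*n)/6 = n from by omega]
  rw [mul_div_cancel₀]
  exact_mod_cast (Nat.factorial_ne_zero (6*n))

lemma cCoeff_int (n : ℕ) (hn : n ≠ 0) :
    cCoeff n = ((3^(3*n-1) * (3^(3*n-1) + 2*(-1)^n) : ℤ) : ℚ) := by
  have hq : ((3:ℚ)^(6*n)/9 + (2/3)*(-27:ℚ)^n)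
      = (3:ℚ)^(3*n-1) * ((3:ℚ)^(3*n-1) + 2*(-1)^n) := by
    obtain ⟨k, hk⟩ : ∃ k, 3*n = k+1 := ⟨3*n-1, by omega⟩
    rw [show 3*n-1 = k from by omega, show 6*n = k+k+2 from by omega,
      show (-27:ℚ) = -1*3^3 by norm_num, mul_pow, ← pow_mul, hk]
    ring
  rw [cCoeff_eq n hn, hq]
  push_cast
  ring

lemma cCoeff_norm (k : ℕ) (hk : k ≠ 0) :
    padicNorm 3 (cCoeff k) ≤ (3:ℚ)^(-(2*(k:ℤ))) := by
  haveI : Fact (Nat.Prime 3) := ⟨by norm_num⟩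
  rw [cCoeff_int k hk,
    show (-(2*(k:ℤ))) = -((2*k : ℕ) : ℤ) from by push_cast; ring]
  have hdvd : ((3:ℕ)^(2*k) : ℤ) ∣ 3^(3*k-1) * (3^(3*k-1) + 2*(-1)^k) := by
    push_cast
    exact dvd_mul_of_dvd_left (pow_dvd_pow 3 (by omega)) _
  have h := (padicNorm.dvd_iff_norm_le (p := 3) (n := 2*k)).mp (by exact_mod_cast hdvd)
  exact_mod_cast h


end Stmt13Aux

open Stmt13Aux in


theorem stmt_13 (d : ℕ → ℚ) (hd0 : d 0 = 1)
    (hdrec : ∀ n : ℕ, 0 < n →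
      ∑ m ∈ Finset.range (n + 1),
        ((6 * n).choose (6 * m) : ℚ) * d m * cCoeff (n - m) = 0) :
    ∀ n : ℕ, padicNorm 3 (d n) ≤ (3 : ℚ) ^ (-(2 * (n : ℤ))) := by
  haveI : Fact (Nat.Prime 3) := ⟨by norm_num⟩
  intro n
  induction n using Nat.strong_induction_on with
  | _ n ih =>
    rcases Nat.eq_zero_or_pos n with rfl | hn
    · simp [hd0, padicNorm.one]
    · have hs := hdrec n hn
      rw [Finset.sum_range_succ, Nat.sub_self, cCoeff_zero, Nat.choose_self] at hs
      have hdn : d n = -∑ m ∈ Finset.range n,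
          ((6 * n).choose (6 * m) : ℚ) * d m * cCoeff (n - m) := by
        push_cast at hs
        linarith
      rw [hdn, padicNorm.neg]
      refine padicNorm.sum_le' (fun m hm => ?_) (by positivity)
      have hmn : m < n := Finset.mem_range.mp hm
      rw [padicNorm.mul, padicNorm.mul]
      have h1 : padicNorm 3 (((6 * n).choose (6 * m) : ℚ)) ≤ 1 := padicNorm.of_nat _
      have h2 : padicNorm 3 (d m) ≤ (3:ℚ)^(-(2*(m:ℤ))) := ih m hmn
      have h3 : padicNorm 3 (cCoeff (n - m)) ≤ (3:ℚ)^(-(2*((n-m : ℕ):ℤ))) :=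
        cCoeff_norm (n - m) (by omega)
      have hquot : (3:ℚ)^(-(2*(m:ℤ))) * (3:ℚ)^(-(2*((n-m : ℕ):ℤ))) = (3:ℚ)^(-(2*(n:ℤ))) := by
        rw [← zpow_add₀ (by norm_num : (3:ℚ) ≠ 0)]
        congr 1
        have : ((n - m : ℕ) : ℤ) = (n:ℤ) - (m:ℤ) := by
          push_cast [Nat.cast_sub hmn.le]
          ring
        rw [this]
        ring
      calc padicNorm 3 (((6 * n).choose (6 * m) : ℚ)) * padicNorm 3 (d m)
            * padicNorm 3 (cCoeff (n - m))
          ≤ 1 * (3:ℚ)^(-(2*(m:ℤ))) * (3:ℚ)^(-(2*((n-m : ℕ):ℤ))) := by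
            apply mul_le_mul _ h3 (padicNorm.nonneg _) (by positivity)
            exact mul_le_mul h1 h2 (padicNorm.nonneg _) (by norm_num)
        _ = (3 : ℚ) ^ (-(2 * (n : ℤ))) := by rw [one_mul, hquot]
end

section
/- For every positive integer n, ζ(4n) · 4·(4n+1)!·(−1)^{n+1}/(√2·π)^{4n} = Σ_{m=0}^{n} C(4n+1, 4m) · E_{4m}^{(4,2)}, where ζ is the Riemann zeta function. -/
open scoped BigOperators

open Finset Polynomial Complex

lemma stride4 (f : ℕ → ℂ) (n : ℕ) :
    ∑ k ∈ range (4*n+3), (if 4 ∣ k then f k else 0) = ∑ m ∈ range (n+1), f (4*m) := by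
  induction n with
  | zero =>
    simp only [Nat.mul_zero, Nat.zero_add, Finset.sum_range_succ, Finset.sum_range_one]
    norm_num
  | succ n ih =>
    have e : 4*(n+1)+3 = (4*n+3)+1+1+1+1 := by ring
    rw [e, Finset.sum_range_succ, Finset.sum_range_succ, Finset.sum_range_succ,
      Finset.sum_range_succ, ih, Finset.sum_range_succ]
    have h1 : ¬ (4 ∣ 4*n+3) := by omega
    have h2 : (4 ∣ 4*n+3+1) := by omega
    have h3 : ¬ (4 ∣ 4*n+3+1+1) := by omega
    have h4 : ¬ (4 ∣ 4*n+3+1+1+1) := by omega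
    rw [if_neg h1, if_pos h2, if_neg h3, if_neg h4]
    have e2 : 4*n+3+1 = 4*(n+1) := by ring
    rw [e2, Finset.sum_range_succ, Finset.sum_range_succ]
    ring

lemma i_pow_filter (k : ℕ) :
    (1:ℂ) + I^k + (-1)^k + (-I)^k = if 4 ∣ k then 4 else 0 := by
  have hI4 : (I:ℂ)^4 = 1 := by
    have := Complex.I_sq
    calc (I:ℂ)^4 = (I^2)^2 := by ring
    _ = 1 := by rw [Complex.I_sq]; ring
  have hk : k = 4*(k/4) + k%4 := (Nat.div_add_mod k 4).symm
  have hr : k%4 < 4 := Nat.mod_lt _ (by norm_num)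
  have red : ∀ z : ℂ, z^4 = 1 → z^k = z^(k%4) := by
    intro z hz
    conv_lhs => rw [hk]
    rw [pow_add, pow_mul, hz, one_pow, one_mul]
  rw [red I hI4, red (-1) (by norm_num), red (-I) (by rw [neg_pow]; norm_num [hI4])]
  have hdvd : (4 ∣ k) ↔ k % 4 = 0 := by omega
  interval_cases h : k % 4 <;>
    simp only [hdvd, h] <;> norm_num <;>
    simp [pow_succ, Complex.I_mul_I] <;> ring_nf <;> simp [Complex.I_sq] <;> ring

lemma aeval_bernoulli_expand (n : ℕ) (x : ℂ) :
    (Polynomial.aeval x (Polynomial.bernoulli n) : ℂ)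
    = ∑ i ∈ range (n+1), (_root_.bernoulli i : ℂ) * (n.choose i : ℂ) * x^(n-i) := by
  simp only [Polynomial.bernoulli, map_sum, Polynomial.aeval_monomial, map_mul, map_natCast,
    eq_ratCast]

lemma aeval_bernoulli_one_add (n : ℕ) (x : ℂ) :
    Polynomial.aeval (1 + x) (Polynomial.bernoulli n)
    = Polynomial.aeval x (Polynomial.bernoulli n) + n * x^(n-1) := by
  have h : (Polynomial.bernoulli n).comp (Polynomial.C 1 + Polynomial.X)
      = Polynomial.bernoulli n + Polynomial.C (n:ℚ) * Polynomial.X^(n-1) := by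
    apply Polynomial.funext
    intro r
    simp [Polynomial.eval_comp, Polynomial.bernoulli_eval_one_add]
  have h2 := congrArg (Polynomial.aeval x) h
  rw [Polynomial.aeval_comp] at h2
  simpa using h2

noncomputable def A (N : ℕ) (z : ℂ) : ℂ :=
  ∑ k ∈ range (N+1), (N.choose k : ℂ) * (_root_.bernoulli k : ℂ) * z^k

lemma A_eq (N : ℕ) (z : ℂ) (hz : z ≠ 0) :
    A N z = z^N * Polynomial.aeval z⁻¹ (Polynomial.bernoulli N) := by
  rw [aeval_bernoulli_expand, Finset.mul_sum, A]
  refine Finset.sum_congr rfl fun i hi => ?_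
  have hiN : i ≤ N := by simpa [Nat.lt_succ_iff] using hi
  have h : z^N * (z⁻¹)^(N-i) = z^i := by
    rw [inv_pow, ← pow_sub₀ z hz (Nat.sub_le N i), Nat.sub_sub_self hiN]
  rw [← h]
  ring

lemma key_complex (n : ℕ) :
    ∑ m ∈ range (n+1), ((4*n+2).choose (4*m) : ℂ) *
      ((-1)^m * 2^(2*m+1) * (_root_.bernoulli (4*m) : ℂ)) = 4*n+2 := by
  set N := 4*n+2 with hN
  set w : ℂ := 1 + I with hw
  have hI2 : (I:ℂ)^2 = -1 := Complex.I_sq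
  have hI4 : (I:ℂ)^4 = 1 := by
    calc (I:ℂ)^4 = (I^2)^2 := by ring
    _ = 1 := by rw [hI2]; ring
  have hw2 : w^2 = 2*I := by rw [hw]; linear_combination hI2
  have hw4 : w^4 = -4 := by
    calc w^4 = (w^2)^2 := by ring
    _ = -4 := by rw [hw2]; linear_combination 4*hI2
  have hwne : w ≠ 0 := by
    rw [hw]; intro h
    have := congrArg Complex.re h
    simp at this
  set a : ℂ := (1+I)/2 with ha
  set b : ℂ := (1-I)/2 with hb
  have hT : A N w + A N (I*w) + A N (-w) + A N (-I*w)
      = ∑ m ∈ range (n+1), 4 * (N.choose (4*m) : ℂ) * (_root_.bernoulli (4*m) : ℂ) * w^(4*m) := by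
    have step1 : A N w + A N (I*w) + A N (-w) + A N (-I*w)
        = ∑ k ∈ range (N+1), (if 4 ∣ k then
            4 * (N.choose k : ℂ) * (_root_.bernoulli k : ℂ) * w^k else 0) := by
      simp only [A, ← Finset.sum_add_distrib]
      refine Finset.sum_congr rfl fun k _ => ?_
      rw [mul_pow, show (-w)^k = (-1:ℂ)^k * w^k from by rw [← neg_one_mul, mul_pow], mul_pow]
      refine Eq.trans (show _ = (N.choose k : ℂ) * (_root_.bernoulli k : ℂ) * w^k *
        ((1:ℂ)+I^k+(-1)^k+(-I)^k) from by ring) ?_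
      rw [i_pow_filter k]
      split_ifs <;> ring
    rw [step1, show N+1 = 4*n+3 from by omega]
    exact stride4 (fun k => 4 * (N.choose k : ℂ) * (_root_.bernoulli k : ℂ) * w^k) n
  -- evaluate the four A's
  have hNe : Even N := by exact ⟨2*n+1, by omega⟩
  have hwN : w^N = (-4)^n * (2*I) := by
    rw [hN, show 4*n+2 = 4*n+2 from rfl, pow_add, pow_mul, hw4, hw2]
  have hIN : (I:ℂ)^N = -1 := by
    rw [hN, pow_add, pow_mul, hI4, one_pow, one_mul, hI2]
  have hinv1 : w⁻¹ = b := by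
    refine inv_eq_of_mul_eq_one_right ?_
    rw [hw, hb]; linear_combination (-(1:ℂ)/2) * hI2
  have hinv2 : (I*w)⁻¹ = -a := by
    refine inv_eq_of_mul_eq_one_right ?_
    rw [hw, ha]; linear_combination (-(I/2) - 1) * hI2
  have hA1 : A N w = w^N * Polynomial.aeval b (Polynomial.bernoulli N) := by
    rw [A_eq N w hwne, hinv1]
  have hA2 : A N (I*w) = -(w^N) * Polynomial.aeval (-a) (Polynomial.bernoulli N) := by
    rw [A_eq N (I*w) (by simp [hwne, Complex.I_ne_zero]), hinv2, mul_pow, hIN]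
    ring
  have hA3 : A N (-w) = w^N * Polynomial.aeval (-b) (Polynomial.bernoulli N) := by
    rw [A_eq N (-w) (by simp [hwne]), hNe.neg_pow, inv_neg, hinv1]
  have hA4 : A N (-I*w) = -(w^N) * Polynomial.aeval a (Polynomial.bernoulli N) := by
    rw [A_eq N (-I*w) (by simp [hwne, Complex.I_ne_zero]), show ((-I)*w)⁻¹ = -((I*w)⁻¹) from by
      rw [neg_mul, inv_neg], hinv2, neg_neg]
    rw [show ((-I)*w)^N = (-1:ℂ)^N * (I*w)^N from by rw [← neg_one_mul I, mul_assoc, mul_pow],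
      hNe.neg_one_pow, one_mul, mul_pow, hIN]
    ring
  -- the one_add relations
  have h5 : Polynomial.aeval a (Polynomial.bernoulli N)
      = Polynomial.aeval (-b) (Polynomial.bernoulli N) + N * (-b)^(N-1) := by
    have := aeval_bernoulli_one_add N (-b)
    rw [show (1:ℂ) + -b = a from by rw [ha, hb]; ring] at this
    exact this
  have h6 : Polynomial.aeval b (Polynomial.bernoulli N)
      = Polynomial.aeval (-a) (Polynomial.bernoulli N) + N * (-a)^(N-1) := by
    have := aeval_bernoulli_one_add N (-a)
    rw [show (1:ℂ) + -a = b from by rw [ha, hb]; ring] at this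
    exact this
  -- powers of a and b
  have ha4 : a^4 = -(1/4) := by rw [ha]; linear_combination ((I^2+4*I+5)/16) * hI2
  have hb4 : b^4 = -(1/4) := by rw [hb]; linear_combination ((I^2-4*I+5)/16) * hI2
  have hN1 : N - 1 = 4*n+1 := by omega
  have hpa : (-a)^(N-1) = -((-(1/4):ℂ)^n * a) := by
    rw [hN1, Odd.neg_pow ⟨2*n, by ring⟩, pow_add, pow_mul, ha4, pow_one]
  have hpb : (-b)^(N-1) = -((-(1/4):ℂ)^n * b) := by
    rw [hN1, Odd.neg_pow ⟨2*n, by ring⟩, pow_add, pow_mul, hb4, pow_one]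
  -- total
  have hTval : A N w + A N (I*w) + A N (-w) + A N (-I*w) = 2*N := by
    rw [hA1, hA2, hA3, hA4, h5, h6, hpa, hpb, hwN]
    have hcanc : ((-4:ℂ))^n * (-(1/4):ℂ)^n = 1 := by
      rw [← mul_pow]; norm_num
    have hba : b - a = -I := by rw [ha, hb]; ring
    linear_combination (2*I*(N:ℂ)*((-4:ℂ)^n)*((-(1/4):ℂ)^n))*hba + (2*(N:ℂ))*hcanc
      + (-2*(N:ℂ)*((-4:ℂ)^n)*((-(1/4):ℂ)^n))*hI2
  have hsum : ∑ m ∈ range (n+1),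
      4 * (N.choose (4*m) : ℂ) * (_root_.bernoulli (4*m) : ℂ) * w^(4*m) = 2*N := by
    rw [← hT]; exact hTval
  have hhalf : ∑ m ∈ range (n+1), (N.choose (4*m) : ℂ) *
      ((-1)^m * 2^(2*m+1) * (_root_.bernoulli (4*m) : ℂ))
      = (1/2) * ∑ m ∈ range (n+1),
        4 * (N.choose (4*m) : ℂ) * (_root_.bernoulli (4*m) : ℂ) * w^(4*m) := by
    rw [Finset.mul_sum]
    refine Finset.sum_congr rfl fun m _ => ?_
    rw [pow_mul, hw4, neg_pow (4:ℂ) m, pow_succ, pow_mul]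
    norm_num
    ring
  rw [hhalf, hsum, hN]
  push_cast
  ring

lemma key_rat (n : ℕ) :
    ∑ m ∈ range (n+1), ((4*n+2).choose (4*m) : ℚ) *
      ((-1)^m * 2^(2*m+1) * _root_.bernoulli (4*m)) = 4*n+2 := by
  have h := key_complex n
  have h2 : ((∑ m ∈ range (n+1), ((4*n+2).choose (4*m) : ℚ) *
      ((-1)^m * 2^(2*m+1) * _root_.bernoulli (4*m)) : ℚ) : ℂ) = ((4*n+2 : ℚ) : ℂ) := by
    push_cast
    convert h using 2
  exact_mod_cast h2

lemma fact_ne (k : ℕ) : ((k.factorial : ℚ)) ≠ 0 :=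
  Nat.cast_ne_zero.mpr (Nat.factorial_ne_zero _)

lemma symm_choose (N a c : ℕ) (h : a + c ≤ N) :
    (N.choose a : ℚ) * ((N-a).choose c : ℚ) = (N.choose c : ℚ) * ((N-c).choose a : ℚ) := by
  rw [Nat.cast_choose ℚ (by omega : a ≤ N), Nat.cast_choose ℚ (by omega : c ≤ N-a),
      Nat.cast_choose ℚ (by omega : c ≤ N), Nat.cast_choose ℚ (by omega : a ≤ N-c),
      show N - a - c = N - c - a from by omega]
  field_simp [fact_ne]

lemma chooseid (m q : ℕ) :
    ((4*(m+q)+2).choose (4*m) : ℚ) * (4*q+2 : ℚ)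
      = (4*(m+q)+2 : ℚ) * ((4*(m+q)+1).choose (4*m) : ℚ) := by
  rw [Nat.cast_choose ℚ (by omega : 4*m ≤ 4*(m+q)+2),
    Nat.cast_choose ℚ (by omega : 4*m ≤ 4*(m+q)+1),
    show 4*(m+q)+2 - 4*m = (4*q+1)+1 from by omega,
    show 4*(m+q)+1 - 4*m = 4*q+1 from by omega]
  simp only [show 4*(m+q)+2 = (4*(m+q)+1)+1 from by omega, Nat.factorial_succ]
  field_simp [fact_ne]
  push_cast
  ring

lemma main_rat (E : ℕ → ℚ) (hE0 : E 0 = 2)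
    (hErec : ∀ k : ℕ, 0 < k → ∑ m ∈ range (k+1), ((4*k+2).choose (4*m) : ℚ) * E (4*m) = 0)
    (n : ℕ) (hn : 0 < n) :
    ∑ m ∈ range (n+1), ((4*n+1).choose (4*m) : ℚ) * E (4*m)
      = (4*n+1) * ((-1)^n * 2^(2*n+1) * _root_.bernoulli (4*n)) := by
  set t : ℕ → ℚ := fun j => (-1)^j * 2^(2*j+1) * _root_.bernoulli (4*j) with ht
  have way1 : ∑ m ∈ range (n+1), ∑ j ∈ range (n+1-m),
        (((4*n+2).choose (4*m) : ℚ) * E (4*m)) * (((4*(n-m)+2).choose (4*j) : ℚ) * t j)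
      = ∑ m ∈ range (n+1), (((4*n+2).choose (4*m) : ℚ) * E (4*m)) * (4*(n-m)+2 : ℚ) := by
    refine Finset.sum_congr rfl fun m hm => ?_
    have hm' : m ≤ n := by simpa [Nat.lt_succ_iff] using hm
    rw [← Finset.mul_sum, show n+1-m = (n-m)+1 from by omega, key_rat (n-m),
      Nat.cast_sub hm']
  have way2 : ∑ m ∈ range (n+1), ∑ j ∈ range (n+1-m),
        (((4*n+2).choose (4*m) : ℚ) * E (4*m)) * (((4*(n-m)+2).choose (4*j) : ℚ) * t j)
      = 2 * ((4*n+2).choose (4*n) : ℚ) * t n := by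
    have hstep : ∑ m ∈ range (n+1), ∑ j ∈ range (n+1-m),
        (((4*n+2).choose (4*m) : ℚ) * E (4*m)) * (((4*(n-m)+2).choose (4*j) : ℚ) * t j)
        = ∑ m ∈ range (n+1), ∑ j ∈ range (n+1-m),
        (((4*n+2).choose (4*j) : ℚ) * t j) * (((4*(n-j)+2).choose (4*m) : ℚ) * E (4*m)) := by
      refine Finset.sum_congr rfl fun m hm => Finset.sum_congr rfl fun j hj => ?_
      rw [Finset.mem_range] at hm hj
      have h2 : m + j ≤ n := by omega
      have hs := symm_choose (4*n+2) (4*m) (4*j) (by omega)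
      rw [show 4*n+2 - 4*m = 4*(n-m)+2 from by omega,
          show 4*n+2 - 4*j = 4*(n-j)+2 from by omega] at hs
      linear_combination (E (4*m) * t j) * hs
    rw [hstep]
    rw [Finset.sum_comm' (s := range (n+1)) (t := fun m => range (n+1-m))
      (t' := range (n+1)) (s' := fun j => range (n+1-j))
      (fun x y => by simp only [Finset.mem_range]; omega)]
    have inner : ∀ j ∈ range (n+1),
        ∑ m ∈ range (n+1-j), (((4*(n-j)+2).choose (4*m) : ℚ) * E (4*m))
        = if j = n then 2 else 0 := by
      intro j hj
      rw [Finset.mem_range] at hj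
      by_cases hjn : j = n
      · subst hjn
        simp [hE0]
      · rw [if_neg hjn, show n+1-j = (n-j)+1 from by omega]
        exact hErec (n-j) (by omega)
    calc ∑ j ∈ range (n+1), ∑ m ∈ range (n+1-j),
          (((4*n+2).choose (4*j) : ℚ) * t j) * (((4*(n-j)+2).choose (4*m) : ℚ) * E (4*m))
        = ∑ j ∈ range (n+1), (((4*n+2).choose (4*j) : ℚ) * t j) * (if j = n then 2 else 0) := by
          refine Finset.sum_congr rfl fun j hj => ?_
          rw [← Finset.mul_sum, inner j hj]
      _ = 2 * ((4*n+2).choose (4*n) : ℚ) * t n := by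
          rw [Finset.sum_congr rfl (fun j _ => mul_ite _ _ _ _)]
          simp [Finset.sum_ite_eq']
          ring
  have comb := way1.symm.trans way2
  have lhs2 : ∑ m ∈ range (n+1), (((4*n+2).choose (4*m) : ℚ) * E (4*m)) * (4*(n-m)+2 : ℚ)
      = (4*n+2 : ℚ) * ∑ m ∈ range (n+1), ((4*n+1).choose (4*m) : ℚ) * E (4*m) := by
    rw [Finset.mul_sum]
    refine Finset.sum_congr rfl fun m hm => ?_
    rw [Finset.mem_range] at hm
    have hc := chooseid m (n-m)
    rw [show m+(n-m) = n from by omega, Nat.cast_sub (by omega : m ≤ n)] at hc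
    linear_combination E (4*m) * hc
  have hch : ((4*n+2).choose (4*n) : ℚ) = (4*n+2) * (4*n+1) / 2 := by
    have := Nat.choose_symm (show 2 ≤ 4*n+2 from by omega)
    rw [show 4*n+2-2 = 4*n from by omega] at this
    rw [this, Nat.cast_choose_two]
    push_cast
    ring
  rw [lhs2, hch] at comb
  have h42 : (4*(n:ℚ)+2) ≠ 0 := by positivity
  have hfin : (4*(n:ℚ)+2) * (∑ m ∈ range (n+1), ((4*n+1).choose (4*m) : ℚ) * E (4*m))
      = (4*(n:ℚ)+2) * ((4*n+1) * ((-1)^n * 2^(2*n+1) * _root_.bernoulli (4*n))) := by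
    rw [comb]
    simp only [ht]
    ring
  exact mul_left_cancel₀ h42 hfin

theorem stmt_18 (E : ℕ → ℚ) (hE0 : E 0 = 2)
    (hErec : ∀ n : ℕ, 0 < n →
      ∑ m ∈ Finset.range (n + 1), ((4 * n + 2).choose (4 * m) : ℚ) * E (4 * m) = 0)
    (n : ℕ) (hn : 0 < n) :
    riemannZeta (4 * n) * 4 * ((4 * n + 1).factorial : ℂ) * (-1) ^ (n + 1) /
        ((Real.sqrt 2 : ℂ) * (Real.pi : ℂ)) ^ (4 * n) =
      ∑ m ∈ Finset.range (n + 1), ((4 * n + 1).choose (4 * m) : ℂ) * (E (4 * m) : ℂ) := by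
  obtain ⟨k, rfl⟩ : ∃ k, n = k+1 := ⟨n-1, by omega⟩
  have hmr := main_rat E hE0 hErec (k+1) hn
  rw [show 4*(k+1) = 4*k+4 from by ring] at hmr
  simp only [show 4*(k+1) = 4*k+4 from by ring]
  have hrhs : ∑ m ∈ Finset.range ((k+1) + 1), ((4*k+4 + 1).choose (4 * m) : ℂ) * (E (4 * m) : ℂ)
      = ((∑ m ∈ Finset.range ((k+1)+1), ((4*k+4 + 1).choose (4 * m) : ℚ) * E (4 * m) : ℚ) : ℂ) := by
    push_cast
    rfl
  rw [hrhs, hmr]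
  -- zeta value
  have hz := riemannZeta_two_mul_nat (k := 2*(k+1)) (by omega)
  rw [show 2*(2*(k+1)) = 4*k+4 from by ring] at hz
  rw [show (4*k+4)-1 = 4*k+3 from by omega] at hz
  have harg : (2:ℂ) * ((2*(k+1) : ℕ) : ℂ) = 4*((k+1 : ℕ) : ℂ) := by push_cast; ring
  rw [harg] at hz
  rw [hz]
  -- sqrt 2 power
  have hsq : ((Real.sqrt 2 : ℂ))^(4*k+4) = (2:ℂ)^(2*(k+1)) := by
    rw [← Complex.ofReal_pow, show 4*k+4 = 2*(2*(k+1)) from by ring, pow_mul,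
      Real.sq_sqrt (by norm_num : (0:ℝ) ≤ 2)]
    push_cast
    ring
  rw [mul_pow, hsq]
  -- factorial
  have hfacs : (((4*k+4+1).factorial : ℕ) : ℂ) = (4*(k:ℂ)+5) * (((4*k+4).factorial : ℕ) : ℂ) := by
    rw [show 4*k+4+1 = (4*k+4)+1 from rfl, Nat.factorial_succ]
    push_cast
    ring
  rw [hfacs]
  have hpi : ((Real.pi : ℂ))^(4*k+4) ≠ 0 := by
    apply pow_ne_zero
    simpa using Real.pi_ne_zero
  have h2 : ((2:ℂ))^(2*(k+1)) ≠ 0 := pow_ne_zero _ two_ne_zero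
  have hfac : (((4*k+4).factorial : ℕ) : ℂ) ≠ 0 :=
    Nat.cast_ne_zero.mpr (Nat.factorial_ne_zero _)
  push_cast
  field_simp
  have hm1 : ((-1:ℂ))^(k*3) = (-1)^k := by
    rw [show k*3 = k + 2*k by ring, pow_add, pow_mul]; norm_num
  ring_nf
  rw [hm1]
end

section
/- For every nonnegative integer n, the Bernoulli number B_{6n} satisfies B_{6n} = (1/(3(6n+1)(6n+2))) · Σ_{m=0}^{n} C(6n+2, 6m) · E_{6m}^{(6,3)}. -/
open scoped BigOperators

open Polynomial Finset in
private lemma bern_step19 (N : ℕ) (y : ℂ) :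
    (aeval (y + 1) (Polynomial.bernoulli N)) = aeval y (Polynomial.bernoulli N) + N * y ^ (N-1) := by
  have hpoly : (Polynomial.bernoulli N).comp (1 + X) =
      Polynomial.bernoulli N + (N : ℚ[X]) * X ^ (N-1) := by
    apply Polynomial.funext
    intro r
    simp [eval_comp, Polynomial.bernoulli_eval_one_add]
  have h := congrArg (aeval y) hpoly
  rw [aeval_comp] at h
  simpa [add_comm] using h

open Polynomial Finset in
private lemma bern_eval_rat19 (N : ℕ) (x : ℚ) :
    aeval ((x : ℂ)) (Polynomial.bernoulli N) = (((Polynomial.bernoulli N).eval x : ℚ) : ℂ) := by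
  have : ((x : ℂ)) = algebraMap ℚ ℂ x := by norm_num
  rw [this, aeval_algebraMap_apply]
  rw [coe_aeval_eq_eval]; simp

open Polynomial Finset in
private lemma bern_expand19 (N : ℕ) (y : ℂ) :
    aeval y (Polynomial.bernoulli N) =
      ∑ k ∈ Finset.range (N+1), ((N.choose k : ℂ) * ((_root_.bernoulli k : ℚ) : ℂ)) * y ^ (N - k) := by
  rw [Polynomial.bernoulli, map_sum]
  refine Finset.sum_congr rfl fun k _ => ?_
  rw [aeval_monomial]
  simp only [eq_ratCast, Rat.cast_mul, Rat.cast_natCast]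
  ring

private lemma zeta_cube19 {ζ : ℂ} (hζ : IsPrimitiveRoot ζ 6) : ζ ^ 3 = -1 := by
  have h6 : ζ ^ 6 = 1 := hζ.pow_eq_one
  have h2 : (ζ ^ 3 - 1) * (ζ ^ 3 + 1) = 0 := by linear_combination h6
  rcases mul_eq_zero.1 h2 with h | h
  · exfalso
    have h3 : ζ ^ 3 = 1 := by linear_combination h
    rw [hζ.pow_eq_one_iff_dvd] at h3
    omega
  · linear_combination h

private lemma zeta_sq19 {ζ : ℂ} (hζ : IsPrimitiveRoot ζ 6) : ζ ^ 2 = ζ - 1 := by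
  have h3 : ζ ^ 3 = -1 := zeta_cube19 hζ
  have h2 : (ζ + 1) * (ζ ^ 2 - ζ + 1) = 0 := by linear_combination h3
  rcases mul_eq_zero.1 h2 with h | h
  · exfalso
    have hne : ζ ^ 2 = 1 := by
      have : ζ = -1 := by linear_combination h
      rw [this]; ring
    rw [hζ.pow_eq_one_iff_dvd] at hne
    omega
  · linear_combination h

private lemma zeta_filter19 {ζ : ℂ} (hζ : IsPrimitiveRoot ζ 6) (e : ℕ) :
    ∑ j ∈ Finset.range 6, (ζ ^ e) ^ j = if 6 ∣ e then 6 else 0 := by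
  by_cases h : 6 ∣ e
  · rw [if_pos h, (hζ.pow_eq_one_iff_dvd e).2 h]
    simp
  · rw [if_neg h]
    have hne : ζ ^ e ≠ 1 := fun hh => h ((hζ.pow_eq_one_iff_dvd e).1 hh)
    rw [geom_sum_eq hne]
    have : (ζ ^ e) ^ 6 = 1 := by
      rw [← pow_mul, mul_comm, pow_mul, hζ.pow_eq_one, one_pow]
    rw [this]
    simp

open Polynomial Finset in
private lemma starA19 (n : ℕ) (ζ : ℂ) (hζ : IsPrimitiveRoot ζ 6) :
    (∑ j ∈ Finset.range 6, (-1:ℂ)^j * aeval (ζ^j) (Polynomial.bernoulli (6*n+3)))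
      = 6 * ∑ m ∈ Finset.range (n+1),
          (((6*n+3).choose (6*m) : ℂ) * ((_root_.bernoulli (6*m) : ℚ) : ℂ)) := by
  set N := 6*n+3 with hN
  set c : ℕ → ℂ := fun k => (N.choose k : ℂ) * ((_root_.bernoulli k : ℚ) : ℂ) with hc
  have step1 : ∀ j ∈ Finset.range 6, (-1:ℂ)^j * aeval (ζ^j) (Polynomial.bernoulli N)
      = ∑ k ∈ Finset.range (N+1), c k * (ζ ^ (3 + (N - k))) ^ j := by
    intro j _
    rw [bern_expand19, Finset.mul_sum]
    refine Finset.sum_congr rfl fun k _ => ?_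
    have e1 : (ζ ^ (3 + (N - k))) ^ j = (-1:ℂ)^j * (ζ^(N-k))^j := by
      rw [pow_add, mul_pow, zeta_cube19 hζ]
    rw [e1, pow_right_comm ζ (N-k) j]
    simp only [hc]
    ring
  rw [Finset.sum_congr rfl step1, Finset.sum_comm]
  have step2 : ∀ k ∈ Finset.range (N+1),
      ∑ j ∈ Finset.range 6, c k * (ζ ^ (3 + (N - k))) ^ j
      = if 6 ∣ k then 6 * c k else 0 := by
    intro k hk
    rw [← Finset.mul_sum, zeta_filter19 hζ]
    rw [Finset.mem_range] at hk
    have hiff : (6 ∣ 3 + (N - k)) ↔ 6 ∣ k := by omega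
    by_cases h : 6 ∣ k
    · rw [if_pos (hiff.2 h), if_pos h]; ring
    · rw [if_neg (fun hh => h (hiff.1 hh)), if_neg h]; ring
  rw [Finset.sum_congr rfl step2, ← Finset.sum_filter, Finset.mul_sum]
  refine Finset.sum_nbij' (fun k => k / 6) (fun m => 6 * m) ?_ ?_ ?_ ?_ ?_
  · intro a ha
    simp only [Finset.mem_filter, Finset.mem_range] at ha ⊢
    omega
  · intro a ha
    simp only [Finset.mem_filter, Finset.mem_range] at ha ⊢
    omega
  · intro a ha
    simp only [Finset.mem_filter, Finset.mem_range] at ha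
    omega
  · intro a ha
    simp only [Finset.mem_range] at ha
    omega
  · intro a ha
    simp only [Finset.mem_filter, Finset.mem_range] at ha
    have h6 : 6 * (a / 6) = a := by omega
    rw [h6]

open Polynomial Finset in
private lemma starB19 (n : ℕ) (ζ : ℂ) (hζ : IsPrimitiveRoot ζ 6) :
    (∑ j ∈ Finset.range 6, (-1:ℂ)^j * aeval (ζ^j) (Polynomial.bernoulli (6*n+3)))
      = 2*((6*n+3 : ℕ) : ℂ) := by
  set N := 6*n+3 with hN
  have hoddN : Odd N := ⟨3*n+1, by omega⟩
  have hNodd0 : _root_.bernoulli N = 0 := by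
    rw [bernoulli_eq_bernoulli'_of_ne_one (by omega)]
    exact bernoulli'_eq_zero_of_odd hoddN (by omega)
  have hB1 : aeval (1:ℂ) (Polynomial.bernoulli N) = 0 := by
    have h := bern_eval_rat19 N 1
    rw [Polynomial.bernoulli_eval_one,
      bernoulli'_eq_zero_of_odd hoddN (by omega)] at h
    simpa using h
  have hB0 : aeval (0:ℂ) (Polynomial.bernoulli N) = 0 := by
    have h := bern_eval_rat19 N 0
    rw [Polynomial.bernoulli_eval_zero, hNodd0] at h
    simpa using h
  have hBneg1 : aeval (-1:ℂ) (Polynomial.bernoulli N) = -(N:ℂ) := by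
    have h := bern_step19 N (-1)
    have hev : ((-1:ℂ)) ^ (N-1) = 1 := by
      refine Even.neg_one_pow ⟨3*n+1, by omega⟩
    rw [hev] at h
    norm_num at h
    rw [hB0] at h
    linear_combination -h
  have hpow2 : (ζ^2 : ℂ)^(N-1) = ζ^4 := by
    have h1 : N - 1 = 6*n+2 := by omega
    rw [h1, ← pow_mul, show 2*(6*n+2) = 6*(2*n)+4 by ring, pow_add, pow_mul,
      hζ.pow_eq_one, one_pow, one_mul]
  have hpow4 : (ζ^4 : ℂ)^(N-1) = ζ^2 := by
    have h1 : N - 1 = 6*n+2 := by omega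
    rw [h1, ← pow_mul, show 4*(6*n+2) = 6*(4*n+1)+2 by ring, pow_add, pow_mul,
      hζ.pow_eq_one, one_pow, one_mul]
  have hBz : aeval (ζ : ℂ) (Polynomial.bernoulli N)
      = aeval (ζ^2 : ℂ) (Polynomial.bernoulli N) + N * ζ^4 := by
    have h := bern_step19 N (ζ^2)
    rw [hpow2] at h
    rw [show (ζ^2 + 1 : ℂ) = ζ by linear_combination zeta_sq19 hζ] at h
    exact h
  have hBz5 : aeval (ζ^5 : ℂ) (Polynomial.bernoulli N)
      = aeval (ζ^4 : ℂ) (Polynomial.bernoulli N) + N * ζ^2 := by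
    have h := bern_step19 N (ζ^4)
    rw [hpow4] at h
    rw [show (ζ^4 + 1 : ℂ) = ζ^5 by
      linear_combination (ζ - ζ^2) * zeta_cube19 hζ + zeta_sq19 hζ] at h
    exact h
  rw [Finset.sum_range_succ, Finset.sum_range_succ, Finset.sum_range_succ,
    Finset.sum_range_succ, Finset.sum_range_succ, Finset.sum_range_one]
  rw [pow_zero ζ, pow_one ζ, zeta_cube19 hζ]
  rw [hB1, hBz, hBneg1, hBz5]
  norm_num
  linear_combination (-(N:ℂ)*ζ) * zeta_cube19 hζ - (N:ℂ) * zeta_sq19 hζ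

private lemma star19 (n : ℕ) :
    ∑ m ∈ Finset.range (n+1), (((6*n+3).choose (6*m) : ℚ)) * _root_.bernoulli (6*m)
      = 2*n+1 := by
  have hζ : IsPrimitiveRoot (Complex.exp (2 * Real.pi * Complex.I / 6)) 6 :=
    Complex.isPrimitiveRoot_exp 6 (by norm_num)
  have h := (starA19 n _ hζ).symm.trans (starB19 n _ hζ)
  have h2 : ((6 * ∑ m ∈ Finset.range (n+1),
      (((6*n+3).choose (6*m) : ℚ)) * _root_.bernoulli (6*m) : ℚ) : ℂ)
      = ((2*((6*n+3 : ℕ)) : ℚ) : ℂ) := by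
    push_cast
    push_cast at h
    linear_combination h
  have h3 := Rat.cast_injective (α := ℂ) h2
  have h4 : (6:ℚ) * ∑ m ∈ Finset.range (n+1),
      (((6*n+3).choose (6*m) : ℚ)) * _root_.bernoulli (6*m) = 2*(6*n+3) := by
    exact_mod_cast h3
  push_cast at h4
  linarith

private lemma sum_tri19 (F : ℕ → ℕ → ℚ) (n : ℕ) :
    ∑ a ∈ Finset.range (n+1), ∑ m ∈ Finset.range (a+1), F a m
      = ∑ m ∈ Finset.range (n+1), ∑ a ∈ Finset.range ((n-m)+1), F (m+a) m := by
  simp only [Finset.range_eq_Ico]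
  rw [← Finset.sum_Ico_Ico_comm 0 (n+1) (fun m a => F a m)]
  refine Finset.sum_congr rfl fun m hm => ?_
  rw [Finset.mem_Ico] at hm
  rw [Finset.sum_Ico_eq_sum_range]
  have : n + 1 - m = (n - m) + 1 := by omega
  rw [this, Finset.range_eq_Ico]

private lemma refl_sum19 (d : ℕ) :
    ∑ a ∈ Finset.range (d+1), ((6*d+5).choose (6*a+2))
      = ∑ a ∈ Finset.range (d+1), ((6*d+5).choose (6*a+3)) := by
  refine (Finset.sum_congr rfl fun a ha => ?_).trans
    (Finset.sum_range_reflect (fun a => (6*d+5).choose (6*a+3)) (d+1))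
  rw [Finset.mem_range] at ha
  rw [← Nat.choose_symm (show 6*a+2 ≤ 6*d+5 by omega)]
  congr 1
  omega

private lemma side19 (r : ℕ) (hr : r ≤ 5) (x : ℕ → ℚ) (n : ℕ) :
    ∑ a ∈ Finset.range (n+1), ((6*n+5).choose (6*a+r) : ℚ) *
        (∑ m ∈ Finset.range (a+1), ((6*a+r).choose (6*m) : ℚ) * x m)
    = ∑ m ∈ Finset.range (n+1), ((6*n+5).choose (6*m) : ℚ) * x m *
        (∑ a ∈ Finset.range ((n-m)+1), ((6*(n-m)+5).choose (6*a+r) : ℚ)) := by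
  have lhs1 : ∀ a ∈ Finset.range (n+1), ((6*n+5).choose (6*a+r) : ℚ) *
        (∑ m ∈ Finset.range (a+1), ((6*a+r).choose (6*m) : ℚ) * x m)
      = ∑ m ∈ Finset.range (a+1),
          ((6*n+5).choose (6*m) : ℚ) * ((6*(n-m)+5).choose (6*(a-m)+r) : ℚ) * x m := by
    intro a ha
    rw [Finset.mem_range] at ha
    rw [Finset.mul_sum]
    refine Finset.sum_congr rfl fun m hm => ?_
    rw [Finset.mem_range] at hm
    have key := Nat.choose_mul (n := 6*n+5) (show 6*m ≤ 6*a+r by omega)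
    have e1 : 6*n+5 - 6*m = 6*(n-m)+5 := by omega
    have e2 : 6*a+r - 6*m = 6*(a-m)+r := by omega
    rw [e1, e2] at key
    have keyq : ((6*n+5).choose (6*a+r) : ℚ) * ((6*a+r).choose (6*m) : ℚ)
        = ((6*n+5).choose (6*m) : ℚ) * ((6*(n-m)+5).choose (6*(a-m)+r) : ℚ) := by
      exact_mod_cast congrArg (Nat.cast (R := ℚ)) key
    linear_combination x m * keyq
  rw [Finset.sum_congr rfl lhs1]
  rw [sum_tri19 (fun a m => ((6*n+5).choose (6*m) : ℚ)
      * ((6*(n-m)+5).choose (6*(a-m)+r) : ℚ) * x m) n]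
  refine Finset.sum_congr rfl fun m hm => ?_
  rw [Finset.mul_sum]
  refine Finset.sum_congr rfl fun a _ => ?_
  have : m + a - m = a := by omega
  rw [this]
  ring

theorem stmt_19 (E : ℕ → ℚ) (hE0 : E 0 = 6)
    (hErec : ∀ n : ℕ, 0 < n →
      ∑ m ∈ Finset.range (n + 1), ((6 * n + 3).choose (6 * m) : ℚ) * E (6 * m) = 0)
    (n : ℕ) :
    bernoulli (6 * n) =
      (1 / (3 * (6 * (n : ℚ) + 1) * (6 * (n : ℚ) + 2))) *
        ∑ m ∈ Finset.range (n + 1), ((6 * n + 2).choose (6 * m) : ℚ) * E (6 * m) := by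
  have hR : ∀ b : ℕ, ∑ m ∈ Finset.range (b+1), ((6*b+3).choose (6*m) : ℚ) * E (6*m)
      = if b = 0 then 6 else 0 := by
    intro b
    rcases Nat.eq_zero_or_pos b with rfl | hb
    · simp [hE0]
    · rw [if_neg hb.ne', ← hErec b hb]
  have key : ∀ n : ℕ, ∑ m ∈ Finset.range (n+1), ((6*n+2).choose (6*m) : ℚ) * E (6*m)
      = 3*(6*(n:ℚ)+1)*(6*(n:ℚ)+2)*_root_.bernoulli (6*n) := by
    intro n
    induction n using Nat.strong_induction_on with
    | _ n ih =>
    -- the common value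
    have hc3 : (3:ℚ)*(6*(n:ℚ)+5)*(6*(n:ℚ)+4)*(2*n+1) = ((6*n+5).choose 3 : ℚ) * 6 := by
      have h2 := Nat.add_one_mul_choose_eq (6*n+3) 1
      have h3 := Nat.add_one_mul_choose_eq (6*n+4) 2
      simp only [Nat.succ_eq_add_one, Nat.choose_one_right] at h2 h3
      rw [show 6*n+3+1 = 6*n+4 by omega] at h2
      rw [show 6*n+4+1 = 6*n+5 by omega] at h3
      norm_num at h2 h3
      have h2q : ((6*n+4 : ℕ) : ℚ) * ((6*n+3 : ℕ) : ℚ) = ((6*n+4).choose 2 : ℚ) * 2 := by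
        exact_mod_cast congrArg (Nat.cast (R := ℚ)) h2
      have h3q : ((6*n+5 : ℕ) : ℚ) * ((6*n+4).choose 2 : ℚ) = ((6*n+5).choose 3 : ℚ) * 3 := by
        exact_mod_cast congrArg (Nat.cast (R := ℚ)) h3
      push_cast at h2q h3q
      linear_combination 2*h3q + (6*(n:ℚ)+5)*h2q
    -- main2 : E-side convolution
    have main2 : ∑ a ∈ Finset.range (n+1), ((6*n+5).choose (6*a+2) : ℚ) *
          (∑ m ∈ Finset.range (a+1), ((6*a+2).choose (6*m) : ℚ) * E (6*m))
        = ((6*n+5).choose 3 : ℚ) * 6 := by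
      have s2 := side19 2 (by norm_num) (fun m => E (6*m)) n
      have s3 := side19 3 (by norm_num) (fun m => E (6*m)) n
      rw [s2]
      have swap : ∑ m ∈ Finset.range (n+1), ((6*n+5).choose (6*m) : ℚ) * E (6*m) *
            (∑ a ∈ Finset.range ((n-m)+1), ((6*(n-m)+5).choose (6*a+2) : ℚ))
          = ∑ m ∈ Finset.range (n+1), ((6*n+5).choose (6*m) : ℚ) * E (6*m) *
            (∑ a ∈ Finset.range ((n-m)+1), ((6*(n-m)+5).choose (6*a+3) : ℚ)) := by
        refine Finset.sum_congr rfl fun m _ => ?_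
        congr 1
        exact_mod_cast congrArg (Nat.cast (R := ℚ)) (refl_sum19 (n-m))
      rw [swap, ← s3]
      have hRs : ∀ b ∈ Finset.range (n+1), ((6*n+5).choose (6*b+3) : ℚ) *
            (∑ m ∈ Finset.range (b+1), ((6*b+3).choose (6*m) : ℚ) * E (6*m))
          = if b = 0 then ((6*n+5).choose 3 : ℚ) * 6 else 0 := by
        intro b _
        rw [hR b]
        rcases Nat.eq_zero_or_pos b with rfl | hb
        · norm_num
        · rw [if_neg hb.ne', if_neg hb.ne', mul_zero]
      rw [Finset.sum_congr rfl hRs, Finset.sum_ite_eq' (Finset.range (n+1)) 0]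
      rw [if_pos (Finset.mem_range.2 (by omega))]
    -- main3 : Bernoulli-side convolution
    have main3 : ∑ a ∈ Finset.range (n+1), ((6*n+5).choose (6*a+2) : ℚ) *
          (3*(6*(a:ℚ)+1)*(6*(a:ℚ)+2)*_root_.bernoulli (6*a))
        = ((6*n+5).choose 3 : ℚ) * 6 := by
      have term : ∀ a ∈ Finset.range (n+1), ((6*n+5).choose (6*a+2) : ℚ) *
            (3*(6*(a:ℚ)+1)*(6*(a:ℚ)+2)*_root_.bernoulli (6*a))
          = (3*(6*(n:ℚ)+5)*(6*(n:ℚ)+4)) * (((6*n+3).choose (6*a) : ℚ)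
              * _root_.bernoulli (6*a)) := by
        intro a _
        have h1 := Nat.add_one_mul_choose_eq (6*n+4) (6*a+1)
        have h2 := Nat.add_one_mul_choose_eq (6*n+3) (6*a)
        have e2 : (6*n+3+1 : ℕ) = 6*n+4 := by omega
        have e3 : (6*n+4+1 : ℕ) = 6*n+5 := by omega
        have e4 : (6*a+1+1 : ℕ) = 6*a+2 := by omega
        rw [e3, e4] at h1
        rw [e2] at h2
        have h1q : ((6*n+5 : ℕ) : ℚ) * ((6*n+4).choose (6*a+1) : ℚ)
            = ((6*n+5).choose (6*a+2) : ℚ) * ((6*a+2 : ℕ) : ℚ) := by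
          exact_mod_cast congrArg (Nat.cast (R := ℚ)) h1
        have h2q : ((6*n+4 : ℕ) : ℚ) * ((6*n+3).choose (6*a) : ℚ)
            = ((6*n+4).choose (6*a+1) : ℚ) * ((6*a+1 : ℕ) : ℚ) := by
          exact_mod_cast congrArg (Nat.cast (R := ℚ)) h2
        push_cast at h1q h2q
        set B := _root_.bernoulli (6*a)
        linear_combination (-3*B*(6*(a:ℚ)+1)) * h1q + (-3*B*(6*(n:ℚ)+5)) * h2q
      rw [Finset.sum_congr rfl term, ← Finset.mul_sum, star19 n]
      linear_combination hc3
    -- subtract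
    have split2 := main2
    have split3 := main3
    rw [Finset.sum_range_succ] at split2 split3
    have ihsum : ∑ a ∈ Finset.range n, ((6*n+5).choose (6*a+2) : ℚ) *
          (∑ m ∈ Finset.range (a+1), ((6*a+2).choose (6*m) : ℚ) * E (6*m))
        = ∑ a ∈ Finset.range n, ((6*n+5).choose (6*a+2) : ℚ) *
          (3*(6*(a:ℚ)+1)*(6*(a:ℚ)+2)*_root_.bernoulli (6*a)) := by
      refine Finset.sum_congr rfl fun a ha => ?_
      rw [Finset.mem_range] at ha
      rw [ih a ha]
    have hcancel : ((6*n+5).choose (6*n+2) : ℚ) *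
          (∑ m ∈ Finset.range (n+1), ((6*n+2).choose (6*m) : ℚ) * E (6*m))
        = ((6*n+5).choose (6*n+2) : ℚ) *
          (3*(6*(n:ℚ)+1)*(6*(n:ℚ)+2)*_root_.bernoulli (6*n)) := by
      have := split2.trans split3.symm
      rw [ihsum] at this
      linarith [this]
    have hne : ((6*n+5).choose (6*n+2) : ℚ) ≠ 0 := by
      have := Nat.choose_pos (show 6*n+2 ≤ 6*n+5 by omega)
      positivity
    exact mul_left_cancel₀ hne hcancel
  have hkey := key n
  have h1 : (6*(n:ℚ)+1) ≠ 0 := by positivity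
  have h2 : (6*(n:ℚ)+2) ≠ 0 := by positivity
  rw [hkey]
  field_simp
end
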